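/- arXiv:1412.7480 — 10 statements merged into one kernel-verified Lean document; each statement's English description precedes it below -/
import Mathlib

section
/- Let μ and ν be Borel probability measures on ℝᵐ with finite first moment. If ∫ f dμ ≤ ∫ f dν for every convex 1-Lipschitz function f : ℝᵐ → ℝ that is bounded from below, then ∫ f dμ ≤ ∫ f dν for every convex function f : ℝᵐ → ℝ (i.e. μ is dominated by ν in the convex order). -/
/-!
A convex `f` has a continuous affine minorant `φ`, which is `L`-Lipschitz and, by the first moment
assumption, integrable. For `n ≥ L` the Pasch–Hausdorff envelope `fₙ x = ⨅ y, f y + n ‖x - y‖` is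
convex, `n`-Lipschitz, squeezed between `φ` and `f`, and increases to `f` by continuity. Truncating
from below, `max fₙ (-n)` stays convex and `n`-Lipschitz, becomes bounded below, and is dominated
by `|f| + |φ|`; after rescaling by `n + 1` the hypothesis applies to it, and dominated convergence
passes the inequality to `f`.
-/

open MeasureTheory Filter Topology Set
open scoped NNReal

theorem ConvexOn.exists_continuousLinearMap_add_const_le {E : Type*} [AddCommGroup E]
    [Module ℝ E] [TopologicalSpace E] [IsTopologicalAddGroup E] [ContinuousSMul ℝ E]
    [LocallyConvexSpace ℝ E] {f : E → ℝ} (hf : ConvexOn ℝ univ f) (hfc : LowerSemicontinuous f) :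
    ∃ (ℓ : E →L[ℝ] ℝ) (c : ℝ), ∀ x, ℓ x + c ≤ f x := by
  obtain ⟨ℓ, c, hle, -⟩ := hf.exists_affine_le_of_lt (𝕜 := ℝ) (mem_univ 0) (sub_one_lt (f 0))
    isClosed_univ (hfc.lowerSemicontinuousOn univ)
  exact ⟨ℓ, c, fun x => hle ⟨x, mem_univ x⟩⟩

theorem LipschitzWith.eventually_lipschitzWith_natCast {α β : Type*} [PseudoEMetricSpace α]
    [PseudoEMetricSpace β] {f : α → β} {K : ℝ≥0} (hf : LipschitzWith K f) :
    ∀ᶠ n : ℕ in atTop, LipschitzWith n f :=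
  (eventually_ge_atTop ⌈K⌉₊).mono fun _ hn =>
    hf.weaken ((Nat.le_ceil K).trans (by exact_mod_cast hn))

theorem LipschitzWith.integrable_of_integrable_norm {E : Type*} [SeminormedAddCommGroup E]
    [MeasurableSpace E] [OpensMeasurableSpace E] {μ : Measure E} [IsFiniteMeasure μ]
    {f : E → ℝ} {K : ℝ≥0} (hf : LipschitzWith K f) (hμ : Integrable (fun x => ‖x‖) μ) :
    Integrable f μ := by
  refine ((integrable_const ‖f 0‖).add (hμ.const_mul K)).mono' hf.continuous.aestronglyMeasurable
    (ae_of_all _ fun x => ?_)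
  calc ‖f x‖ ≤ ‖f 0‖ + ‖f x - f 0‖ := norm_le_norm_add_norm_sub' _ _
    _ ≤ ‖f 0‖ + K * ‖x‖ := by
      gcongr
      simpa [dist_eq_norm] using hf.dist_le_mul x 0

theorem integral_le_of_convexOn_of_lipschitzWith {E : Type*} [AddCommGroup E] [Module ℝ E]
    [PseudoMetricSpace E] [MeasurableSpace E] {μ ν : Measure E}
    (h : ∀ f : E → ℝ, ConvexOn ℝ univ f → LipschitzWith 1 f →
      BddBelow (range f) → ∫ x, f x ∂μ ≤ ∫ x, f x ∂ν)
    {f : E → ℝ} {K : ℝ≥0} (hf : ConvexOn ℝ univ f) (hfK : LipschitzWith K f)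
    (hfb : BddBelow (range f)) : ∫ x, f x ∂μ ≤ ∫ x, f x ∂ν := by
  set c : ℝ := K + 1
  have hc : 0 < c := by positivity
  have hscaled := h (fun x => c⁻¹ * f x) (hf.smul (inv_nonneg.2 hc.le)) ?_ ?_
  · rwa [integral_const_mul, integral_const_mul, mul_le_mul_iff_right₀ (inv_pos.2 hc)] at hscaled
  · refine LipschitzWith.of_le_add_mul 1 fun x y => ?_
    have hK : c⁻¹ * K ≤ 1 := by rw [inv_mul_le_one₀ hc]; linarith
    calc c⁻¹ * f x ≤ c⁻¹ * (f y + K * dist x y) := by gcongr; exact hfK.le_add_mul x y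
      _ = c⁻¹ * f y + c⁻¹ * K * dist x y := by ring
      _ ≤ c⁻¹ * f y + 1 * dist x y := by gcongr
  · obtain ⟨b, hb⟩ := hfb
    exact ⟨c⁻¹ * b, forall_mem_range.2 fun x =>
      mul_le_mul_of_nonneg_left (hb (mem_range_self x)) (inv_nonneg.2 hc.le)⟩

section LipschitzEnvelope

variable {E : Type*} [SeminormedAddCommGroup E]

/-- The Pasch–Hausdorff envelope of `f`: the largest `K`-Lipschitz minorant of `f`, whenever `f`
has some `K`-Lipschitz minorant (otherwise the infimum is unbounded below and the value is junk). -/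
noncomputable def lipschitzEnvelope (f : E → ℝ) (K : ℝ≥0) (x : E) : ℝ :=
  ⨅ y, f y + K * ‖x - y‖

variable {f φ : E → ℝ} {K L : ℝ≥0}

theorem LipschitzWith.le_add_mul_norm_of_le (hφ : LipschitzWith K φ) (hφf : φ ≤ f) (x y : E) :
    φ x ≤ f y + K * ‖x - y‖ := by
  simpa [dist_eq_norm] using (hφ.le_add_mul x y).trans (add_le_add_left (hφf y) _)

theorem bddBelow_range_add_mul_norm (hφ : LipschitzWith K φ) (hφf : φ ≤ f) (x : E) :
    BddBelow (range fun y => f y + K * ‖x - y‖) :=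
  ⟨φ x, forall_mem_range.2 (hφ.le_add_mul_norm_of_le hφf x)⟩

theorem le_lipschitzEnvelope (hφ : LipschitzWith K φ) (hφf : φ ≤ f) (x : E) :
    φ x ≤ lipschitzEnvelope f K x :=
  le_ciInf (hφ.le_add_mul_norm_of_le hφf x)

theorem lipschitzEnvelope_le (hφ : LipschitzWith K φ) (hφf : φ ≤ f) (x : E) :
    lipschitzEnvelope f K x ≤ f x := by
  simpa [lipschitzEnvelope] using ciInf_le (bddBelow_range_add_mul_norm hφ hφf x) x

theorem lipschitzWith_lipschitzEnvelope (hφ : LipschitzWith K φ) (hφf : φ ≤ f) :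
    LipschitzWith K (lipschitzEnvelope f K) := by
  refine LipschitzWith.of_le_add_mul K fun x z => ?_
  rw [← sub_le_iff_le_add, dist_eq_norm]
  refine le_ciInf fun y => ?_
  have hx := ciInf_le (bddBelow_range_add_mul_norm hφ hφf x) y
  have htri : ‖x - y‖ ≤ ‖x - z‖ + ‖z - y‖ := norm_sub_le_norm_sub_add_norm_sub x z y
  simp only [lipschitzEnvelope] at hx ⊢
  linarith [mul_le_mul_of_nonneg_left htri K.coe_nonneg]

theorem ConvexOn.lipschitzEnvelope [NormedSpace ℝ E] (hf : ConvexOn ℝ univ f)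
    (hφ : LipschitzWith K φ) (hφf : φ ≤ f) : ConvexOn ℝ univ (lipschitzEnvelope f K) := by
  refine ⟨convex_univ, fun x _ z _ a b ha hb hab => ?_⟩
  simp only [smul_eq_mul, _root_.lipschitzEnvelope, Real.mul_iInf_of_nonneg ha,
    Real.mul_iInf_of_nonneg hb]
  refine le_ciInf_add_ciInf fun u v =>
    (ciInf_le (bddBelow_range_add_mul_norm hφ hφf _) (a • u + b • v)).trans ?_
  have hnorm : ‖a • x + b • z - (a • u + b • v)‖ ≤ a * ‖x - u‖ + b * ‖z - v‖ := by
    calc ‖a • x + b • z - (a • u + b • v)‖ = ‖a • (x - u) + b • (z - v)‖ := by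
          rw [smul_sub, smul_sub]; abel_nf
      _ ≤ a * ‖x - u‖ + b * ‖z - v‖ := by
          refine (norm_add_le _ _).trans_eq ?_
          rw [norm_smul, norm_smul, Real.norm_of_nonneg ha, Real.norm_of_nonneg hb]
  have hconv := hf.2 (mem_univ u) (mem_univ v) ha hb hab
  simp only [smul_eq_mul] at hconv
  nlinarith [mul_le_mul_of_nonneg_left hnorm K.coe_nonneg]

theorem tendsto_lipschitzEnvelope {x : E} (hf : ContinuousAt f x) (hφ : LipschitzWith L φ)
    (hφf : φ ≤ f) : Tendsto (fun n : ℕ => lipschitzEnvelope f n x) atTop (𝓝 (f x)) := by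
  refine tendsto_order.2 ⟨fun a ha => ?_, fun b hb =>
    hφ.eventually_lipschitzWith_natCast.mono fun n hn =>
      (lipschitzEnvelope_le hn hφf x).trans_lt hb⟩
  obtain ⟨a', haa', ha'⟩ := exists_between ha
  obtain ⟨δ, hδ, hnear⟩ := Metric.eventually_nhds_iff.1 (hf.eventually (lt_mem_nhds ha'))
  filter_upwards [tendsto_natCast_atTop_atTop.eventually_ge_atTop (L + (f x - φ x) / δ)]
    with n hn
  refine haa'.trans_le (le_ciInf fun y => ?_)
  rcases lt_or_ge (dist y x) δ with hyx | hyx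
  · exact (hnear hyx).le.trans (le_add_of_nonneg_right (by positivity))
  · have hφx := hφ.le_add_mul_norm_of_le hφf x y
    have hgap : f x - φ x ≤ (n - L) * ‖x - y‖ :=
      calc f x - φ x = (f x - φ x) / δ * δ := (div_mul_cancel₀ _ hδ.ne').symm
        _ ≤ (n - L) * ‖x - y‖ := by
          gcongr
          · linarith [div_nonneg (sub_nonneg.2 (hφf x)) hδ.le]
          · linarith
          · rwa [dist_comm, dist_eq_norm] at hyx
    push_cast
    linarith

end LipschitzEnvelope

theorem tendsto_integral_max_lipschitzEnvelope {E : Type*} [SeminormedAddCommGroup E]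
    [MeasurableSpace E] [OpensMeasurableSpace E] {μ : Measure E} {f φ : E → ℝ} {L : ℝ≥0}
    (hf : Continuous f) (hφ : LipschitzWith L φ) (hφf : φ ≤ f) (hfμ : Integrable f μ)
    (hφμ : Integrable φ μ) :
    Tendsto (fun n : ℕ => ∫ x, max (lipschitzEnvelope f n x) (-n) ∂μ) atTop
      (𝓝 (∫ x, f x ∂μ)) := by
  have hφn := hφ.eventually_lipschitzWith_natCast
  refine tendsto_integral_filter_of_dominated_convergence (fun x => |f x| + |φ x|)
    (hφn.mono fun n hn =>
      ((lipschitzWith_lipschitzEnvelope hn hφf).max_const _).continuous.aestronglyMeasurable)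
    (hφn.mono fun n hn => ae_of_all _ fun x => ?_) (hfμ.abs.add hφμ.abs)
    (ae_of_all _ fun x => ?_)
  · have hlow := le_lipschitzEnvelope hn hφf x
    have hup := lipschitzEnvelope_le hn hφf x
    rw [Real.norm_eq_abs, abs_le]
    constructor
    · linarith [neg_abs_le (φ x), abs_nonneg (f x), le_max_left (lipschitzEnvelope f n x) (-n)]
    · exact max_le (by linarith [le_abs_self (f x), abs_nonneg (φ x)])
        (by linarith [abs_nonneg (f x), abs_nonneg (φ x), Nat.cast_nonneg (α := ℝ) n])
  · refine (tendsto_lipschitzEnvelope hf.continuousAt hφ hφf).congr' ?_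
    filter_upwards [hφn, tendsto_natCast_atTop_atTop.eventually_ge_atTop (-φ x)] with n hn hφx
    exact (max_eq_left ((neg_le.1 hφx).trans (le_lipschitzEnvelope hn hφf x))).symm

/-- If `∫ f dμ ≤ ∫ f dν` for every convex 1-Lipschitz function
`f : ℝᵐ → ℝ` bounded from below, then `μ ⪯_C ν` in the convex order, i.e.
`∫ f dμ ≤ ∫ f dν` for every (integrable) convex function `f`. -/
theorem stmt_2 {E : Type*} [NormedAddCommGroup E] [NormedSpace ℝ E]
    [FiniteDimensional ℝ E] [MeasurableSpace E] [BorelSpace E]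
    (μ ν : Measure E) [IsProbabilityMeasure μ] [IsProbabilityMeasure ν]
    (hμ1 : Integrable (fun x => ‖x‖) μ) (hν1 : Integrable (fun x => ‖x‖) ν)
    (h : ∀ f : E → ℝ, ConvexOn ℝ Set.univ f → LipschitzWith 1 f →
      BddBelow (Set.range f) → ∫ x, f x ∂μ ≤ ∫ x, f x ∂ν) :
    ∀ f : E → ℝ, ConvexOn ℝ Set.univ f → Integrable f μ → Integrable f ν →
      ∫ x, f x ∂μ ≤ ∫ x, f x ∂ν := by
  intro f hf hfμ hfν
  have hfc : Continuous f := hf.locallyLipschitz.continuous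
  obtain ⟨ℓ, c, hφf⟩ := hf.exists_continuousLinearMap_add_const_le hfc.lowerSemicontinuous
  have hφ : LipschitzWith ‖ℓ‖₊ fun x => ℓ x + c := by
    simpa using ℓ.lipschitz.add (LipschitzWith.const c)
  refine le_of_tendsto_of_tendsto
    (tendsto_integral_max_lipschitzEnvelope hfc hφ hφf hfμ (hφ.integrable_of_integrable_norm hμ1))
    (tendsto_integral_max_lipschitzEnvelope hfc hφ hφf hfν (hφ.integrable_of_integrable_norm hν1))
    ?_
  filter_upwards [hφ.eventually_lipschitzWith_natCast] with n hn
  exact integral_le_of_convexOn_of_lipschitzWith h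
    ((hf.lipschitzEnvelope hn hφf).sup (convexOn_const _ convex_univ))
    ((lipschitzWith_lipschitzEnvelope hn hφf).max_const _)
    ⟨-n, forall_mem_range.2 fun x => le_max_right _ _⟩
end

section
/- Let (X, d) be a complete separable metric space, γ : ℝ₊ → ℝ₊ lower semicontinuous with γ(0) = 0 and γ(u+v) ≤ C(γ(u)+γ(v)), and let μ be a Borel probability measure with ∫ γ(d(x, x₀)) dμ(x) < ∞. Then for every measurable function ψ : X → ℝ that is bounded above by some continuous function φ with |φ(x)| ≤ a + b γ(d(x, x₀)), one has sup over probability measures ν with ∫ γ(d(x,x₀)) dν < ∞ of (∫ ψ dν − H(ν|μ)) = log ∫ e^ψ dμ, where H(ν|μ) is the relative entropy. -/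
/-!
Gibbs' inequality against the tilted measure `μ.tilted ψ` gives, for every admissible `ν`,
`∫ ψ dν - H(ν|μ) = log ∫ e^ψ dμ - H(ν|μ.tilted ψ) ≤ log ∫ e^ψ dμ`. Conversely, the tilt of `μ`
restricted to `{|ψ| ≤ n}` attains `log ∫_{|ψ| ≤ n} e^ψ dμ`; its density with respect to `μ` is
bounded, so it inherits the moment condition, and these values increase to `log ∫ e^ψ dμ` by
monotone convergence.
-/

open MeasureTheory Real
open scoped ENNReal

namespace MeasureTheory

variable {α : Type*} [MeasurableSpace α] {μ ν : Measure α} {f : α → ℝ} {s : Set α}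

lemma Measure.AbsolutelyContinuous.neZero [NeZero ν] (hνμ : ν ≪ μ) : NeZero μ :=
  ⟨fun hμ ↦ NeZero.ne ν (Measure.measure_univ_eq_zero.1 (hνμ (by simp [hμ])))⟩

lemma log_lintegral_ofReal_exp [NeZero μ] (hf : Integrable (fun x ↦ exp (f x)) μ) :
    ENNReal.log (∫⁻ x, ENNReal.ofReal (exp (f x)) ∂μ) = log (∫ x, exp (f x) ∂μ) := by
  rw [← ofReal_integral_eq_lintegral_ofReal hf (ae_of_all _ fun x ↦ (exp_pos _).le),
    ENNReal.log_ofReal_of_pos (integral_exp_pos hf)]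

lemma integral_sub_integral_llr_le_log_integral_exp [IsProbabilityMeasure ν] [SigmaFinite μ]
    (hνμ : ν ≪ μ) (hfν : Integrable f ν) (hllr : Integrable (llr ν μ) ν)
    (hexp : Integrable (fun x ↦ exp (f x)) μ) :
    ∫ x, f x ∂ν - ∫ x, llr ν μ x ∂ν ≤ log (∫ x, exp (f x) ∂μ) := by
  have := hνμ.neZero
  have := isProbabilityMeasure_tilted hexp
  have gibbs := InformationTheory.integral_llr_add_sub_measure_univ_nonneg
    (hνμ.trans (absolutelyContinuous_tilted hexp)) (integrable_llr_tilted_right hνμ hfν hllr hexp)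
  simp only [integral_llr_tilted_right hνμ hfν hexp hllr, probReal_univ] at gibbs
  linarith

lemma integral_sub_integral_llr_le_log_lintegral_exp [IsProbabilityMeasure ν] [SigmaFinite μ]
    (hνμ : ν ≪ μ) (hfm : AEMeasurable f μ) (hfν : Integrable f ν)
    (hllr : Integrable (llr ν μ) ν) :
    ((∫ x, f x ∂ν - ∫ x, llr ν μ x ∂ν : ℝ) : EReal) ≤
      ENNReal.log (∫⁻ x, ENNReal.ofReal (exp (f x)) ∂μ) := by
  by_cases hexp : Integrable (fun x ↦ exp (f x)) μ
  · have := hνμ.neZero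
    rw [log_lintegral_ofReal_exp hexp]
    exact_mod_cast integral_sub_integral_llr_le_log_integral_exp hνμ hfν hllr hexp
  · rw [← lintegral_ofReal_ne_top_iff_integrable (by fun_prop)
      (ae_of_all _ fun x ↦ (exp_pos _).le), not_not] at hexp
    simp [hexp]

lemma llr_restrict_self [SigmaFinite μ] (hs : MeasurableSet s) :
    llr (μ.restrict s) μ =ᵐ[μ.restrict s] 0 := by
  filter_upwards [ae_restrict_of_ae (Measure.rnDeriv_restrict_self μ hs), ae_restrict_mem hs]
    with x hx hxs
  simp [llr, hx, hxs]

lemma llr_tilted_restrict [SigmaFinite μ] (hs : MeasurableSet s)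
    (hf : IntegrableOn (fun x ↦ exp (f x)) s μ) (hfm : AEMeasurable f μ) :
    llr ((μ.restrict s).tilted f) μ =ᵐ[μ.restrict s]
      fun x ↦ f x - log (∫ x in s, exp (f x) ∂μ) := by
  filter_upwards [llr_tilted_left (Measure.absolutelyContinuous_of_le Measure.restrict_le_self)
    hf hfm, llr_restrict_self hs] with x hx hx0
  simp [hx, hx0]

lemma Integrable.tilted_of_ae_le {E : Type*} [NormedAddCommGroup E] [NormedSpace ℝ E]
    {g : α → E} {c : ℝ} (hg : Integrable g μ) (hfm : AEMeasurable f μ)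
    (hfc : ∀ᵐ x ∂μ, f x ≤ c) : Integrable g (μ.tilted f) := by
  by_cases hexp : Integrable (fun x ↦ exp (f x)) μ
  · rw [integrable_tilted_iff hexp]
    refine hg.bdd_smul (exp c) (by fun_prop) ?_
    filter_upwards [hfc] with x hx
    rw [norm_of_nonneg (exp_pos _).le]
    exact exp_le_exp.2 hx
  · simp [tilted_of_not_integrable hexp]

lemma lintegral_eq_iSup_setLIntegral {ι : Type*} [Countable ι] (g : α → ℝ≥0∞)
    {s : ι → Set α} (hd : Directed (· ⊆ ·) s) (hs : ⋃ i, s i = Set.univ) :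
    ∫⁻ x, g x ∂μ = ⨆ i, ∫⁻ x in s i, g x ∂μ := by
  rw [← setLIntegral_iUnion_of_directed g hd, hs, Measure.restrict_univ]

section Truncation

variable [IsFiniteMeasure μ] {c : ℝ}

lemma integrableOn_exp_of_le (hs : MeasurableSet s) (hfm : Measurable f)
    (hfc : ∀ x ∈ s, f x ≤ c) : IntegrableOn (fun x ↦ exp (f x)) s μ := by
  refine IntegrableOn.of_bound (measure_lt_top _ _) (by fun_prop) (exp c)
    (ae_restrict_of_forall_mem hs fun x hx ↦ ?_)
  rw [norm_of_nonneg (exp_pos _).le]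
  exact exp_le_exp.2 (hfc x hx)

lemma isProbabilityMeasure_tilted_restrict (hs : MeasurableSet s) (hs0 : μ s ≠ 0)
    (hfm : Measurable f) (hfc : ∀ x ∈ s, f x ≤ c) :
    IsProbabilityMeasure ((μ.restrict s).tilted f) :=
  have : NeZero (μ.restrict s) := ⟨by simpa [Measure.restrict_eq_zero] using hs0⟩
  isProbabilityMeasure_tilted (integrableOn_exp_of_le hs hfm hfc)

lemma integrable_tilted_restrict_self (hs : MeasurableSet s) (hfm : Measurable f)
    (hfc : ∀ x ∈ s, |f x| ≤ c) : Integrable f ((μ.restrict s).tilted f) :=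
  (IntegrableOn.of_bound (measure_lt_top _ _) hfm.aestronglyMeasurable c
    (ae_restrict_of_forall_mem hs hfc)).tilted_of_ae_le hfm.aemeasurable
    (ae_restrict_of_forall_mem hs fun x hx ↦ (le_abs_self _).trans (hfc x hx))

lemma llr_tilted_restrict_ae_eq (hs : MeasurableSet s) (hfm : Measurable f)
    (hfc : ∀ x ∈ s, f x ≤ c) :
    llr ((μ.restrict s).tilted f) μ =ᵐ[(μ.restrict s).tilted f]
      fun x ↦ f x - log (∫ x in s, exp (f x) ∂μ) :=
  (tilted_absolutelyContinuous _ _).ae_le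
    (llr_tilted_restrict hs (integrableOn_exp_of_le hs hfm hfc) hfm.aemeasurable)

lemma integrable_llr_tilted_restrict (hs : MeasurableSet s) (hfm : Measurable f)
    (hfc : ∀ x ∈ s, |f x| ≤ c) :
    Integrable (llr ((μ.restrict s).tilted f) μ) ((μ.restrict s).tilted f) :=
  (integrable_congr (llr_tilted_restrict_ae_eq hs hfm fun x hx ↦
    (le_abs_self _).trans (hfc x hx))).2
    ((integrable_tilted_restrict_self hs hfm hfc).sub (integrable_const _))

lemma log_setLIntegral_exp_eq_integral_sub_integral_llr (hs : MeasurableSet s) (hs0 : μ s ≠ 0)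
    (hfm : Measurable f) (hfc : ∀ x ∈ s, |f x| ≤ c) :
    ENNReal.log (∫⁻ x in s, ENNReal.ofReal (exp (f x)) ∂μ) =
      ((∫ x, f x ∂(μ.restrict s).tilted f -
        ∫ x, llr ((μ.restrict s).tilted f) μ x ∂(μ.restrict s).tilted f : ℝ) : EReal) := by
  have hfc' : ∀ x ∈ s, f x ≤ c := fun x hx ↦ (le_abs_self _).trans (hfc x hx)
  have : NeZero (μ.restrict s) := ⟨by simpa [Measure.restrict_eq_zero] using hs0⟩
  have := isProbabilityMeasure_tilted_restrict hs hs0 hfm hfc'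
  rw [log_lintegral_ofReal_exp (integrableOn_exp_of_le hs hfm hfc'),
    integral_congr_ae (llr_tilted_restrict_ae_eq hs hfm hfc'),
    integral_sub (integrable_tilted_restrict_self hs hfm hfc) (integrable_const _)]
  simp

end Truncation

end MeasureTheory

theorem stmt_5_general {X : Type*} [MetricSpace X] [MeasurableSpace X]
    (γ : ℝ → ℝ) (x₀ : X) (μ : Measure X) [IsProbabilityMeasure μ]
    (hμmom : Integrable (fun x => γ (dist x x₀)) μ)
    (ψ : X → ℝ) (hψmeas : Measurable ψ) :
    sSup {r : EReal | ∃ ν : Measure X, IsProbabilityMeasure ν ∧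
        Integrable (fun x => γ (dist x x₀)) ν ∧ ν ≪ μ ∧
        Integrable (llr ν μ) ν ∧ Integrable ψ ν ∧
        r = ((∫ x, ψ x ∂ν - ∫ x, llr ν μ x ∂ν : ℝ) : EReal)} =
      ENNReal.log (∫⁻ x, ENNReal.ofReal (Real.exp (ψ x)) ∂μ) := by
  refine le_antisymm (sSup_le ?_) ?_
  · rintro _ ⟨ν, hν, -, hνμ, hllr, hψν, rfl⟩
    exact integral_sub_integral_llr_le_log_lintegral_exp hνμ hψmeas.aemeasurable hψν hllr
  set s : ℕ → Set X := fun n ↦ {x | |ψ x| ≤ n}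
  have hs (n : ℕ) : MeasurableSet (s n) := measurableSet_le hψmeas.abs measurable_const
  have hs_mono : Monotone s := fun m n hmn x (hx : |ψ x| ≤ m) ↦
    show |ψ x| ≤ n from hx.trans (Nat.cast_le.2 hmn)
  have hs_univ : ⋃ n, s n = Set.univ :=
    Set.eq_univ_of_forall fun x ↦ Set.mem_iUnion.2 (exists_nat_ge |ψ x|)
  rw [lintegral_eq_iSup_setLIntegral _ hs_mono.directed_le hs_univ,
    ← ENNReal.logOrderIso_apply, ENNReal.logOrderIso.map_iSup]
  refine iSup_le fun n ↦ ?_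
  rcases eq_or_ne (μ (s n)) 0 with h0 | h0
  · simp [Measure.restrict_eq_zero.2 h0]
  have hψs : ∀ x ∈ s n, |ψ x| ≤ n := fun x hx ↦ hx
  have hψs' : ∀ x ∈ s n, ψ x ≤ n := fun x hx ↦ (le_abs_self _).trans (hψs x hx)
  have := isProbabilityMeasure_tilted_restrict (hs n) h0 hψmeas hψs'
  rw [ENNReal.logOrderIso_apply,
    log_setLIntegral_exp_eq_integral_sub_integral_llr (hs n) h0 hψmeas hψs]
  exact le_sSup ⟨_, this,
    hμmom.restrict.tilted_of_ae_le hψmeas.aemeasurable (ae_restrict_of_forall_mem (hs n) hψs'),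
    (tilted_absolutelyContinuous _ _).trans
      (Measure.absolutelyContinuous_of_le Measure.restrict_le_self),
    integrable_llr_tilted_restrict (hs n) hψmeas hψs,
    integrable_tilted_restrict_self (hs n) hψmeas hψs, rfl⟩

/-- Donsker–Varadhan variational formula: On a Polish space `X`,
for a probability measure `μ` with finite `γ`-moment and a measurable `ψ`
bounded above by a function `φ` of growth `a + b γ(d(·,x₀))`, one has
`sup_ν (∫ ψ dν − H(ν|μ)) = log ∫ e^ψ dμ`, the supremum being over probability
measures `ν` with finite `γ`-moment (restricted to those with finite entropy
and `ψ` integrable, on which the supremum is effectively taken), the equality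
holding in the extended reals. -/
theorem stmt_5 {X : Type*} [MetricSpace X] [CompleteSpace X]
    [TopologicalSpace.SeparableSpace X] [MeasurableSpace X] [BorelSpace X]
    (γ : ℝ → ℝ) (hγnonneg : ∀ u, 0 ≤ u → 0 ≤ γ u) (hγ0 : γ 0 = 0)
    (hγlsc : LowerSemicontinuous γ)
    (C : ℝ) (hγsub : ∀ u v : ℝ, 0 ≤ u → 0 ≤ v → γ (u + v) ≤ C * (γ u + γ v))
    (x₀ : X) (μ : Measure X) [IsProbabilityMeasure μ]
    (hμmom : Integrable (fun x => γ (dist x x₀)) μ)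
    (ψ : X → ℝ) (hψmeas : Measurable ψ)
    (φ : X → ℝ) (hφcont : Continuous φ) (a b : ℝ) (ha : 0 ≤ a) (hb : 0 ≤ b)
    (hφgrowth : ∀ x, |φ x| ≤ a + b * γ (dist x x₀))
    (hψφ : ∀ x, ψ x ≤ φ x) :
    sSup {r : EReal | ∃ ν : Measure X, IsProbabilityMeasure ν ∧
        Integrable (fun x => γ (dist x x₀)) ν ∧ ν ≪ μ ∧
        Integrable (llr ν μ) ν ∧ Integrable ψ ν ∧
        r = ((∫ x, ψ x ∂ν - ∫ x, llr ν μ x ∂ν : ℝ) : EReal)} =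
      ENNReal.log (∫⁻ x, ENNReal.ofReal (Real.exp (ψ x)) ∂μ) :=
  stmt_5_general γ x₀ μ hμmom ψ hψmeas
end

section
/- Let γ : ℝ₊ → ℝ₊ be an increasing convex function with γ(0) = 0 and right derivative γ'₊(0) = 0, satisfying γ(u+v) ≤ C(γ(u) + γ(v)) for some constant C and all u, v ≥ 0. Then r := sup_{x>0} x γ'₊(x) / γ(x) satisfies 1 < r < ∞. -/
/-!
For `γ` convex on `[0, ∞)`, the right derivative at `x > 0` is at most the slope of the chord from
`x` to `2x`, so `x γ'₊(x) ≤ γ (2x) - γ x ≤ (2C - 1) γ x` and the quotients are bounded above.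
If their supremum were `≤ 1`, then `x γ'₊(x) ≤ γ x` would make `γ x / x` nonincreasing, while
convexity and `γ 0 = 0` make it nondecreasing; so `γ` would be linear on `[0, ∞)`, with
`γ'₊(0) = γ 1 > 0`.
-/

open Set

lemma slope_zero_eq_div {f : ℝ → ℝ} (hf0 : f 0 = 0) (x : ℝ) : slope f 0 x = f x / x := by
  simp [slope_def_field, hf0]

namespace ConvexOn

variable {S : Set ℝ} {f : ℝ → ℝ} {x y : ℝ}

lemma slope_le_rightDeriv_of_mem_interior (hf : ConvexOn ℝ S f) (hy : y ∈ S)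
    (hx : x ∈ interior S) (hyx : y < x) : slope f y x ≤ derivWithin f (Ioi x) x :=
  (hf.slope_le_leftDeriv_of_mem_interior hy hx hyx).trans
    (hf.leftDeriv_le_rightDeriv_of_mem_interior hx)

lemma mul_rightDeriv_le_sub (hf : ConvexOn ℝ (Ici 0) f) (hx : 0 < x) :
    x * derivWithin f (Ioi x) x ≤ f (2 * x) - f x := by
  have h := hf.rightDeriv_le_slope_of_mem_interior (y := 2 * x) (by rwa [interior_Ici])
    (by simp only [mem_Ici]; linarith) (by linarith)
  rw [slope_def_field, show 2 * x - x = x by ring, le_div_iff₀ hx] at h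
  linarith

lemma eqOn_mul_of_mul_rightDeriv_le (hf : ConvexOn ℝ (Ici 0) f) (hf0 : f 0 = 0)
    (h : ∀ x, 0 < x → x * derivWithin f (Ioi x) x ≤ f x) :
    EqOn f (fun x ↦ f 1 * x) (Ici 0) := by
  have hmono : MonotoneOn (fun x ↦ f x / x) (Ioi 0) := by
    intro y (hy : 0 < y) x (hx : 0 < x) hyx
    have := hf.slope_mono self_mem_Ici ⟨hy.le, hy.ne'⟩ ⟨hx.le, hx.ne'⟩ hyx
    simpa only [slope_zero_eq_div hf0] using this
  have hanti : AntitoneOn (fun x ↦ f x / x) (Ioi 0) := by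
    intro y (hy : 0 < y) x (hx : 0 < x) hyx
    rcases hyx.eq_or_lt with rfl | hyx
    · rfl
    have hslope := hf.slope_le_rightDeriv_of_mem_interior hy.le (by rwa [interior_Ici]) hyx
    rw [slope_def_field, div_le_iff₀ (sub_pos.2 hyx)] at hslope
    have hx' := h x hx
    rw [div_le_div_iff₀ hx hy]
    nlinarith
  intro x (hx : 0 ≤ x)
  rcases hx.eq_or_lt with rfl | hx
  · simp [hf0]
  have h1 : (1 : ℝ) ∈ Ioi 0 := mem_Ioi.2 one_pos
  have hconst : f x / x = f 1 / 1 := by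
    rcases le_total x 1 with hx1 | hx1
    · exact le_antisymm (hmono hx h1 hx1) (hanti hx h1 hx1)
    · exact le_antisymm (hanti h1 hx hx1) (hmono h1 hx hx1)
  rw [div_one, div_eq_iff hx.ne'] at hconst
  exact hconst

end ConvexOn

theorem stmt_8_general (γ : ℝ → ℝ) (hmono : StrictMonoOn γ (Set.Ici 0))
    (hconv : ConvexOn ℝ (Set.Ici 0) γ) (hγ0 : γ 0 = 0)
    (hder0 : derivWithin γ (Set.Ioi 0) 0 = 0)
    (C : ℝ)
    (hsub : ∀ u v : ℝ, 0 ≤ u → 0 ≤ v → γ (u + v) ≤ C * (γ u + γ v)) :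
    ∃ r : ℝ, IsLUB {q : ℝ | ∃ x : ℝ, 0 < x ∧
        q = x * derivWithin γ (Set.Ioi x) x / γ x} r ∧ 1 < r := by
  set Q := {q : ℝ | ∃ x : ℝ, 0 < x ∧ q = x * derivWithin γ (Set.Ioi x) x / γ x}
  have hpos : ∀ x, 0 < x → 0 < γ x := fun x hx ↦ hγ0 ▸ hmono self_mem_Ici hx.le hx
  have hQ_le : ∀ q ∈ Q, q ≤ 2 * C - 1 := by
    rintro _ ⟨x, hx, rfl⟩
    have h2x := hsub x x hx.le hx.le
    rw [← two_mul] at h2x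
    rw [div_le_iff₀ (hpos x hx)]
    linarith [hconv.mul_rightDeriv_le_sub hx]
  have hbdd : BddAbove Q := ⟨_, hQ_le⟩
  refine ⟨sSup Q, isLUB_csSup ⟨_, 1, one_pos, rfl⟩ hbdd, ?_⟩
  by_contra! hr
  have hlin := hconv.eqOn_mul_of_mul_rightDeriv_le hγ0 fun x hx ↦ by
    have hq := (le_csSup hbdd ⟨x, hx, rfl⟩).trans hr
    rwa [div_le_iff₀ (hpos x hx), one_mul] at hq
  have hder : derivWithin γ (Ioi 0) 0 = γ 1 := by
    rw [derivWithin_congr (hlin.mono Ioi_subset_Ici_self) (hlin self_mem_Ici)]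
    exact ((hasDerivWithinAt_id _ _).const_mul (γ 1)).derivWithin (uniqueDiffWithinAt_Ioi 0)
      |>.trans (mul_one _)
  exact (hpos 1 one_pos).ne' (hder.symm.trans hder0)

/-- Let `γ : ℝ₊ → ℝ₊` be increasing, convex with `γ(0) = 0`,
right derivative `γ'₊(0) = 0`, and quasi-subadditive
`γ(u+v) ≤ C(γ(u)+γ(v))`. Then `r = sup_{x>0} x γ'₊(x)/γ(x)` satisfies
`1 < r < ∞` (finiteness is expressed by the existence of a real least upper
bound). The right derivative is `derivWithin γ (Ioi x) x`. -/
theorem stmt_8 (γ : ℝ → ℝ) (hmono : StrictMonoOn γ (Set.Ici 0))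
    (hconv : ConvexOn ℝ (Set.Ici 0) γ) (hγ0 : γ 0 = 0)
    (hnonneg : ∀ u, 0 ≤ u → 0 ≤ γ u)
    (hder0 : derivWithin γ (Set.Ioi 0) 0 = 0)
    (C : ℝ) (hC : 0 < C)
    (hsub : ∀ u v : ℝ, 0 ≤ u → 0 ≤ v → γ (u + v) ≤ C * (γ u + γ v)) :
    ∃ r : ℝ, IsLUB {q : ℝ | ∃ x : ℝ, 0 < x ∧
        q = x * derivWithin γ (Set.Ioi x) x / γ x} r ∧ 1 < r :=
  stmt_8_general γ hmono hconv hγ0 hder0 C hsub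
end

section
/- Let γ : ℝ₊ → ℝ₊ be increasing convex with γ(0) = 0 and set r = sup_{x>0} x γ'₊(x)/γ(x), assumed finite. If γ^{1/r} is subadditive, then for any metric space (X, d) and any n, the map (x, y) ↦ (∑_{i=1}^n γ(d(xᵢ, yᵢ)))^{1/r} defines a metric on Xⁿ. -/
/-!
Convexity and `γ 0 = 0` give `γ x ≤ x γ'₊(x)` (the chord from `0` is below the tangent), so
`r ≥ 1`. Subadditivity of `γ^{1/r}` and monotonicity of `γ` give, coordinatewise,
`γ (d(xᵢ, zᵢ)) ≤ (γ (d(xᵢ, yᵢ))^{1/r} + γ (d(yᵢ, zᵢ))^{1/r})^r`, and Minkowski's inequality in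
`ℓ^r` sums these into the triangle inequality.
-/

open Set Finset

namespace ConvexOn

lemma apply_le_mul_rightDeriv {f : ℝ → ℝ} (hf : ConvexOn ℝ (Ici 0) f) (hf0 : f 0 = 0)
    {x : ℝ} (hx : 0 < x) : f x ≤ x * derivWithin f (Ioi x) x := by
  have hx_int : x ∈ interior (Ici (0 : ℝ)) := by rwa [interior_Ici]
  have hslope : f x / x ≤ derivWithin f (Ioi x) x :=
    calc f x / x = slope f 0 x := by simp [slope_def_field, hf0]
      _ ≤ derivWithin f (Iio x) x := hf.slope_le_leftDeriv_of_mem_interior self_mem_Ici hx_int hx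
      _ ≤ derivWithin f (Ioi x) x := hf.leftDeriv_le_rightDeriv_of_mem_interior hx_int
  rwa [div_le_iff₀' hx] at hslope

lemma one_le_mul_rightDeriv_div {f : ℝ → ℝ} (hf : ConvexOn ℝ (Ici 0) f) (hf0 : f 0 = 0)
    {x : ℝ} (hx : 0 < x) (hfx : 0 < f x) : 1 ≤ x * derivWithin f (Ioi x) x / f x :=
  (one_le_div₀ hfx).mpr (hf.apply_le_mul_rightDeriv hf0 hx)

end ConvexOn

section RpowSubadditive

variable {γ : ℝ → ℝ} {p : ℝ}

lemma apply_le_rpow_add_of_le_add (hmono : MonotoneOn γ (Ici 0)) (hγ0 : γ 0 = 0) (hp : 0 < p)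
    (hsub : ∀ u v : ℝ, 0 ≤ u → 0 ≤ v → γ (u + v) ^ (1 / p) ≤ γ u ^ (1 / p) + γ v ^ (1 / p))
    {u v w : ℝ} (hu : 0 ≤ u) (hv : 0 ≤ v) (hw : 0 ≤ w) (hwuv : w ≤ u + v) :
    γ w ≤ (γ u ^ (1 / p) + γ v ^ (1 / p)) ^ p := by
  have huv : 0 ≤ u + v := add_nonneg hu hv
  have hγuv : 0 ≤ γ (u + v) := hγ0 ▸ hmono self_mem_Ici huv huv
  calc γ w ≤ γ (u + v) := hmono hw huv hwuv
    _ = (γ (u + v) ^ (1 / p)) ^ p := by rw [one_div, Real.rpow_inv_rpow hγuv hp.ne']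
    _ ≤ (γ u ^ (1 / p) + γ v ^ (1 / p)) ^ p :=
      Real.rpow_le_rpow (Real.rpow_nonneg hγuv _) (hsub u v hu hv) hp.le

lemma rpow_sum_le_of_le_rpow_add {ι : Type*} (s : Finset ι) {a b c : ι → ℝ} (hp : 1 ≤ p)
    (ha : ∀ i, 0 ≤ a i) (hb : ∀ i, 0 ≤ b i) (hc : ∀ i, 0 ≤ c i)
    (hcab : ∀ i, c i ≤ (a i ^ (1 / p) + b i ^ (1 / p)) ^ p) :
    (∑ i ∈ s, c i) ^ (1 / p) ≤ (∑ i ∈ s, a i) ^ (1 / p) + (∑ i ∈ s, b i) ^ (1 / p) := by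
  have hp0 : 0 < p := one_pos.trans_le hp
  have hpow : ∀ t : ℝ, 0 ≤ t → (t ^ (1 / p)) ^ p = t := fun t ht => by
    rw [one_div, Real.rpow_inv_rpow ht hp0.ne']
  calc (∑ i ∈ s, c i) ^ (1 / p)
      ≤ (∑ i ∈ s, (a i ^ (1 / p) + b i ^ (1 / p)) ^ p) ^ (1 / p) :=
        Real.rpow_le_rpow (sum_nonneg fun i _ => hc i) (sum_le_sum fun i _ => hcab i)
          (by positivity)
    _ ≤ (∑ i ∈ s, (a i ^ (1 / p)) ^ p) ^ (1 / p) + (∑ i ∈ s, (b i ^ (1 / p)) ^ p) ^ (1 / p) :=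
        Real.Lp_add_le_of_nonneg s hp (fun i _ => Real.rpow_nonneg (ha i) _)
          (fun i _ => Real.rpow_nonneg (hb i) _)
    _ = (∑ i ∈ s, a i) ^ (1 / p) + (∑ i ∈ s, b i) ^ (1 / p) := by
        simp only [hpow _ (ha _), hpow _ (hb _)]

lemma rpow_sum_apply_dist_triangle {ι X : Type*} [Fintype ι] [PseudoMetricSpace X]
    (hmono : MonotoneOn γ (Ici 0)) (hγ0 : γ 0 = 0) (hp : 1 ≤ p)
    (hsub : ∀ u v : ℝ, 0 ≤ u → 0 ≤ v → γ (u + v) ^ (1 / p) ≤ γ u ^ (1 / p) + γ v ^ (1 / p))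
    (x y z : ι → X) :
    (∑ i, γ (dist (x i) (z i))) ^ (1 / p) ≤
      (∑ i, γ (dist (x i) (y i))) ^ (1 / p) + (∑ i, γ (dist (y i) (z i))) ^ (1 / p) := by
  have hγnn : ∀ a b : X, 0 ≤ γ (dist a b) := fun a b =>
    hγ0 ▸ hmono self_mem_Ici dist_nonneg dist_nonneg
  exact rpow_sum_le_of_le_rpow_add univ hp (fun _ => hγnn _ _) (fun _ => hγnn _ _)
    (fun _ => hγnn _ _) fun i => apply_le_rpow_add_of_le_add hmono hγ0 (one_pos.trans_le hp)
      hsub dist_nonneg dist_nonneg dist_nonneg (dist_triangle _ _ _)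

end RpowSubadditive

lemma rpow_sum_apply_dist_eq_zero_iff {ι X : Type*} [Fintype ι] [MetricSpace X] {γ : ℝ → ℝ}
    (hγ0 : γ 0 = 0) (hpos : ∀ u : ℝ, 0 < u → 0 < γ u) {q : ℝ} (hq : q ≠ 0) (x y : ι → X) :
    (∑ i, γ (dist (x i) (y i))) ^ q = 0 ↔ x = y := by
  have hγnn : ∀ i, 0 ≤ γ (dist (x i) (y i)) := fun i =>
    (dist_nonneg.eq_or_lt).elim (fun h => by rw [← h, hγ0]) fun h => (hpos _ h).le
  rw [Real.rpow_eq_zero (sum_nonneg fun i _ => hγnn i) hq,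
    sum_eq_zero_iff_of_nonneg fun i _ => hγnn i, funext_iff]
  refine forall_congr' fun i => ⟨fun h => ?_, fun h => by simp [h, hγ0]⟩
  by_contra hne
  exact (hpos _ (dist_pos.mpr hne)).ne' (h (mem_univ i))

/-- Let `γ : ℝ₊ → ℝ₊` be increasing convex, `γ(0) = 0`, `γ > 0`
on `(0,∞)`, and let `r = sup_{x>0} x γ'₊(x)/γ(x)` be finite. If `γ^{1/r}` is
subadditive then for any metric space `X` and any `n`, the map
`(x,y) ↦ (∑ᵢ γ(d(xᵢ,yᵢ)))^{1/r}` is a metric on `Xⁿ` (it vanishes exactly on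
the diagonal, is symmetric, and satisfies the triangle inequality). -/
theorem stmt_9 (γ : ℝ → ℝ) (hmono : MonotoneOn γ (Set.Ici 0))
    (hconv : ConvexOn ℝ (Set.Ici 0) γ) (hγ0 : γ 0 = 0)
    (hpos : ∀ u : ℝ, 0 < u → 0 < γ u)
    (r : ℝ)
    (hr : IsLUB {q : ℝ | ∃ x : ℝ, 0 < x ∧
        q = x * derivWithin γ (Set.Ioi x) x / γ x} r)
    (hsub : ∀ u v : ℝ, 0 ≤ u → 0 ≤ v →
      γ (u + v) ^ (1 / r) ≤ γ u ^ (1 / r) + γ v ^ (1 / r))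
    {X : Type*} [MetricSpace X] (n : ℕ) :
    ∀ x y z : Fin n → X,
      ((∑ i, γ (dist (x i) (y i))) ^ (1 / r) = 0 ↔ x = y) ∧
      (∑ i, γ (dist (x i) (y i))) ^ (1 / r) =
        (∑ i, γ (dist (y i) (x i))) ^ (1 / r) ∧
      (∑ i, γ (dist (x i) (z i))) ^ (1 / r) ≤
        (∑ i, γ (dist (x i) (y i))) ^ (1 / r) +
          (∑ i, γ (dist (y i) (z i))) ^ (1 / r) := by
  intro x y z
  have hr1 : 1 ≤ r :=
    (hconv.one_le_mul_rightDeriv_div hγ0 one_pos (hpos 1 one_pos)).trans (hr.1 ⟨1, one_pos, rfl⟩)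
  refine ⟨rpow_sum_apply_dist_eq_zero_iff hγ0 hpos (by positivity) x y, by simp only [dist_comm],
    rpow_sum_apply_dist_triangle hmono hγ0 hr1 hsub x y z⟩
end

section
/- Let β₁*(h) = e^{−h} + h − 1 for h ∈ ℝ. Let μ be a probability measure on a measurable space X and v : X → ℝ a bounded measurable function. Then ∫ exp( v(x) − ∫ v dμ − ∫ β₁*([v(x) − v(y)]₊) dμ(y) ) dμ(x) ≤ 1, where [t]₊ = max(t, 0). -/
open MeasureTheory Set Filter Topology
namespace StmtTen



noncomputable def gg (d : ℝ) : ℝ := Real.exp (-(max d 0)) + max d 0 - 1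
noncomputable def ww (d : ℝ) : ℝ := 1 - Real.exp (-(max d 0))
noncomputable def bb (d : ℝ) : ℝ := if 0 ≤ d then Real.exp (-d) else 0

lemma one_sub_exp_neg_le (x : ℝ) : 1 - Real.exp (-x) ≤ x := by
  have := Real.add_one_le_exp (-x); linarith

lemma ww_nonneg (d : ℝ) : 0 ≤ ww d := by
  have : Real.exp (-(max d 0)) ≤ 1 := by
    rw [Real.exp_le_one_iff]
    simp [le_max_right]
  unfold ww; linarith

lemma ww_le_one (d : ℝ) : ww d ≤ 1 := by
  have := Real.exp_pos (-(max d 0)); simp [ww]; linarith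

lemma gg_nonneg (d : ℝ) : 0 ≤ gg d := by
  have := Real.add_one_le_exp (-(max d 0)); simp [gg]; linarith

lemma gg_le_abs (d : ℝ) : gg d ≤ |d| := by
  have h1 : Real.exp (-(max d 0)) ≤ 1 := by rw [Real.exp_le_one_iff]; simp [le_max_right]
  have h2 : max d 0 ≤ |d| := by
    rcases le_total d 0 with h | h
    · simp [max_eq_right h]
    · simp [max_eq_left h, abs_of_nonneg h]
  simp only [gg]; linarith

lemma sub_gg_le_ww (d : ℝ) : d - gg d ≤ ww d := by
  have : d ≤ max d 0 := le_max_left _ _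
  simp only [gg, ww]; linarith

lemma sub_gg_le_one (d : ℝ) : d - gg d ≤ 1 := by
  have h := sub_gg_le_ww d; have := ww_le_one d; linarith

lemma bb_nonneg (d : ℝ) : 0 ≤ bb d := by
  unfold bb; split <;> positivity

lemma bb_le_one (d : ℝ) : bb d ≤ 1 := by
  unfold bb; split
  · rw [Real.exp_le_one_iff]; linarith
  · norm_num

/-- for `0 ≤ p ≤ q`, `0 ≤ e^{-p} - e^{-q} ≤ q - p`. -/
lemma exp_neg_sub_bound {p q : ℝ} (hp : 0 ≤ p) (hpq : p ≤ q) :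
    0 ≤ Real.exp (-p) - Real.exp (-q) ∧ Real.exp (-p) - Real.exp (-q) ≤ q - p := by
  constructor
  · have := Real.exp_le_exp.2 (neg_le_neg hpq); linarith
  · have h1 : Real.exp (-q) = Real.exp (-p) * Real.exp (-(q - p)) := by
      rw [← Real.exp_add]; ring_nf
    have h2 : 1 - Real.exp (-(q - p)) ≤ q - p := one_sub_exp_neg_le _
    have h3 : Real.exp (-p) ≤ 1 := by rw [Real.exp_le_one_iff]; linarith
    have h4 : 0 ≤ 1 - Real.exp (-(q - p)) := by
      have : Real.exp (-(q-p)) ≤ 1 := by rw [Real.exp_le_one_iff]; linarith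
      linarith
    calc Real.exp (-p) - Real.exp (-q) = Real.exp (-p) * (1 - Real.exp (-(q - p))) := by
          rw [h1]; ring
      _ ≤ 1 * (q - p) := by
          apply mul_le_mul h3 h2 h4 zero_le_one
      _ = q - p := one_mul _

lemma ww_lip (a d : ℝ) : |ww a - ww d| ≤ |a - d| := by
  have key : ∀ x y : ℝ, y ≤ x → |ww x - ww y| ≤ |x - y| := by
    intro x y hxy
    have hm : max y 0 ≤ max x 0 := max_le_max hxy le_rfl
    have h := exp_neg_sub_bound (le_max_right y 0) hm
    have hmm : max x 0 - max y 0 ≤ |x - y| := by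
      have := abs_max_sub_max_le_abs x y 0
      have : max x 0 - max y 0 ≤ |max x 0 - max y 0| := le_abs_self _
      have h2 := abs_max_sub_max_le_abs x y 0
      linarith
    have hww : ww x - ww y = Real.exp (-(max y 0)) - Real.exp (-(max x 0)) := by
      unfold ww; ring
    rw [hww, abs_of_nonneg h.1]
    linarith [h.2]
  rcases le_total d a with h | h
  · exact key a d h
  · rw [abs_sub_comm, abs_sub_comm a d]; exact key d a h

lemma gg_lip (a d : ℝ) : |gg a - gg d| ≤ |a - d| := by
  have key : ∀ x y : ℝ, y ≤ x → |gg x - gg y| ≤ |x - y| := by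
    intro x y hxy
    have hm : max y 0 ≤ max x 0 := max_le_max hxy le_rfl
    have h := exp_neg_sub_bound (le_max_right y 0) hm
    have hmm : max x 0 - max y 0 ≤ |x - y| := by
      have h2 := abs_max_sub_max_le_abs x y 0
      have : max x 0 - max y 0 ≤ |max x 0 - max y 0| := le_abs_self _
      linarith
    have hgg : gg x - gg y =
        (max x 0 - max y 0) - (Real.exp (-(max y 0)) - Real.exp (-(max x 0))) := by
      unfold gg; ring
    rw [hgg, abs_le]
    refine ⟨by linarith [h.2, abs_nonneg (x - y)], by linarith [h.1]⟩
  rcases le_total d a with h | h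
  · exact key a d h
  · rw [abs_sub_comm, abs_sub_comm a d]; exact key d a h



lemma gg_nonneg' (d : ℝ) : 0 ≤ gg d := by
  have := Real.add_one_le_exp (-(max d 0)); simp [gg]; linarith

lemma gg_le_sq (d : ℝ) : gg d ≤ d ^ 2 := by
  rcases le_total d 0 with h | h
  · have : max d 0 = 0 := max_eq_right h
    simp [gg, this]; positivity
  · have hm : max d 0 = d := max_eq_left h
    have h1 : 1 + d ≤ Real.exp d := by have := Real.add_one_le_exp d; linarith
    have h2 : Real.exp (-d) * Real.exp d = 1 := by rw [← Real.exp_add]; simp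
    have h3 : (0:ℝ) < Real.exp (-d) := Real.exp_pos _
    have h4 : Real.exp (-d) * (1 + d) ≤ 1 := by nlinarith
    simp only [gg, hm]
    nlinarith [mul_nonneg (mul_nonneg h h) h]

lemma hasDerivAt_exp_neg (d : ℝ) : HasDerivAt (fun t : ℝ => Real.exp (-t)) (-Real.exp (-d)) d := by
  simpa [Function.comp_def] using (Real.hasDerivAt_exp (-d)).comp d ((hasDerivAt_id d).neg)

lemma hasDerivAt_gg (d : ℝ) : HasDerivAt gg (ww d) d := by
  rcases lt_trichotomy d 0 with h | h | h
  · have hw : ww d = 0 := by simp [ww, max_eq_right h.le]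
    rw [hw]
    have h0 : gg =ᶠ[𝓝 d] fun _ => (0 : ℝ) := by
      filter_upwards [Iio_mem_nhds h] with t ht
      simp [gg, max_eq_right (le_of_lt (mem_Iio.mp ht))]
    exact (hasDerivAt_const d (0:ℝ)).congr_of_eventuallyEq h0
  · subst h
    have hw : ww 0 = 0 := by simp [ww]
    rw [hw, hasDerivAt_iff_tendsto_slope]
    have hb : ∀ t : ℝ, ‖slope gg 0 t‖ ≤ ‖t‖ := by
      intro t
      rcases eq_or_ne t 0 with rfl | ht
      · simp [slope]
      · rw [slope_def_field]
        have h1 : |gg t| ≤ t ^ 2 := by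
          rw [abs_of_nonneg (gg_nonneg' t)]; exact gg_le_sq t
        have : gg 0 = 0 := by simp [gg]
        rw [this, sub_zero, sub_zero, Real.norm_eq_abs, Real.norm_eq_abs, abs_div]
        rw [div_le_iff₀ (abs_pos.2 ht)]
        calc |gg t| ≤ t ^ 2 := h1
          _ = |t| * |t| := by rw [sq]; exact (abs_mul_abs_self t).symm
      -- done
    have htends : Tendsto (fun t : ℝ => ‖t‖) (𝓝[≠] (0:ℝ)) (𝓝 0) := by
      have : Tendsto (fun t : ℝ => ‖t‖) (𝓝 (0:ℝ)) (𝓝 0) := by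
        exact tendsto_norm_zero
      exact this.mono_left nhdsWithin_le_nhds
    have := squeeze_zero_norm hb htends
    simpa using this
  · have hw' : ww d = 1 - Real.exp (-d) := by simp [ww, max_eq_left h.le]
    have h0 : gg =ᶠ[𝓝 d] fun t => Real.exp (-t) + t - 1 := by
      filter_upwards [Ioi_mem_nhds h] with t ht
      simp [gg, max_eq_left (le_of_lt (mem_Ioi.mp ht))]
    have hd : HasDerivAt (fun t => Real.exp (-t) + t - 1) (ww d) d := by
      have h2 := ((hasDerivAt_exp_neg d).add (hasDerivAt_id d)).sub_const 1
      exact h2.congr_deriv (by rw [hw']; ring)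
    exact hd.congr_of_eventuallyEq h0

lemma hasDerivWithinAt_ww (d : ℝ) : HasDerivWithinAt ww (bb d) (Ioi d) d := by
  rcases le_or_gt 0 d with h | h
  · have hb : bb d = Real.exp (-d) := if_pos h
    rw [hb]
    have hd : HasDerivAt (fun t : ℝ => 1 - Real.exp (-t)) (Real.exp (-d)) d := by
      exact ((hasDerivAt_const d (1:ℝ)).sub (hasDerivAt_exp_neg d)).congr_deriv (by ring)
    refine hd.hasDerivWithinAt.congr (fun t ht => ?_) ?_
    · have : (0:ℝ) ≤ t := le_trans h (le_of_lt ht)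
      simp [ww, max_eq_left this]
    · simp [ww, max_eq_left h]
  · have hb : bb d = 0 := if_neg (not_le.mpr h)
    rw [hb]
    have h0 : ww =ᶠ[𝓝 d] fun _ => (0 : ℝ) := by
      filter_upwards [Iio_mem_nhds h] with t ht
      simp [ww, max_eq_right (le_of_lt (mem_Iio.mp ht))]
    exact ((hasDerivAt_const d (0:ℝ)).congr_of_eventuallyEq h0).hasDerivWithinAt

lemma cont_ww : Continuous ww := by unfold ww; fun_prop
lemma cont_gg : Continuous gg := by unfold gg; fun_prop
lemma meas_bb : Measurable bb := by
  unfold bb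
  refine Measurable.ite ?_ (by fun_prop) measurable_const
  exact measurableSet_Ici (a := (0:ℝ))

lemma int_bdd {α : Type*} [MeasurableSpace α] (m : Measure α) [IsFiniteMeasure m]
    {h : α → ℝ} (hm : AEStronglyMeasurable h m) {c : ℝ} (hb : ∀ y, |h y| ≤ c) :
    Integrable h m :=
  ⟨hm, HasFiniteIntegral.of_bounded (C := c)
    (Eventually.of_forall (fun y => by simpa [Real.norm_eq_abs] using hb y))⟩

variable {X : Type*} [MeasurableSpace X] (μ : Measure X) [IsProbabilityMeasure μ] (v : X → ℝ)

noncomputable def Wf : ℝ → ℝ := fun s => ∫ y, gg (s - v y) ∂μ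
noncomputable def Cf : ℝ → ℝ := fun s => ∫ y, ww (s - v y) ∂μ
noncomputable def Bf : ℝ → ℝ := fun s => ∫ y, bb (s - v y) ∂μ
noncomputable def Hf : ℝ → ℝ := fun s => s - (∫ y, v y ∂μ) - Wf μ v s

variable (hmeas : Measurable v) (M : ℝ) (hM : ∀ x, |v x| ≤ M)

section
include hmeas

lemma int_w (s : ℝ) : Integrable (fun y => ww (s - v y)) μ :=
  int_bdd μ ((cont_ww.measurable.comp (by fun_prop)).aestronglyMeasurable) (c := 1)
    (fun y => abs_le.mpr ⟨by linarith [ww_nonneg (s - v y)], ww_le_one _⟩)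

lemma int_b (s : ℝ) : Integrable (fun y => bb (s - v y)) μ :=
  int_bdd μ ((meas_bb.comp (by fun_prop)).aestronglyMeasurable) (c := 1)
    (fun y => abs_le.mpr ⟨by linarith [bb_nonneg (s - v y)], bb_le_one _⟩)

include hM in
lemma int_g (s : ℝ) : Integrable (fun y => gg (s - v y)) μ := by
  refine int_bdd μ ((cont_gg.measurable.comp (by fun_prop)).aestronglyMeasurable)
    (c := |s| + M) (fun y => ?_)
  have h1 : gg (s - v y) ≤ |s - v y| := gg_le_abs _
  have h2 : |s - v y| ≤ |s| + |v y| := abs_sub _ _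
  have h3 := hM y
  rw [abs_of_nonneg (gg_nonneg _)]
  linarith

lemma C_nonneg (s : ℝ) : 0 ≤ Cf μ v s :=
  integral_nonneg (fun y => ww_nonneg _)

lemma C_le_one (s : ℝ) : Cf μ v s ≤ 1 := by
  have := integral_mono (int_w μ v hmeas s) (integrable_const (1:ℝ))
    (fun y => ww_le_one (s - v y))
  simpa [Cf] using this

lemma B_nonneg (s : ℝ) : 0 ≤ Bf μ v s :=
  integral_nonneg (fun y => bb_nonneg _)

lemma B_le_one (s : ℝ) : Bf μ v s ≤ 1 := by
  have := integral_mono (int_b μ v hmeas s) (integrable_const (1:ℝ))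
    (fun y => bb_le_one (s - v y))
  simpa [Bf] using this

include hM in
lemma hasDerivAt_W (s₀ : ℝ) : HasDerivAt (Wf μ v) (Cf μ v s₀) s₀ := by
  have key := hasDerivAt_integral_of_dominated_loc_of_deriv_le (μ := μ)
    (F := fun s y => gg (s - v y)) (F' := fun s y => ww (s - v y))
    (x₀ := s₀) (s := Metric.ball s₀ 1) (bound := fun _ => (1:ℝ)) (Metric.ball_mem_nhds s₀ one_pos)
    (Eventually.of_forall (fun s =>
      (cont_gg.measurable.comp (by fun_prop)).aestronglyMeasurable))
    (int_g μ v hmeas M hM s₀)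
    ((cont_ww.measurable.comp (by fun_prop)).aestronglyMeasurable)
    (Eventually.of_forall (fun y => fun s _ => by
      have h1 := ww_nonneg (s - v y); have h2 := ww_le_one (s - v y)
      rw [Real.norm_eq_abs, abs_le]
      refine ⟨show (-1:ℝ) ≤ _ from by linarith, show _ ≤ (1:ℝ) from by linarith⟩))
    (integrable_const 1)
    (Eventually.of_forall (fun y => fun s _ => by
      simpa [Function.comp_def] using (hasDerivAt_gg (s - v y)).comp s ((hasDerivAt_id s).sub_const (v y))))
  exact key.2


lemma C_lip : LipschitzWith 1 (Cf μ v) := by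
  refine LipschitzWith.of_dist_le_mul (fun s t => ?_)
  rw [Real.dist_eq, Real.dist_eq, NNReal.coe_one, one_mul]
  have h1 : Cf μ v s - Cf μ v t = ∫ y, (ww (s - v y) - ww (t - v y)) ∂μ := by
    rw [integral_sub (int_w μ v hmeas s) (int_w μ v hmeas t)]
    rfl
  rw [h1]
  calc |∫ y, (ww (s - v y) - ww (t - v y)) ∂μ|
      ≤ |s - t| * (μ univ).toReal := by
        rw [← Real.norm_eq_abs]
        refine norm_integral_le_of_norm_le_const (Eventually.of_forall (fun y => ?_))
        rw [Real.norm_eq_abs]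
        calc |ww (s - v y) - ww (t - v y)| ≤ |(s - v y) - (t - v y)| := ww_lip _ _
          _ = |s - t| := by ring_nf
    _ = |s - t| := by simp

lemma cont_C : Continuous (Cf μ v) := (C_lip μ v hmeas).continuous

lemma hasDerivWithinAt_C (s₀ : ℝ) :
    HasDerivWithinAt (Cf μ v) (Bf μ v s₀) (Ioi s₀) s₀ := by
  rw [hasDerivWithinAt_iff_tendsto_slope]
  have hset : Ioi s₀ \ {s₀} = Ioi s₀ :=
    diff_singleton_eq_self (by simp)
  rw [hset]
  have key : Tendsto (fun t => ∫ y, (ww (t - v y) - ww (s₀ - v y)) / (t - s₀) ∂μ)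
      (𝓝[Ioi s₀] s₀) (𝓝 (Bf μ v s₀)) := by
    refine tendsto_integral_filter_of_dominated_convergence (bound := fun _ => (1:ℝ))
      ?_ ?_ (integrable_const 1) ?_
    · refine Eventually.of_forall (fun t => ?_)
      have : Measurable (fun y => (ww (t - v y) - ww (s₀ - v y)) / (t - s₀)) := by
        have m1 : Measurable fun y => ww (t - v y) := cont_ww.measurable.comp (by fun_prop)
        have m2 : Measurable fun y => ww (s₀ - v y) := cont_ww.measurable.comp (by fun_prop)
        exact (m1.sub m2).div_const _
      exact this.aestronglyMeasurable
    · refine eventually_nhdsWithin_of_forall (fun t ht => ?_)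
      refine Eventually.of_forall (fun y => ?_)
      have ht' : s₀ < t := ht
      rw [Real.norm_eq_abs, abs_div]
      rw [div_le_one (by rw [abs_pos]; exact sub_ne_zero.mpr (ne_of_gt ht'))]
      calc |ww (t - v y) - ww (s₀ - v y)| ≤ |(t - v y) - (s₀ - v y)| := ww_lip _ _
        _ = |t - s₀| := by ring_nf
    · refine Eventually.of_forall (fun y => ?_)
      have hw : HasDerivWithinAt (fun u => ww (u - v y)) (bb (s₀ - v y)) (Ioi s₀) s₀ := by
        have hcomp := (hasDerivWithinAt_ww (s₀ - v y)).comp s₀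
          (((hasDerivAt_id s₀).sub_const (v y)).hasDerivWithinAt)
          (fun t ht => by simpa using sub_lt_sub_right (mem_Ioi.mp ht) (v y))
        simpa [Function.comp_def] using hcomp
      rw [hasDerivWithinAt_iff_tendsto_slope, hset] at hw
      refine hw.congr (fun t => ?_)
      rw [slope_def_field]
  refine key.congr' ?_
  filter_upwards [eventually_mem_nhdsWithin] with t ht
  rw [slope_def_field]
  show (∫ y, (ww (t - v y) - ww (s₀ - v y)) / (t - s₀) ∂μ) = (Cf μ v t - Cf μ v s₀) / (t - s₀)
  rw [integral_div, integral_sub (int_w μ v hmeas t) (int_w μ v hmeas s₀)]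
  rfl

include hM in
lemma B_meas : Measurable (Bf μ v) := by
  have hrep : Bf μ v = fun s => Real.exp (-s) *
      ∫ y, (if v y ≤ s then Real.exp (v y) else 0) ∂μ := by
    funext s
    rw [← integral_const_mul]
    refine integral_congr_ae (Eventually.of_forall (fun y => ?_))
    show bb (s - v y) = Real.exp (-s) * (if v y ≤ s then Real.exp (v y) else 0)
    by_cases h : v y ≤ s
    · rw [if_pos h]
      unfold bb
      rw [if_pos (by linarith)]
      rw [← Real.exp_add]; ring_nf
    · rw [if_neg h]
      unfold bb
      rw [if_neg (by intro hc; exact h (by linarith))]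
      ring
  rw [hrep]
  refine (Real.continuous_exp.measurable.comp measurable_neg).mul ?_
  have hmono : Monotone (fun s => ∫ y, (if v y ≤ s then Real.exp (v y) else 0) ∂μ) := by
    intro s t hst
    refine integral_mono ?_ ?_ (fun y => ?_)
    · refine int_bdd μ ?_ (c := Real.exp M) (fun y => ?_)
      · refine ((Measurable.ite ?_ (by fun_prop) measurable_const)).aestronglyMeasurable
        exact hmeas measurableSet_Iic
      · rw [abs_le]
        constructor
        · split
          · linarith [Real.exp_pos (v y), Real.exp_pos M]
          · simp [Real.exp_nonneg]
        · split
          · exact Real.exp_le_exp.2 (le_trans (le_abs_self _) (hM y))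
          · positivity
    · refine int_bdd μ ?_ (c := Real.exp M) (fun y => ?_)
      · refine ((Measurable.ite ?_ (by fun_prop) measurable_const)).aestronglyMeasurable
        exact hmeas measurableSet_Iic
      · rw [abs_le]
        constructor
        · split
          · linarith [Real.exp_pos (v y), Real.exp_pos M]
          · simp [Real.exp_nonneg]
        · split
          · exact Real.exp_le_exp.2 (le_trans (le_abs_self _) (hM y))
          · positivity
    · by_cases h : v y ≤ s
      · rw [if_pos h, if_pos (le_trans h hst)]
      · rw [if_neg h]; split <;> positivity
  exact hmono.measurable


include hM in
lemma hv_int : Integrable v μ := int_bdd μ hmeas.aestronglyMeasurable hM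

include hM in
lemma H_repr (s : ℝ) : Hf μ v s = ∫ y, (s - v y - gg (s - v y)) ∂μ := by
  have e1 : ∫ y, (s - v y - gg (s - v y)) ∂μ
      = (∫ y, (s - v y) ∂μ) - ∫ y, gg (s - v y) ∂μ :=
    integral_sub ((integrable_const s).sub (hv_int μ v hmeas M hM)) (int_g μ v hmeas M hM s)
  have e2 : ∫ y, (s - v y) ∂μ = s - ∫ y, v y ∂μ := by
    rw [integral_sub (integrable_const s) (hv_int μ v hmeas M hM), integral_const]
    simp
  simp only [Hf, Wf]
  rw [e1, e2]

include hM in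
lemma H_le_C (s : ℝ) : Hf μ v s ≤ Cf μ v s := by
  rw [H_repr μ v hmeas M hM s]
  exact integral_mono (((integrable_const s).sub (hv_int μ v hmeas M hM)).sub
    (int_g μ v hmeas M hM s)) (int_w μ v hmeas s) (fun y => sub_gg_le_ww _)

include hM in
lemma H_le_one (s : ℝ) : Hf μ v s ≤ 1 := by
  rw [H_repr μ v hmeas M hM s]
  have := integral_mono (((integrable_const s).sub (hv_int μ v hmeas M hM)).sub
    (int_g μ v hmeas M hM s)) (integrable_const (1:ℝ)) (fun y => sub_gg_le_one _)
  simpa using this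

include hM in
lemma hasDerivAt_H (t : ℝ) : HasDerivAt (Hf μ v) (1 - Cf μ v t) t := by
  have h1 : HasDerivAt (fun s : ℝ => s - (∫ y, v y ∂μ)) 1 t := (hasDerivAt_id t).sub_const _
  exact h1.sub (hasDerivAt_W μ v hmeas M hM t)

include hM in
lemma cont_H : Continuous (Hf μ v) :=
  continuous_iff_continuousAt.mpr (fun t => (hasDerivAt_H μ v hmeas M hM t).continuousAt)

include hM in
lemma FTC1 {a K : ℝ} (haK : a ≤ K) :
    Real.exp (Hf μ v a - a) = Real.exp (Hf μ v K - K)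
      + ∫ s in a..K, Real.exp (Hf μ v s - s) * Cf μ v s := by
  have hderiv : ∀ t ∈ uIcc a K, HasDerivAt (fun s => Real.exp (Hf μ v s - s))
      (-(Real.exp (Hf μ v t - t) * Cf μ v t)) t := by
    intro t _
    have h1 : HasDerivAt (fun s => Hf μ v s - s) (1 - Cf μ v t - 1) t :=
      (hasDerivAt_H μ v hmeas M hM t).sub (hasDerivAt_id t)
    have h2 := h1.exp
    convert h2 using 1
    ring
  have hcont : Continuous fun s => -(Real.exp (Hf μ v s - s) * Cf μ v s) :=
    ((((cont_H μ v hmeas M hM).sub continuous_id).rexp).mul (cont_C μ v hmeas)).neg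
  have hkey := intervalIntegral.integral_eq_sub_of_hasDerivAt hderiv
    (hcont.intervalIntegrable a K)
  rw [intervalIntegral.integral_neg] at hkey
  have : ∫ s in a..K, Real.exp (Hf μ v s - s) * Cf μ v s
      = Real.exp (Hf μ v a - a) - Real.exp (Hf μ v K - K) := by linarith
  rw [this]; ring

include hM in
lemma FTC2 {L K : ℝ} (hLK : L ≤ K) :
    (∫ s in L..K, Real.exp (Cf μ v s) * Cf μ v s * Bf μ v s) ≤ 1 := by
  have hkey : (∫ s in L..K, Real.exp (Cf μ v s) * Cf μ v s * Bf μ v s)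
      = (-(Real.exp (Cf μ v K) * (1 - Cf μ v K)))
        - (-(Real.exp (Cf μ v L) * (1 - Cf μ v L))) := by
    refine intervalIntegral.integral_eq_sub_of_hasDeriv_right
      (f := fun s => -(Real.exp (Cf μ v s) * (1 - Cf μ v s)))
      (f' := fun s => Real.exp (Cf μ v s) * Cf μ v s * Bf μ v s) ?_ ?_ ?_
    · exact (((Real.continuous_exp.comp (cont_C μ v hmeas)).mul
        (continuous_const.sub (cont_C μ v hmeas))).neg).continuousOn
    · intro t _
      have houter : HasDerivAt (fun c : ℝ => -(Real.exp c * (1 - c)))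
          (Real.exp (Cf μ v t) * Cf μ v t) (Cf μ v t) := by
        have hd := ((Real.hasDerivAt_exp (Cf μ v t)).mul
          ((hasDerivAt_const (Cf μ v t) (1:ℝ)).sub (hasDerivAt_id _))).neg
        exact hd.congr_deriv (by simp only [Pi.sub_apply, id_eq]; ring)
      have hcomp := houter.comp_hasDerivWithinAt t (hasDerivWithinAt_C μ v hmeas t)
      exact hcomp
    · have hfin : IsFiniteMeasure (volume.restrict (Set.uIoc L K)) := by
        constructor
        rw [Measure.restrict_apply_univ]
        exact measure_Ioc_lt_top
      rw [intervalIntegrable_iff]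
      refine @int_bdd _ _ _ hfin _ ?_ (Real.exp 1) (fun s => ?_)
      · refine ((((Real.continuous_exp.comp (cont_C μ v hmeas)).mul
          (cont_C μ v hmeas)).measurable.mul (B_meas μ v hmeas M hM))).aestronglyMeasurable
      · have h1 := C_nonneg μ v hmeas s
        have h2 := C_le_one μ v hmeas s
        have h3 := B_nonneg μ v hmeas s
        have h4 := B_le_one μ v hmeas s
        have h5 : Real.exp (Cf μ v s) ≤ Real.exp 1 := Real.exp_le_exp.2 h2
        have h6 : (0:ℝ) < Real.exp (Cf μ v s) := Real.exp_pos _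
        have hp : 0 ≤ Real.exp (Cf μ v s) * Cf μ v s * Bf μ v s :=
          mul_nonneg (mul_nonneg h6.le h1) h3
        have hup : Real.exp (Cf μ v s) * Cf μ v s * Bf μ v s ≤ Real.exp 1 := by
          have e1 : Real.exp (Cf μ v s) * Cf μ v s * Bf μ v s
              ≤ Real.exp (Cf μ v s) * Cf μ v s := by
            nlinarith [mul_nonneg (mul_nonneg h6.le h1) (sub_nonneg.mpr h4)]
          have e2 : Real.exp (Cf μ v s) * Cf μ v s ≤ Real.exp 1 := by
            nlinarith [mul_le_mul h5 h2 h1 (Real.exp_pos 1).le]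
          linarith
        rw [abs_le]
        have := Real.exp_pos 1
        constructor
        · linarith
        · linarith
  rw [hkey]
  have h1 := C_nonneg μ v hmeas K
  have h2 := C_le_one μ v hmeas K
  have h3 := C_nonneg μ v hmeas L
  have h4 := C_le_one μ v hmeas L
  have h5 : (0:ℝ) ≤ Real.exp (Cf μ v K) * (1 - Cf μ v K) := by
    have := Real.exp_pos (Cf μ v K); nlinarith
  have h6 : Real.exp (Cf μ v L) * (1 - Cf μ v L) ≤ 1 := by
    have hle : 1 - Cf μ v L ≤ Real.exp (-(Cf μ v L)) := by
      have := Real.add_one_le_exp (-(Cf μ v L)); linarith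
    have hpos := Real.exp_pos (Cf μ v L)
    have hmul : Real.exp (Cf μ v L) * Real.exp (-(Cf μ v L)) = 1 := by
      rw [← Real.exp_add]; simp
    nlinarith
  linarith


include hmeas hM in
lemma int_eCCB (L K : ℝ) :
    Integrable (fun s => Real.exp (Cf μ v s) * Cf μ v s * Bf μ v s)
      (volume.restrict (Ioc L K)) := by
  have hfin : IsFiniteMeasure (volume.restrict (Ioc L K)) := by
    constructor
    rw [Measure.restrict_apply_univ]
    exact measure_Ioc_lt_top
  refine @int_bdd _ _ _ hfin _ ?_ (Real.exp 1) (fun s => ?_)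
  · exact ((((Real.continuous_exp.comp (cont_C μ v hmeas)).mul
      (cont_C μ v hmeas)).measurable.mul (B_meas μ v hmeas M hM))).aestronglyMeasurable
  · have h1 := C_nonneg μ v hmeas s
    have h2 := C_le_one μ v hmeas s
    have h3 := B_nonneg μ v hmeas s
    have h4 := B_le_one μ v hmeas s
    have h5 : Real.exp (Cf μ v s) ≤ Real.exp 1 := Real.exp_le_exp.2 h2
    have h6 : (0:ℝ) < Real.exp (Cf μ v s) := Real.exp_pos _
    have hp : 0 ≤ Real.exp (Cf μ v s) * Cf μ v s * Bf μ v s :=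
      mul_nonneg (mul_nonneg h6.le h1) h3
    have hup : Real.exp (Cf μ v s) * Cf μ v s * Bf μ v s ≤ Real.exp 1 := by
      have e1 : Real.exp (Cf μ v s) * Cf μ v s * Bf μ v s
          ≤ Real.exp (Cf μ v s) * Cf μ v s := by
        nlinarith [mul_nonneg (mul_nonneg h6.le h1) (sub_nonneg.mpr h4)]
      have e2 : Real.exp (Cf μ v s) * Cf μ v s ≤ Real.exp 1 := by
        nlinarith [mul_le_mul h5 h2 h1 (Real.exp_pos 1).le]
      linarith
    rw [abs_le]
    have := Real.exp_pos 1
    exact ⟨by linarith, by linarith⟩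

include hM in
lemma main_bound (hM0 : 0 ≤ M) {K : ℝ} (hK : M ≤ K) :
    (∫ x, Real.exp (Hf μ v (v x)) ∂μ) ≤ Real.exp (1 + M - K) + 1 := by
  set L : ℝ := -(M + 1) with hLdef
  have hLK : L ≤ K := by rw [hLdef]; linarith
  set FF : X × ℝ → ℝ := fun p =>
    (if v p.1 < p.2 then Real.exp (v p.1 - p.2) else 0)
      * (Real.exp (Cf μ v p.2) * Cf μ v p.2) with hFFdef
  -- pointwise bound
  have hpoint : ∀ x, Real.exp (Hf μ v (v x)) ≤ Real.exp (1 + M - K)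
      + ∫ s in Ioc L K, FF (x, s) := by
    intro x
    set a := v x with ha
    have haM : |a| ≤ M := hM x
    obtain ⟨haL', haM'⟩ := abs_le.mp haM
    have haK : a ≤ K := le_trans haM' hK
    have hLa : L ≤ a := by rw [hLdef]; linarith
    have h1 := FTC1 μ v hmeas M hM haK
    have hsplit : Real.exp (Hf μ v a) = Real.exp a * Real.exp (Hf μ v a - a) := by
      rw [← Real.exp_add]; ring_nf
    have h2 : Real.exp (Hf μ v a) = Real.exp (Hf μ v K - K + a)
        + ∫ s in a..K, Real.exp a * (Real.exp (Hf μ v s - s) * Cf μ v s) := by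
      rw [intervalIntegral.integral_const_mul, hsplit, h1, mul_add, ← Real.exp_add]
      ring_nf
    have hb1 : Real.exp (Hf μ v K - K + a) ≤ Real.exp (1 + M - K) := by
      apply Real.exp_le_exp.2
      have := H_le_one μ v hmeas M hM K
      linarith
    have hb2 : (∫ s in a..K, Real.exp a * (Real.exp (Hf μ v s - s) * Cf μ v s))
        ≤ ∫ s in a..K, Real.exp (a - s) * (Real.exp (Cf μ v s) * Cf μ v s) := by
      refine intervalIntegral.integral_mono_on haK ?_ ?_ (fun s _ => ?_)
      · exact (continuous_const.mul
          (((cont_H μ v hmeas M hM).sub continuous_id).rexp.mul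
            (cont_C μ v hmeas))).intervalIntegrable a K
      · exact ((continuous_const.sub continuous_id).rexp.mul
          ((Real.continuous_exp.comp (cont_C μ v hmeas)).mul
            (cont_C μ v hmeas))).intervalIntegrable a K
      · have hHC := H_le_C μ v hmeas M hM s
        have hCn := C_nonneg μ v hmeas s
        have he : Real.exp a * Real.exp (Hf μ v s - s)
            ≤ Real.exp (a - s) * Real.exp (Cf μ v s) := by
          rw [← Real.exp_add, ← Real.exp_add]
          apply Real.exp_le_exp.2
          linarith
        calc Real.exp a * (Real.exp (Hf μ v s - s) * Cf μ v s)
            = (Real.exp a * Real.exp (Hf μ v s - s)) * Cf μ v s := by ring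
          _ ≤ (Real.exp (a - s) * Real.exp (Cf μ v s)) * Cf μ v s :=
              mul_le_mul_of_nonneg_right he hCn
          _ = Real.exp (a - s) * (Real.exp (Cf μ v s) * Cf μ v s) := by ring
    have h3 : (∫ s in a..K, Real.exp (a - s) * (Real.exp (Cf μ v s) * Cf μ v s))
        = ∫ s in Ioc L K, FF (x, s) := by
      rw [intervalIntegral.integral_of_le haK]
      have hind : ∀ s : ℝ, FF (x, s)
          = (Ioi a).indicator (fun s => Real.exp (a - s)
              * (Real.exp (Cf μ v s) * Cf μ v s)) s := by
        intro s
        rw [hFFdef]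
        simp only [Set.indicator_apply, mem_Ioi]
        by_cases h : a < s
        · rw [if_pos h, if_pos h]
        · rw [if_neg h, if_neg h, zero_mul]
      rw [show (∫ s in Ioc L K, FF (x, s)) = ∫ s in Ioc L K,
          (Ioi a).indicator (fun s => Real.exp (a - s)
            * (Real.exp (Cf μ v s) * Cf μ v s)) s from
          integral_congr_ae (Eventually.of_forall (fun s => hind s))]
      rw [setIntegral_indicator measurableSet_Ioi]
      rw [Ioc_inter_Ioi, max_eq_right hLa]
    rw [h2, ← h3]
    linarith
  -- integrability facts
  have hfin : IsFiniteMeasure (volume.restrict (Ioc L K)) := by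
    constructor
    rw [Measure.restrict_apply_univ]
    exact measure_Ioc_lt_top
  have hmeasFF : Measurable FF := by
    rw [hFFdef]
    refine Measurable.mul ?_ ?_
    · refine Measurable.ite ?_ ?_ measurable_const
      · exact measurableSet_lt (hmeas.comp measurable_fst) measurable_snd
      · exact Real.continuous_exp.measurable.comp
          ((hmeas.comp measurable_fst).sub measurable_snd)
    · exact ((Real.continuous_exp.comp (cont_C μ v hmeas)).mul
        (cont_C μ v hmeas)).measurable.comp measurable_snd
  have hFFbd : ∀ p : X × ℝ, |FF p| ≤ Real.exp 1 := by
    intro p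
    rw [hFFdef]
    have h1 : 0 ≤ (if v p.1 < p.2 then Real.exp (v p.1 - p.2) else 0) := by
      split
      · exact (Real.exp_pos _).le
      · exact le_rfl
    have h2 : (if v p.1 < p.2 then Real.exp (v p.1 - p.2) else 0) ≤ 1 := by
      split
      · next h => exact Real.exp_le_one_iff.mpr (by linarith)
      · norm_num
    have h3 : 0 ≤ Real.exp (Cf μ v p.2) * Cf μ v p.2 :=
      mul_nonneg (Real.exp_pos _).le (C_nonneg μ v hmeas p.2)
    have h4 : Real.exp (Cf μ v p.2) * Cf μ v p.2 ≤ Real.exp 1 := by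
      have e2 := C_le_one μ v hmeas p.2
      have e1 := C_nonneg μ v hmeas p.2
      nlinarith [Real.exp_le_exp.2 e2, Real.exp_pos (Cf μ v p.2), Real.exp_pos 1]
    rw [abs_of_nonneg (mul_nonneg h1 h3)]
    calc (if v p.1 < p.2 then Real.exp (v p.1 - p.2) else 0)
          * (Real.exp (Cf μ v p.2) * Cf μ v p.2)
        ≤ 1 * Real.exp 1 := mul_le_mul h2 h4 h3 zero_le_one
      _ = Real.exp 1 := one_mul _
  haveI := hfin
  have hFFint : Integrable FF (μ.prod (volume.restrict (Ioc L K))) :=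
    int_bdd _ hmeasFF.aestronglyMeasurable hFFbd
  have hinner_int : Integrable (fun x => ∫ s in Ioc L K, FF (x, s)) μ :=
    hFFint.integral_prod_left
  have hμint : Integrable (fun x => Real.exp (Hf μ v (v x))) μ := by
    refine int_bdd μ ((Real.continuous_exp.comp
      (cont_H μ v hmeas M hM)).measurable.comp hmeas).aestronglyMeasurable
      (c := Real.exp 1) (fun x => ?_)
    rw [abs_of_pos (Real.exp_pos _)]
    exact Real.exp_le_exp.2 (H_le_one μ v hmeas M hM (v x))
  calc (∫ x, Real.exp (Hf μ v (v x)) ∂μ)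
      ≤ ∫ x, (Real.exp (1 + M - K) + ∫ s in Ioc L K, FF (x, s)) ∂μ :=
        integral_mono hμint ((integrable_const _).add hinner_int) hpoint
    _ = Real.exp (1 + M - K) + ∫ x, (∫ s in Ioc L K, FF (x, s)) ∂μ := by
        rw [integral_add (integrable_const _) hinner_int, integral_const]
        simp
    _ = Real.exp (1 + M - K) + ∫ s in Ioc L K, (∫ x, FF (x, s) ∂μ) := by
        rw [integral_integral_swap (f := fun x s => FF (x, s)) hFFint]
    _ ≤ Real.exp (1 + M - K) + 1 := by
        have hsect : ∀ s : ℝ, (∫ x, FF (x, s) ∂μ)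
            ≤ Real.exp (Cf μ v s) * Cf μ v s * Bf μ v s := by
          intro s
          have hrw : (∫ x, FF (x, s) ∂μ)
              = (∫ x, (if v x < s then Real.exp (v x - s) else 0) ∂μ)
                * (Real.exp (Cf μ v s) * Cf μ v s) := by
            rw [hFFdef, ← integral_mul_const]
          rw [hrw]
          have hb : (∫ x, (if v x < s then Real.exp (v x - s) else 0) ∂μ) ≤ Bf μ v s := by
            refine integral_mono ?_ (int_b μ v hmeas s) (fun x => ?_)
            · refine int_bdd μ ?_ (c := 1) (fun x => ?_)
              · refine (Measurable.ite (hmeas measurableSet_Iio) ?_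
                  measurable_const).aestronglyMeasurable
                exact Real.continuous_exp.measurable.comp (hmeas.sub measurable_const)
              · rw [abs_le]
                constructor
                · split
                  · linarith [Real.exp_pos (v x - s)]
                  · norm_num
                · split
                  · next h => exact Real.exp_le_one_iff.mpr (by linarith)
                  · norm_num
            · show (if v x < s then Real.exp (v x - s) else 0) ≤ bb (s - v x)
              by_cases h : v x < s
              · rw [if_pos h]
                unfold bb
                rw [if_pos (by linarith), neg_sub]
              · rw [if_neg h]
                exact bb_nonneg _
          have hC3 : 0 ≤ Real.exp (Cf μ v s) * Cf μ v s :=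
            mul_nonneg (Real.exp_pos _).le (C_nonneg μ v hmeas s)
          calc (∫ x, (if v x < s then Real.exp (v x - s) else 0) ∂μ)
                * (Real.exp (Cf μ v s) * Cf μ v s)
              ≤ Bf μ v s * (Real.exp (Cf μ v s) * Cf μ v s) :=
                mul_le_mul_of_nonneg_right hb hC3
            _ = Real.exp (Cf μ v s) * Cf μ v s * Bf μ v s := by ring
        have hmono : (∫ s in Ioc L K, (∫ x, FF (x, s) ∂μ))
            ≤ ∫ s in Ioc L K, Real.exp (Cf μ v s) * Cf μ v s * Bf μ v s := by
          refine integral_mono ?_ (int_eCCB μ v hmeas M hM L K) (fun s => hsect s)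
          exact hFFint.integral_prod_right
        have hFTC2 : (∫ s in Ioc L K, Real.exp (Cf μ v s) * Cf μ v s * Bf μ v s) ≤ 1 := by
          rw [← intervalIntegral.integral_of_le hLK]
          exact FTC2 μ v hmeas M hM hLK
        linarith

end
end StmtTen

/-- With `β₁*(h) = e^{−h} + h − 1`, for any probability measure
`μ` and bounded measurable `v : X → ℝ`,
`∫ exp(v(x) − ∫ v dμ − ∫ β₁*([v(x)−v(y)]₊) dμ(y)) dμ(x) ≤ 1`. -/
theorem stmt_10 {X : Type*} [MeasurableSpace X] (μ : Measure X)
    [IsProbabilityMeasure μ] (v : X → ℝ) (hmeas : Measurable v)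
    (hbdd : ∃ M : ℝ, ∀ x, |v x| ≤ M) :
    ∫ x, Real.exp (v x - ∫ y, v y ∂μ -
        ∫ y, (Real.exp (-(max (v x - v y) 0)) + max (v x - v y) 0 - 1) ∂μ)
      ∂μ ≤ 1 := by
  obtain ⟨M₀, hM₀⟩ := hbdd
  set M : ℝ := max M₀ 0 with hMdef
  have hM : ∀ x, |v x| ≤ M := fun x => le_trans (hM₀ x) (le_max_left _ _)
  have hM0 : (0:ℝ) ≤ M := le_max_right _ _
  have hgoal : (∫ x, Real.exp (v x - (∫ y, v y ∂μ) -
      ∫ y, (Real.exp (-(max (v x - v y) 0)) + max (v x - v y) 0 - 1) ∂μ) ∂μ)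
      = ∫ x, Real.exp (StmtTen.Hf μ v (v x)) ∂μ := rfl
  rw [hgoal]
  refine le_of_forall_pos_le_add (fun ε hε => ?_)
  set K : ℝ := max M (1 + M - Real.log ε) with hKdef
  have hK : M ≤ K := le_max_left _ _
  have h := StmtTen.main_bound μ v hmeas M hM hM0 hK
  have herr : Real.exp (1 + M - K) ≤ ε := by
    have h1 : 1 + M - Real.log ε ≤ K := le_max_right _ _
    have h2 : 1 + M - K ≤ Real.log ε := by linarith
    calc Real.exp (1 + M - K) ≤ Real.exp (Real.log ε) := Real.exp_le_exp.2 h2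
      _ = ε := Real.exp_log hε
  linarith
end

section
/- For t ∈ [0,1] define β_t*(s) = (t e^{(1−t)s} + (1−t) e^{−ts} − 1)/(t(1−t)) for t ∈ (0,1), β₀*(s) = e^s − s − 1, β₁*(s) = e^{−s} + s − 1, and let β_t(u) = sup_{s∈ℝ}(su − β_t*(s)) be its Legendre transform. Then the monotone conjugate β_t^⊛(u) := sup_{y ≥ 0}(uy − β_t(y)) satisfies β_t^⊛(u) = β_t*([u]₊) for all u ∈ ℝ. -/
/-!
On `[0, ∞)` the monotone conjugate is attained in closed form because `β_t*` is convex with an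
explicit derivative `D_t` (`e^{(1-t)v} - e^{-tv}`, resp. `e^v - 1`, `1 - e^{-v}`): every tangent
line lies below `β_t*`, so the supremum defining `β_t (D_t v)` is attained at `s = v`, giving
`β_t (D_t v) = v D_t v - β_t*(v)`. For `y ≥ 0`, Fenchel–Young at `s = [u]₊` together with
`u y ≤ [u]₊ y` bounds `u y - β_t(y)` by `β_t*([u]₊)`, and the bound is attained at
`y = D_t([u]₊) ≥ 0`; when `u < 0` this is `y = 0` because `D_t(0) = 0`.
-/

open Real Set

noncomputable def legendre (B : ℝ → ℝ) (y : ℝ) : EReal :=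
  ⨆ s : ℝ, ((s * y - B s : ℝ) : EReal)

theorem coe_sub_le_legendre (B : ℝ → ℝ) (s y : ℝ) :
    ((s * y - B s : ℝ) : EReal) ≤ legendre B y :=
  le_iSup (fun s => ((s * y - B s : ℝ) : EReal)) s

theorem legendre_eq_of_tangent_le {B : ℝ → ℝ} {v d : ℝ} (h : ∀ s, B v + d * (s - v) ≤ B s) :
    legendre B d = ((v * d - B v : ℝ) : EReal) :=
  le_antisymm (iSup_le fun s => EReal.coe_le_coe_iff.mpr (by linarith [h s]))
    (coe_sub_le_legendre B v d)

theorem coe_mul_sub_legendre_le (B : ℝ → ℝ) (u : ℝ) {y : ℝ} (hy : 0 ≤ y) :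
    ((u * y : ℝ) : EReal) - legendre B y ≤ B (max u 0) := by
  have hmul : u * y ≤ max u 0 * y := mul_le_mul_of_nonneg_right (le_max_left u 0) hy
  calc ((u * y : ℝ) : EReal) - legendre B y
      ≤ ((u * y : ℝ) : EReal) - ((max u 0 * y - B (max u 0) : ℝ) : EReal) :=
        EReal.sub_le_sub le_rfl (coe_sub_le_legendre B _ y)
    _ = ((u * y - (max u 0 * y - B (max u 0)) : ℝ) : EReal) := (EReal.coe_sub _ _).symm
    _ ≤ B (max u 0) := EReal.coe_le_coe_iff.mpr (by linarith)

theorem iSup_nonneg_mul_sub_legendre {B D : ℝ → ℝ} (hB : ∀ v s, B v + D v * (s - v) ≤ B s)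
    (hD0 : D 0 = 0) (hD : ∀ v, 0 ≤ v → 0 ≤ D v) (u : ℝ) :
    ⨆ y : {y : ℝ // 0 ≤ y}, (((u * y : ℝ) : EReal) - legendre B y) = B (max u 0) := by
  refine le_antisymm (iSup_le fun y => coe_mul_sub_legendre_le B u y.2) ?_
  set v := max u 0
  have hmul : u * D v = v * D v := by
    rcases le_total 0 u with hu | hu
    · simp [v, max_eq_left hu]
    · simp [v, max_eq_right hu, hD0]
  refine le_iSup_of_le ⟨D v, hD v (le_max_right u 0)⟩ ?_
  rw [legendre_eq_of_tangent_le (hB v), ← EReal.coe_sub, hmul, sub_sub_cancel]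

noncomputable def betaStar (t s : ℝ) : ℝ :=
  if t = 0 then exp s - s - 1
  else if t = 1 then exp (-s) + s - 1
  else (t * exp ((1 - t) * s) + (1 - t) * exp (-t * s) - 1) / (t * (1 - t))

noncomputable def betaStarDeriv (t v : ℝ) : ℝ :=
  if t = 0 then exp v - 1
  else if t = 1 then 1 - exp (-v)
  else exp ((1 - t) * v) - exp (-t * v)

theorem exp_mul_add_tangent_le (a v s : ℝ) :
    exp (a * v) + a * exp (a * v) * (s - v) ≤ exp (a * s) :=
  calc exp (a * v) + a * exp (a * v) * (s - v) = exp (a * v) * (a * (s - v) + 1) := by ring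
    _ ≤ exp (a * v) * exp (a * (s - v)) :=
        mul_le_mul_of_nonneg_left (add_one_le_exp _) (exp_pos _).le
    _ = exp (a * s) := by rw [← exp_add]; ring_nf

theorem betaStar_add_tangent_le {t : ℝ} (ht : t ∈ Icc (0 : ℝ) 1) (v s : ℝ) :
    betaStar t v + betaStarDeriv t v * (s - v) ≤ betaStar t s := by
  unfold betaStar betaStarDeriv
  by_cases h0 : t = 0
  · simp only [h0, if_true]
    have := exp_mul_add_tangent_le 1 v s
    simp only [one_mul] at this
    linarith
  by_cases h1 : t = 1
  · simp only [h1, if_true, one_ne_zero, if_false]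
    have := exp_mul_add_tangent_le (-1) v s
    simp only [neg_mul, one_mul] at this
    linarith
  simp only [h0, h1, if_false]
  have ht0 : 0 < t := lt_of_le_of_ne ht.1 (Ne.symm h0)
  have ht1 : 0 < 1 - t := sub_pos.mpr (lt_of_le_of_ne ht.2 h1)
  have hc : 0 < t * (1 - t) := mul_pos ht0 ht1
  have hpos := mul_le_mul_of_nonneg_left (exp_mul_add_tangent_le (1 - t) v s) ht0.le
  have hneg := mul_le_mul_of_nonneg_left (exp_mul_add_tangent_le (-t) v s) ht1.le
  rw [div_add' _ _ _ hc.ne', div_le_div_iff_of_pos_right hc]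
  linarith

theorem betaStarDeriv_zero (t : ℝ) : betaStarDeriv t 0 = 0 := by
  simp [betaStarDeriv]

theorem betaStarDeriv_nonneg (t : ℝ) {v : ℝ} (hv : 0 ≤ v) : 0 ≤ betaStarDeriv t v := by
  unfold betaStarDeriv
  split_ifs
  · linarith [add_one_le_exp v]
  · linarith [exp_le_one_iff.mpr (neg_nonpos.mpr hv)]
  · exact sub_nonneg.mpr (exp_le_exp.mpr (by nlinarith))

/-- For `t ∈ [0,1]`, with `β_t*` as in the paper and
`β_t(u) = sup_s (su − β_t*(s))` its Legendre transform (with values in the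
extended reals), the monotone conjugate `β_t^⊛(u) = sup_{y ≥ 0}(uy − β_t(y))`
satisfies `β_t^⊛(u) = β_t*([u]₊)` for all `u ∈ ℝ`. -/
theorem stmt_11 (t : ℝ) (ht : t ∈ Set.Icc (0 : ℝ) 1)
    (B : ℝ → ℝ)
    (hB : ∀ s : ℝ, B s =
      if t = 0 then Real.exp s - s - 1
      else if t = 1 then Real.exp (-s) + s - 1
      else (t * Real.exp ((1 - t) * s) + (1 - t) * Real.exp (-t * s) - 1) /
        (t * (1 - t)))
    (β : ℝ → EReal)
    (hβ : ∀ u : ℝ, β u = ⨆ s : ℝ, ((s * u - B s : ℝ) : EReal)) :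
    ∀ u : ℝ,
      (⨆ y : {y : ℝ // 0 ≤ y}, (((u * (y : ℝ) : ℝ) : EReal) - β (y : ℝ))) =
        ((B (max u 0) : ℝ) : EReal) := by
  obtain rfl : β = legendre B := funext hβ
  obtain rfl : B = betaStar t := funext hB
  exact iSup_nonneg_mul_sub_legendre (betaStar_add_tangent_le ht) (betaStarDeriv_zero t)
    (fun _ => betaStarDeriv_nonneg t)
end

section
/- Let ‖·‖ be a norm on ℝᵐ whose dual norm ‖·‖* is strictly convex (i.e. ‖x‖* = ‖y‖* = 1 and x ≠ y imply ‖(1−t)x + ty‖* < 1 for t ∈ (0,1)). Then for every convex function φ : ℝᵐ → ℝ and every t > 0, the function Q_tφ(x) = inf_{y ∈ ℝᵐ}( φ(y) + (1/(2t)) ‖x − y‖² ) is convex and continuously differentiable on ℝᵐ. -/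
set_option linter.unusedSectionVars false
set_option linter.unusedVariables false
set_option maxHeartbeats 1000000

open Filter Topology Set Asymptotics Metric

namespace Stmt12

variable {m : ℕ}

noncomputable def dot (w x : Fin m → ℝ) : ℝ := ∑ i, w i * x i

noncomputable def dotCLM (w : Fin m → ℝ) : (Fin m → ℝ) →L[ℝ] ℝ :=
  ∑ i, w i • (ContinuousLinearMap.proj i : (Fin m → ℝ) →L[ℝ] ℝ)

lemma dotCLM_apply (w x : Fin m → ℝ) : dotCLM w x = dot w x := by
  simp [dotCLM, dot, ContinuousLinearMap.sum_apply]

lemma dot_add_right (w x y : Fin m → ℝ) : dot w (x + y) = dot w x + dot w y := by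
  simp [dot, mul_add, Finset.sum_add_distrib]

lemma dot_add_left (w x y : Fin m → ℝ) : dot (w + x) y = dot w y + dot x y := by
  simp [dot, add_mul, Finset.sum_add_distrib]

lemma dot_smul_right (c : ℝ) (w x : Fin m → ℝ) : dot w (c • x) = c * dot w x := by
  simp only [dot, Finset.mul_sum, Pi.smul_apply, smul_eq_mul]
  exact Finset.sum_congr rfl fun i _ => by ring

lemma dot_smul_left (c : ℝ) (w x : Fin m → ℝ) : dot (c • w) x = c * dot w x := by
  simp only [dot, Finset.mul_sum, Pi.smul_apply, smul_eq_mul]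
  exact Finset.sum_congr rfl fun i _ => by ring

lemma dot_neg_right (w x : Fin m → ℝ) : dot w (-x) = - dot w x := by
  simp [dot]

lemma dot_zero_right (w : Fin m → ℝ) : dot w 0 = 0 := by simp [dot]

lemma dot_zero_left (x : Fin m → ℝ) : dot 0 x = 0 := by simp [dot]

lemma abs_dot_le (w x : Fin m → ℝ) : |dot w x| ≤ (m : ℝ) * ‖w‖ * ‖x‖ := by
  calc |dot w x| ≤ ∑ i, |w i * x i| := Finset.abs_sum_le_sum_abs _ _
    _ ≤ ∑ _i : Fin m, ‖w‖ * ‖x‖ := by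
        refine Finset.sum_le_sum fun i _ => ?_
        rw [abs_mul]
        have h1 : |w i| ≤ ‖w‖ := by simpa using norm_le_pi_norm w i
        have h2 : |x i| ≤ ‖x‖ := by simpa using norm_le_pi_norm x i
        exact mul_le_mul h1 h2 (abs_nonneg _) (norm_nonneg _)
    _ = (m : ℝ) * ‖w‖ * ‖x‖ := by simp [mul_assoc]

lemma sq_norm_le_dot_self (x : Fin m → ℝ) : ‖x‖ ^ 2 ≤ dot x x := by
  have hd : 0 ≤ dot x x := Finset.sum_nonneg fun i _ => mul_self_nonneg _
  have hx : ‖x‖ ≤ Real.sqrt (dot x x) := by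
    refine pi_norm_le_iff_of_nonneg (Real.sqrt_nonneg _) |>.2 fun i => ?_
    rw [Real.norm_eq_abs, ← Real.sqrt_sq_eq_abs]
    refine Real.sqrt_le_sqrt ?_
    rw [show x i ^ 2 = x i * x i from sq (x i)]
    exact Finset.single_le_sum (f := fun j => x j * x j)
      (fun j _ => mul_self_nonneg _) (Finset.mem_univ i)
  calc ‖x‖ ^ 2 ≤ Real.sqrt (dot x x) ^ 2 := by
        exact pow_le_pow_left₀ (norm_nonneg _) hx 2
    _ = dot x x := Real.sq_sqrt hd

lemma dot_self_pos {x : Fin m → ℝ} (hx : x ≠ 0) : 0 < dot x x := by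
  have h := sq_norm_le_dot_self x
  have : 0 < ‖x‖ := norm_pos_iff.2 hx
  nlinarith


variable (N : (Fin m → ℝ) → ℝ)
variable {m : ℕ} (N : (Fin m → ℝ) → ℝ)

section Nfacts
variable (hN_nonneg : ∀ x, 0 ≤ N x)
  (hN_smul : ∀ (c : ℝ) (x), N (c • x) = |c| * N x)
  (hN_add : ∀ x y, N (x + y) ≤ N x + N y)

include hN_nonneg hN_smul hN_add

omit hN_nonneg hN_add in
lemma N_zero : N 0 = 0 := by simpa using hN_smul 0 0

omit hN_nonneg hN_add in
lemma N_neg (x) : N (-x) = N x := by simpa using hN_smul (-1) x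

omit hN_nonneg in
lemma N_sum_le {ι : Type*} (s : Finset ι) (f : ι → Fin m → ℝ) :
    N (∑ i ∈ s, f i) ≤ ∑ i ∈ s, N (f i) := by
  classical
  induction s using Finset.cons_induction with
  | empty => simp [N_zero N hN_smul]
  | cons a s ha ih =>
    rw [Finset.sum_cons, Finset.sum_cons]
    exact le_trans (hN_add _ _) (add_le_add_right ih _)

lemma N_upper : ∃ b : ℝ, 0 < b ∧ ∀ x, N x ≤ b * ‖x‖ := by
  classical
  refine ⟨(∑ i, N (fun j => if i = j then 1 else 0)) + 1, ?_, fun x => ?_⟩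
  · have : 0 ≤ ∑ i, N (fun j => if i = j then (1:ℝ) else 0) :=
      Finset.sum_nonneg fun i _ => hN_nonneg _
    linarith
  · have hx : x = ∑ i, x i • fun j => if i = j then (1:ℝ) else 0 := pi_eq_sum_univ x
    calc N x ≤ ∑ i, N (x i • fun j => if i = j then (1:ℝ) else 0) := by
          conv_lhs => rw [hx]
          exact N_sum_le N hN_smul hN_add Finset.univ
            (fun i => x i • fun j => if i = j then (1:ℝ) else 0)
      _ = ∑ i, |x i| * N (fun j => if i = j then (1:ℝ) else 0) := by
          simp [hN_smul]
      _ ≤ ∑ i, ‖x‖ * N (fun j => if i = j then (1:ℝ) else 0) := by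
          refine Finset.sum_le_sum fun i _ => ?_
          exact mul_le_mul_of_nonneg_right (by simpa using norm_le_pi_norm x i) (hN_nonneg _)
      _ = (∑ i, N (fun j => if i = j then (1:ℝ) else 0)) * ‖x‖ := by
          rw [Finset.sum_mul]
          exact Finset.sum_congr rfl fun i _ => mul_comm _ _
      _ ≤ ((∑ i, N (fun j => if i = j then (1:ℝ) else 0)) + 1) * ‖x‖ := by
          have := norm_nonneg x; nlinarith

omit hN_nonneg hN_smul in
lemma N_sub_le (x y : Fin m → ℝ) : N x - N y ≤ N (x - y) := by
  have := hN_add (x - y) y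
  simp only [sub_add_cancel] at this
  linarith

lemma N_continuous : Continuous N := by
  obtain ⟨b, hb, hub⟩ := N_upper N hN_nonneg hN_smul hN_add
  refine (LipschitzWith.of_dist_le_mul (K := b.toNNReal) (f := N) fun x y => ?_).continuous
  have h1 := N_sub_le N hN_add x y
  have h2 := N_sub_le N hN_add y x
  have h3 : N (y - x) = N (x - y) := by rw [← N_neg N hN_smul (x - y)]; congr 1; abel
  have h4 := hub (x - y)
  have key : |N x - N y| ≤ b * ‖x - y‖ := by
    rw [abs_le]
    constructor
    · linarith [h2, h3, h4]
    · linarith [h1, h4]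
  rw [Real.dist_eq, dist_eq_norm, Real.coe_toNNReal _ hb.le]
  exact key

omit hN_nonneg in
lemma N_convexCombo {a b : ℝ} (ha : 0 ≤ a) (hb : 0 ≤ b) (hab : a + b = 1) (u v : Fin m → ℝ) :
    N (a • u + b • v) ≤ a * N u + b * N v := by
  calc N (a • u + b • v) ≤ N (a • u) + N (b • v) := hN_add _ _
    _ = a * N u + b * N v := by rw [hN_smul, hN_smul, abs_of_nonneg ha, abs_of_nonneg hb]

lemma Nsq_convexCombo {a b : ℝ} (ha : 0 ≤ a) (hb : 0 ≤ b) (hab : a + b = 1) (u v : Fin m → ℝ) :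
    N (a • u + b • v) ^ 2 ≤ a * N u ^ 2 + b * N v ^ 2 := by
  have h1 := N_convexCombo N hN_smul hN_add ha hb hab u v
  have h2 : N (a • u + b • v) ^ 2 ≤ (a * N u + b * N v) ^ 2 := by
    have := hN_nonneg (a • u + b • v)
    nlinarith
  have hu := hN_nonneg u
  have hv := hN_nonneg v
  nlinarith [mul_nonneg (mul_nonneg ha hb) (sq_nonneg (N u - N v))]

lemma N_lower (hm : 0 < m) (hN_eq_zero : ∀ x, N x = 0 ↔ x = 0) :
    ∃ a : ℝ, 0 < a ∧ ∀ x, a * ‖x‖ ≤ N x := by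
  have : Nonempty (Fin m) := ⟨⟨0, hm⟩⟩
  have hsph : (Metric.sphere (0 : Fin m → ℝ) 1).Nonempty := by
    refine ⟨fun _ => 1, ?_⟩
    simp [mem_sphere_iff_norm]
  obtain ⟨y₀, hy₀mem, hy₀min⟩ := (isCompact_sphere (0 : Fin m → ℝ) 1).exists_isMinOn hsph
    ((N_continuous N hN_nonneg hN_smul hN_add).continuousOn)
  have hy₀norm : ‖y₀‖ = 1 := by simpa [mem_sphere_iff_norm] using hy₀mem
  have hy₀ne : y₀ ≠ 0 := by intro h; rw [h] at hy₀norm; simp at hy₀norm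
  have ha : 0 < N y₀ := lt_of_le_of_ne (hN_nonneg _) fun h => hy₀ne ((hN_eq_zero y₀).1 h.symm)
  refine ⟨N y₀, ha, fun x => ?_⟩
  rcases eq_or_ne x 0 with rfl | hx
  · simp [N_zero N hN_smul]
  · have hxn : 0 < ‖x‖ := norm_pos_iff.2 hx
    have hunit : ‖x‖⁻¹ • x ∈ Metric.sphere (0 : Fin m → ℝ) 1 := by
      simp [mem_sphere_iff_norm, norm_smul, abs_of_pos (inv_pos.2 hxn), inv_mul_cancel₀ hxn.ne']
    have hmin' : N y₀ ≤ N (‖x‖⁻¹ • x) := isMinOn_iff.mp hy₀min _ hunit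
    have hNx : N (‖x‖⁻¹ • x) = ‖x‖⁻¹ * N x := by
      rw [hN_smul, abs_of_pos (inv_pos.2 hxn)]
    rw [hNx] at hmin'
    calc N y₀ * ‖x‖ ≤ (‖x‖⁻¹ * N x) * ‖x‖ := by
          exact mul_le_mul_of_nonneg_right hmin' hxn.le
      _ = N x := by field_simp
end Nfacts

structure NormData (m : ℕ) where
  N : (Fin m → ℝ) → ℝ
  Nd : (Fin m → ℝ) → ℝ
  nonneg : ∀ x, 0 ≤ N x
  eq_zero' : ∀ x, N x = 0 ↔ x = 0
  smul' : ∀ (c : ℝ) (x), N (c • x) = |c| * N x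
  add' : ∀ x y, N (x + y) ≤ N x + N y
  dual : ∀ x, IsGreatest {r : ℝ | ∃ y, N y = 1 ∧ r = ∑ i, x i * y i} (Nd x)

namespace NormData

variable {m : ℕ} (D : NormData m)

lemma N_zero' : D.N 0 = 0 := N_zero D.N D.smul'
lemma N_neg' (x) : D.N (-x) = D.N x := N_neg D.N D.smul' x
lemma N_cont : Continuous D.N := N_continuous D.N D.nonneg D.smul' D.add'
lemma N_ub : ∃ b : ℝ, 0 < b ∧ ∀ x, D.N x ≤ b * ‖x‖ := N_upper D.N D.nonneg D.smul' D.add'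

lemma Nd_ub (w y : Fin m → ℝ) (hy : D.N y = 1) : dot w y ≤ D.Nd w := (D.dual w).2 ⟨y, hy, rfl⟩

lemma Nd_mem (w : Fin m → ℝ) : ∃ y, D.N y = 1 ∧ D.Nd w = dot w y := (D.dual w).1

lemma exists_N_one : ∃ y : Fin m → ℝ, D.N y = 1 :=
  let ⟨y, hy, _⟩ := (D.dual 0).1; ⟨y, hy⟩

include D in
lemma m_pos : 0 < m := by
  rcases Nat.eq_zero_or_pos m with h | h
  · exfalso
    subst h
    obtain ⟨y, hy⟩ := D.exists_N_one
    have hy0 : y = 0 := funext fun i => i.elim0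
    rw [hy0, D.N_zero'] at hy
    exact one_ne_zero hy.symm
  · exact h

lemma N_lb : ∃ a : ℝ, 0 < a ∧ ∀ x, a * ‖x‖ ≤ D.N x :=
  N_lower D.N D.nonneg D.smul' D.add' D.m_pos D.eq_zero'

lemma N_pos {z : Fin m → ℝ} (hz : z ≠ 0) : 0 < D.N z :=
  (D.nonneg z).lt_of_ne fun h => hz ((D.eq_zero' z).1 h.symm)

lemma N_inv_smul_one {z : Fin m → ℝ} (hz : z ≠ 0) : D.N ((D.N z)⁻¹ • z) = 1 := by
  have hNz := D.N_pos hz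
  rw [D.smul', abs_of_pos (inv_pos.2 hNz), inv_mul_cancel₀ hNz.ne']

lemma dot_le_Nd_mul (w z : Fin m → ℝ) : dot w z ≤ D.Nd w * D.N z := by
  rcases eq_or_ne z 0 with rfl | hz
  · rw [dot_zero_right, D.N_zero', mul_zero]
  · have hNz := D.N_pos hz
    have h1 := D.Nd_ub w _ (D.N_inv_smul_one hz)
    rw [dot_smul_right] at h1
    calc dot w z = D.N z * ((D.N z)⁻¹ * dot w z) := by field_simp
      _ ≤ D.N z * D.Nd w := mul_le_mul_of_nonneg_left h1 hNz.le
      _ = D.Nd w * D.N z := mul_comm _ _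

lemma Nd_nonneg (w : Fin m → ℝ) : 0 ≤ D.Nd w := by
  obtain ⟨y, hy⟩ := D.exists_N_one
  have h1 := D.Nd_ub w y hy
  have h2 := D.Nd_ub w (-y) (by rw [D.N_neg']; exact hy)
  rw [dot_neg_right] at h2
  linarith

lemma Nd_zero : D.Nd 0 = 0 := by
  obtain ⟨y, _, h⟩ := D.Nd_mem 0
  rw [h, dot_zero_left]

lemma Nd_pos {w : Fin m → ℝ} (hw : w ≠ 0) : 0 < D.Nd w := by
  have h1 := D.Nd_ub w _ (D.N_inv_smul_one hw)
  rw [dot_smul_right] at h1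
  have h2 := dot_self_pos hw
  have hNw := D.N_pos hw
  calc (0:ℝ) < (D.N w)⁻¹ * dot w w := by positivity
    _ ≤ D.Nd w := h1

lemma Nd_smul_pos {c : ℝ} (hc : 0 < c) (w : Fin m → ℝ) : D.Nd (c • w) = c * D.Nd w := by
  refine le_antisymm ?_ ?_
  · obtain ⟨y, hy, h⟩ := D.Nd_mem (c • w)
    rw [h, dot_smul_left]
    exact mul_le_mul_of_nonneg_left (D.Nd_ub w y hy) hc.le
  · obtain ⟨y, hy, h⟩ := D.Nd_mem w
    have h2 := D.Nd_ub (c • w) y hy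
    rw [dot_smul_left, ← h] at h2
    exact h2

lemma Nd_add_le (u v : Fin m → ℝ) : D.Nd (u + v) ≤ D.Nd u + D.Nd v := by
  obtain ⟨y, hy, h⟩ := D.Nd_mem (u + v)
  rw [h, dot_add_left]
  exact add_le_add (D.Nd_ub u y hy) (D.Nd_ub v y hy)

lemma Nd_le_const : ∃ C : ℝ, 0 < C ∧ ∀ w, D.Nd w ≤ C * ‖w‖ := by
  obtain ⟨a, ha, hal⟩ := D.N_lb
  have hm' : (0:ℝ) < m := by exact_mod_cast D.m_pos
  refine ⟨(m : ℝ) / a, div_pos hm' ha, fun w => ?_⟩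
  obtain ⟨y, hy, h⟩ := D.Nd_mem w
  have hynorm : ‖y‖ ≤ 1 / a := by
    have h3 := hal y
    rw [hy] at h3
    rw [le_div_iff₀ ha]
    linarith
  have h4 := abs_dot_le w y
  have h2 : dot w y ≤ (m:ℝ) * ‖w‖ * ‖y‖ := le_trans (le_abs_self _) h4
  rw [h]
  calc dot w y ≤ (m:ℝ) * ‖w‖ * (1/a) := by
        refine le_trans h2 ?_
        have h5 : (0:ℝ) ≤ (m:ℝ) * ‖w‖ := by positivity
        exact mul_le_mul_of_nonneg_left hynorm h5
    _ = (m:ℝ) / a * ‖w‖ := by ring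

lemma Nd_cont : Continuous D.Nd := by
  obtain ⟨C, hC, hub⟩ := D.Nd_le_const
  refine (LipschitzWith.of_dist_le_mul (K := C.toNNReal) (f := D.Nd) fun x y => ?_).continuous
  have h1 : D.Nd x - D.Nd y ≤ D.Nd (x - y) := by
    have := D.Nd_add_le (x - y) y
    simp only [sub_add_cancel] at this
    linarith
  have h2 : D.Nd y - D.Nd x ≤ D.Nd (y - x) := by
    have := D.Nd_add_le (y - x) x
    simp only [sub_add_cancel] at this
    linarith
  have h3 := hub (x - y)
  have h4 := hub (y - x)
  rw [Real.dist_eq, dist_eq_norm, Real.coe_toNNReal _ hC.le]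
  have h5 : ‖y - x‖ = ‖x - y‖ := norm_sub_rev y x
  rw [abs_le]
  constructor
  · rw [h5] at h4; linarith
  · linarith

lemma norm_le_mul_Nd : ∃ b : ℝ, 0 < b ∧ ∀ w, ‖w‖ ≤ b * D.Nd w := by
  obtain ⟨b, hb, hub⟩ := D.N_ub
  refine ⟨b, hb, fun w => ?_⟩
  rcases eq_or_ne w 0 with rfl | hw
  · simp [D.Nd_zero]
  · have h1 := D.Nd_ub w _ (D.N_inv_smul_one hw)
    rw [dot_smul_right] at h1
    have hNw := D.N_pos hw
    have h2 : ‖w‖ ^ 2 ≤ dot w w := sq_norm_le_dot_self w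
    have h3 : ‖w‖ ^ 2 / D.N w ≤ D.Nd w := by
      rw [div_le_iff₀ hNw]
      calc ‖w‖^2 ≤ dot w w := h2
        _ = D.N w * ((D.N w)⁻¹ * dot w w) := by field_simp
        _ ≤ D.N w * D.Nd w := mul_le_mul_of_nonneg_left h1 hNw.le
        _ = D.Nd w * D.N w := mul_comm _ _
    have h4 := hub w
    have hwpos : 0 < ‖w‖ := norm_pos_iff.2 hw
    have h6 : ‖w‖^2 / (b * ‖w‖) ≤ ‖w‖^2 / D.N w :=
      div_le_div_of_nonneg_left (by positivity) hNw h4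
    have h7 : ‖w‖^2 / (b * ‖w‖) = ‖w‖ / b := by
      field_simp
    calc ‖w‖ = b * (‖w‖ / b) := by field_simp
      _ ≤ b * D.Nd w := by
          refine mul_le_mul_of_nonneg_left ?_ hb.le
          rw [← h7]; exact le_trans h6 h3
    
lemma isCompact_K : IsCompact {w : Fin m → ℝ | D.Nd w ≤ 1} := by
  obtain ⟨b, hb, hub⟩ := D.norm_le_mul_Nd
  refine (isCompact_closedBall (0 : Fin m → ℝ) b).of_isClosed_subset
    (isClosed_le D.Nd_cont continuous_const) fun w hw => ?_
  rw [mem_closedBall, dist_zero_right]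
  calc ‖w‖ ≤ b * D.Nd w := hub w
    _ ≤ b * 1 := mul_le_mul_of_nonneg_left hw hb.le
    _ = b := mul_one b

end NormData

lemma dot_sub_left (w x y : Fin m → ℝ) : dot (w - x) y = dot w y - dot x y := by
  simp [dot, sub_mul, Finset.sum_sub_distrib]

lemma dot_continuous2 : Continuous (fun p : (Fin m → ℝ) × (Fin m → ℝ) => dot p.1 p.2) := by
  unfold dot
  exact continuous_finset_sum _ fun i _ =>
    (((continuous_apply i).comp continuous_fst).mul ((continuous_apply i).comp continuous_snd))

namespace NormData
variable {m : ℕ} (D : NormData m)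

lemma dotK_le {w : Fin m → ℝ} (z : Fin m → ℝ) (hw : D.Nd w ≤ 1) : dot w z ≤ D.N z := by
  have h1 := D.dot_le_Nd_mul w z
  nlinarith [D.nonneg z]

lemma exists_norming (z : Fin m → ℝ) : ∃ w, D.Nd w ≤ 1 ∧ dot w z = D.N z := by
  rcases eq_or_ne z 0 with rfl | hz
  · exact ⟨0, by rw [D.Nd_zero]; norm_num, by rw [dot_zero_left, D.N_zero']⟩
  have hNz := D.N_pos hz
  set S : Set (Fin m → ℝ) := {y | D.N y < 1} with hS
  have hSopen : IsOpen S := isOpen_lt D.N_cont continuous_const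
  have hSconv : Convex ℝ S := by
    intro p hp q hq a b ha hb hab
    simp only [hS, mem_setOf_eq] at hp hq ⊢
    have h1 := N_convexCombo D.N D.smul' D.add' ha hb hab p q
    rcases eq_or_lt_of_le ha with h | h
    · have hb1 : b = 1 := by linarith
      rw [← h, hb1]
      simpa using hq
    · have h2 : a * D.N p < a := by nlinarith
      have h3 : b * D.N q ≤ b := by nlinarith
      linarith
  set z₀ := (D.N z)⁻¹ • z with hz₀def
  have hz₀ : D.N z₀ = 1 := D.N_inv_smul_one hz
  have hz₀notin : z₀ ∉ S := by simp [hS, hz₀]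
  obtain ⟨f, hf⟩ := geometric_hahn_banach_open_point hSconv hSopen hz₀notin
  set w₀ : Fin m → ℝ := fun i => f (fun j => if i = j then 1 else 0) with hw₀def
  have hfw : ∀ y, f y = dot w₀ y := by
    intro y
    conv_lhs => rw [pi_eq_sum_univ y]
    rw [map_sum]
    simp only [map_smul, smul_eq_mul]
    exact Finset.sum_congr rfl fun i _ => mul_comm _ _
  set c := f z₀ with hcdef
  have hc : 0 < c := by
    have h0 : (0 : Fin m → ℝ) ∈ S := by simp [hS, D.N_zero']
    have := hf 0 h0
    simpa using this
  have hub' : ∀ y, D.N y ≤ 1 → f y ≤ c := by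
    intro y hy
    by_contra hgt
    push_neg at hgt
    have hfy : 0 < f y := lt_trans hc hgt
    set s := (c + f y) / (2 * f y) with hsdef
    have hs0 : 0 < s := by positivity
    have hs1 : s < 1 := by rw [div_lt_one (by positivity)]; linarith
    have hmem : s • y ∈ S := by
      simp only [hS, mem_setOf_eq]
      rw [D.smul', abs_of_pos hs0]
      nlinarith [D.nonneg y]
    have hlt := hf _ hmem
    rw [map_smul, smul_eq_mul] at hlt
    have heq : s * f y = (c + f y) / 2 := by
      rw [hsdef]; field_simp
    rw [heq] at hlt
    linarith
  have hNdw₀ : D.Nd w₀ = c := by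
    refine le_antisymm ?_ ?_
    · obtain ⟨y₁, hy₁, h⟩ := D.Nd_mem w₀
      rw [h, ← hfw]
      exact hub' y₁ hy₁.le
    · have := D.Nd_ub w₀ z₀ hz₀
      rw [← hfw] at this
      exact this
  refine ⟨c⁻¹ • w₀, ?_, ?_⟩
  · rw [D.Nd_smul_pos (inv_pos.2 hc), hNdw₀, inv_mul_cancel₀ hc.ne']
  · rw [dot_smul_left, ← hfw]
    have hzz : z = (D.N z) • z₀ := by rw [hz₀def, smul_inv_smul₀ hNz.ne']
    have : f z = D.N z * c := by
      conv_lhs => rw [hzz]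
      rw [map_smul, smul_eq_mul, hcdef]
    rw [this]
    field_simp

variable (hstrict : ∀ x y : Fin m → ℝ, D.Nd x = 1 → D.Nd y = 1 → x ≠ y →
      ∀ s ∈ Set.Ioo (0 : ℝ) 1, D.Nd ((1 - s) • x + s • y) < 1)

lemma norming_Nd_one {z w : Fin m → ℝ} (hz : z ≠ 0) (hw : D.Nd w ≤ 1)
    (he : dot w z = D.N z) : D.Nd w = 1 := by
  have hNz := D.N_pos hz
  rcases eq_or_lt_of_le hw with h | h
  · exact h
  exfalso
  have hwne : w ≠ 0 := by
    intro h0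
    rw [h0, dot_zero_left] at he
    exact hNz.ne he
  have hNdw := D.Nd_pos hwne
  have h1 : D.Nd ((D.Nd w)⁻¹ • w) ≤ 1 := by
    rw [D.Nd_smul_pos (inv_pos.2 hNdw), inv_mul_cancel₀ hNdw.ne']
  have h2 := D.dotK_le z h1
  rw [dot_smul_left, he] at h2
  have h3 : 1 < (D.Nd w)⁻¹ := by
    rw [lt_inv_comm₀ one_pos hNdw]
    simpa using h
  nlinarith

include hstrict in
lemma norming_unique {z : Fin m → ℝ} (hz : z ≠ 0) {w₁ w₂ : Fin m → ℝ}
    (h₁ : D.Nd w₁ ≤ 1) (e₁ : dot w₁ z = D.N z)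
    (h₂ : D.Nd w₂ ≤ 1) (e₂ : dot w₂ z = D.N z) : w₁ = w₂ := by
  by_contra hne
  have hNz := D.N_pos hz
  have hn₁ := D.norming_Nd_one hz h₁ e₁
  have hn₂ := D.norming_Nd_one hz h₂ e₂
  have hu := hstrict w₁ w₂ hn₁ hn₂ hne (1/2) (by constructor <;> norm_num)
  set u := (1 - (1/2:ℝ)) • w₁ + (1/2:ℝ) • w₂ with hudef
  have hdotu : dot u z = D.N z := by
    rw [hudef, dot_add_left, dot_smul_left, dot_smul_left, e₁, e₂]
    ring
  have := D.norming_Nd_one hz hu.le hdotu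
  rw [this] at hu
  exact lt_irrefl _ hu

noncomputable def wsel (z : Fin m → ℝ) : Fin m → ℝ := Classical.choose (D.exists_norming z)

lemma wsel_le (z : Fin m → ℝ) : D.Nd (D.wsel z) ≤ 1 := (Classical.choose_spec (D.exists_norming z)).1

lemma wsel_dot (z : Fin m → ℝ) : dot (D.wsel z) z = D.N z :=
  (Classical.choose_spec (D.exists_norming z)).2

include hstrict in
lemma wsel_stable {z : Fin m → ℝ} (hz : z ≠ 0) :
    ∀ ε > (0:ℝ), ∃ δ > (0:ℝ), ∀ u : Fin m → ℝ, ‖u‖ < δ →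
      ∀ w', D.Nd w' ≤ 1 → dot w' (z + u) = D.N (z + u) → ‖w' - D.wsel z‖ ≤ ε := by
  intro ε hε
  by_contra hcon
  push_neg at hcon
  have hsel : ∀ n : ℕ, ∃ u : Fin m → ℝ, ‖u‖ < 1/(n+1) ∧ ∃ w', D.Nd w' ≤ 1 ∧
      dot w' (z + u) = D.N (z + u) ∧ ε < ‖w' - D.wsel z‖ := by
    intro n
    obtain ⟨u, hu, w', h1, h2, h3⟩ := hcon (1/(n+1)) (by positivity)
    exact ⟨u, hu, w', h1, h2, h3⟩
  choose u hu w hwK hwdot hwfar using hsel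
  obtain ⟨wstar, hwstarK, ψ, hψ, hwconv⟩ := D.isCompact_K.tendsto_subseq (fun n => hwK n)
  have huto : Tendsto (fun k => u (ψ k)) atTop (𝓝 (0 : Fin m → ℝ)) := by
    rw [tendsto_zero_iff_norm_tendsto_zero]
    refine squeeze_zero (fun k => norm_nonneg _) (fun k => ?_) tendsto_one_div_add_atTop_nhds_zero_nat
    refine le_trans (hu (ψ k)).le ?_
    have h1 : (k:ℝ) + 1 ≤ (ψ k : ℝ) + 1 := by
      have h0 : k ≤ ψ k := hψ.le_apply
      exact_mod_cast Nat.succ_le_succ h0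
    exact one_div_le_one_div_of_le (by positivity) h1
  have hzplus : Tendsto (fun k => z + u (ψ k)) atTop (𝓝 z) := by
    simpa using tendsto_const_nhds.add huto
  have hdot : Tendsto (fun k => dot (w (ψ k)) (z + u (ψ k))) atTop (𝓝 (dot wstar z)) :=
    (dot_continuous2.tendsto (wstar, z)).comp ((hwconv.comp tendsto_id).prodMk_nhds hzplus)
  have hNto : Tendsto (fun k => D.N (z + u (ψ k))) atTop (𝓝 (D.N z)) :=
    (D.N_cont.tendsto z).comp hzplus
  have hdot' : Tendsto (fun k => D.N (z + u (ψ k))) atTop (𝓝 (dot wstar z)) := by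
    have heq : (fun k => dot (w (ψ k)) (z + u (ψ k))) = fun k => D.N (z + u (ψ k)) :=
      funext fun k => hwdot (ψ k)
    rw [← heq]
    exact hdot
  have hdoteq : dot wstar z = D.N z := tendsto_nhds_unique hdot' hNto
  have hwstar_le : D.Nd wstar ≤ 1 := hwstarK
  have hws : wstar = D.wsel z :=
    D.norming_unique hstrict hz hwstar_le hdoteq (D.wsel_le z) (D.wsel_dot z)
  have T : Tendsto (fun k => ‖w (ψ k) - D.wsel z‖) atTop (𝓝 ‖wstar - D.wsel z‖) :=
    (hwconv.sub tendsto_const_nhds).norm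
  have hle : ε ≤ ‖wstar - D.wsel z‖ :=
    ge_of_tendsto T (Eventually.of_forall fun k => (hwfar (ψ k)).le)
  rw [hws, sub_self, norm_zero] at hle
  linarith

include hstrict in
lemma hasFDerivAt_N {z : Fin m → ℝ} (hz : z ≠ 0) :
    HasFDerivAt D.N (dotCLM (D.wsel z)) z := by
  rw [hasFDerivAt_iff_isLittleO_nhds_zero, Asymptotics.isLittleO_iff]
  intro ε hε
  have hε' : (0:ℝ) < ε / (m + 1) := by positivity
  obtain ⟨δ, hδ, hδp⟩ := D.wsel_stable hstrict hz (ε / (m + 1)) hε'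
  filter_upwards [Metric.ball_mem_nhds (0 : Fin m → ℝ) hδ] with v hv
  rw [mem_ball_zero_iff] at hv
  have hclose := hδp v hv (D.wsel (z + v)) (D.wsel_le (z + v)) (by rw [wsel_dot])
  have hlow : 0 ≤ D.N (z + v) - D.N z - dotCLM (D.wsel z) v := by
    have h1 : dot (D.wsel z) (z + v) ≤ D.N (z + v) := D.dotK_le (z + v) (D.wsel_le z)
    rw [dot_add_right, D.wsel_dot] at h1
    rw [dotCLM_apply]
    linarith
  have hhigh : D.N (z + v) - D.N z - dotCLM (D.wsel z) v ≤
      dot (D.wsel (z + v) - D.wsel z) v := by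
    have h1 : dot (D.wsel (z + v)) z ≤ D.N z := D.dotK_le z (D.wsel_le (z + v))
    have h2 := D.wsel_dot (z + v)
    rw [dot_add_right] at h2
    rw [dotCLM_apply, dot_sub_left]
    linarith
  have hbd : dot (D.wsel (z + v) - D.wsel z) v ≤ ε * ‖v‖ := by
    refine le_trans (le_abs_self _) (le_trans (abs_dot_le _ _) ?_)
    calc (m:ℝ) * ‖D.wsel (z + v) - D.wsel z‖ * ‖v‖
        ≤ (m:ℝ) * (ε / (m + 1)) * ‖v‖ := by
          have hmn : (0:ℝ) ≤ m := by positivity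
          have := mul_le_mul_of_nonneg_left hclose hmn
          exact mul_le_mul_of_nonneg_right this (norm_nonneg v)
      _ ≤ ε * ‖v‖ := by
          have hm1 : (m:ℝ) * (ε / (m + 1)) ≤ ε := by
            rw [mul_div_assoc']
            rw [div_le_iff₀ (by positivity)]
            nlinarith [Nat.cast_nonneg (α := ℝ) m]
          exact mul_le_mul_of_nonneg_right hm1 (norm_nonneg v)
  rw [Real.norm_eq_abs, abs_le]
  constructor
  · have : (0:ℝ) ≤ ε * ‖v‖ := by positivity
    linarith
  · linarith

include hstrict in
lemma hasFDerivAt_Nsq (k : ℝ) (z : Fin m → ℝ) :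
    ∃ L : (Fin m → ℝ) →L[ℝ] ℝ, HasFDerivAt (fun v => k * D.N v ^ 2) L z := by
  rcases eq_or_ne z 0 with rfl | hz
  · refine ⟨0, ?_⟩
    obtain ⟨b, hb, hub⟩ := D.N_ub
    rw [hasFDerivAt_iff_isLittleO_nhds_zero, Asymptotics.isLittleO_iff]
    intro c hc
    have hη : (0:ℝ) < c / (|k| * b^2 + 1) := by positivity
    filter_upwards [Metric.ball_mem_nhds (0 : Fin m → ℝ) hη] with v hv
    rw [mem_ball_zero_iff] at hv
    simp only [zero_add, D.N_zero', ContinuousLinearMap.zero_apply, sub_zero]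
    rw [Real.norm_eq_abs]
    have h1 : |k * D.N v ^ 2 - k * 0 ^ 2| = |k| * D.N v ^ 2 := by
      rw [show k * D.N v ^ 2 - k * 0 ^ 2 = k * D.N v ^2 by ring, abs_mul,
        abs_of_nonneg (pow_nonneg (D.nonneg v) 2)]
    rw [h1]
    have h2 : D.N v ≤ b * ‖v‖ := hub v
    have h3 : D.N v ^ 2 ≤ b^2 * ‖v‖^2 := by nlinarith [D.nonneg v, norm_nonneg v]
    calc |k| * D.N v ^ 2 ≤ |k| * (b^2 * ‖v‖^2) :=
          mul_le_mul_of_nonneg_left h3 (abs_nonneg k)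
      _ ≤ c * ‖v‖ := by
          have h4 : |k| * b^2 * ‖v‖ ≤ c := by
            rcases eq_or_lt_of_le (norm_nonneg v) with h | h
            · rw [← h]; simp; positivity
            · calc |k| * b^2 * ‖v‖ ≤ (|k| * b^2 + 1) * ‖v‖ := by nlinarith
                _ ≤ (|k| * b^2 + 1) * (c / (|k| * b^2 + 1)) := by
                    exact mul_le_mul_of_nonneg_left hv.le (by positivity)
                _ = c := by field_simp
          calc |k| * (b^2 * ‖v‖^2) = (|k| * b^2 * ‖v‖) * ‖v‖ := by ring
            _ ≤ c * ‖v‖ := mul_le_mul_of_nonneg_right h4 (norm_nonneg v)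
  · have hN := D.hasFDerivAt_N hstrict hz
    have h2 := (hN.mul hN).const_mul k
    refine ⟨k • (D.N z • dotCLM (D.wsel z) + D.N z • dotCLM (D.wsel z)), ?_⟩
    have heq : (fun v => k * D.N v ^ 2) = fun v => k * (D.N v * D.N v) := by
      funext v; ring
    rw [heq]
    exact h2

end NormData

section Envelope
variable {φ : (Fin m → ℝ) → ℝ}

lemma phi_continuous (hφ : ConvexOn ℝ Set.univ φ) : Continuous φ := by
  rw [← continuousOn_univ]
  exact hφ.continuousOn isOpen_univ

lemma exists_affine_minorant (hφ : ConvexOn ℝ Set.univ φ) :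
    ∃ (g : (Fin m → ℝ) →L[ℝ] ℝ) (b : ℝ), ∀ y, g y + b ≤ φ y := by
  have hφc := phi_continuous hφ
  set S : Set ((Fin m → ℝ) × ℝ) := {p | φ p.1 < p.2} with hS
  have hSopen : IsOpen S := isOpen_lt (hφc.comp continuous_fst) continuous_snd
  have hSconv : Convex ℝ S := by
    intro p hp q hq a b ha hb hab
    simp only [hS, mem_setOf_eq] at hp hq ⊢
    have h1 : φ (a • p.1 + b • q.1) ≤ a * φ p.1 + b * φ q.1 :=
      hφ.2 (mem_univ p.1) (mem_univ q.1) ha hb hab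
    have h2 : (a • p + b • q).1 = a • p.1 + b • q.1 := rfl
    have h3 : (a • p + b • q).2 = a * p.2 + b * q.2 := rfl
    rw [h2, h3]
    rcases eq_or_lt_of_le ha with h | h
    · have hb1 : b = 1 := by linarith
      rw [← h, hb1] at *
      simp only [zero_smul, zero_add, one_smul, zero_mul, one_mul] at h1 ⊢
      linarith
    · have h4 : a * φ p.1 < a * p.2 := by nlinarith
      have h5 : b * φ q.1 ≤ b * q.2 := by nlinarith
      linarith
  have hpt : ((0 : Fin m → ℝ), φ 0) ∉ S := by simp [hS]
  obtain ⟨f, hf⟩ := geometric_hahn_banach_open_point hSconv hSopen hpt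
  set g₀ : (Fin m → ℝ) →L[ℝ] ℝ := f.comp (ContinuousLinearMap.inl ℝ (Fin m → ℝ) ℝ) with hg₀
  set c : ℝ := f (0, 1) with hcdef
  have hsplit : ∀ (y : Fin m → ℝ) (r : ℝ), f (y, r) = g₀ y + r * c := by
    intro y r
    have h1 : (y, r) = ((y, 0) : (Fin m → ℝ) × ℝ) + (r • ((0 : Fin m → ℝ), (1:ℝ))) := by
      simp [Prod.ext_iff]
    rw [h1, map_add, map_smul]
    simp [hg₀, hcdef, ContinuousLinearMap.comp_apply, smul_eq_mul]
  have hc : c < 0 := by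
    have h1 : ((0 : Fin m → ℝ), φ 0 + 1) ∈ S := by simp [hS]
    have h2 := hf _ h1
    rw [hsplit, hsplit] at h2
    nlinarith
  have key : ∀ y, g₀ y + c * φ y ≤ g₀ 0 + c * φ 0 := by
    intro y
    by_contra h
    push_neg at h
    set d := (g₀ y + c * φ y) - (g₀ 0 + c * φ 0) with hd
    have hd0 : 0 < d := by rw [hd]; linarith
    have hc' : c ≠ 0 := ne_of_lt hc
    set s := d / (2 * -c) with hs
    have hs0 : 0 < s := div_pos hd0 (by linarith)
    have hmem : ((y, φ y + s) : (Fin m → ℝ) × ℝ) ∈ S := by simp [hS, hs0]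
    have h2 := hf _ hmem
    rw [hsplit, hsplit] at h2
    have hsc : s * -c = d / 2 := by
      rw [hs]
      field_simp
    nlinarith
  set e := -c with he
  have he0 : 0 < e := by rw [he]; linarith
  refine ⟨e⁻¹ • g₀, φ 0 - e⁻¹ * g₀ 0, fun y => ?_⟩
  have h1 := key y
  have h2 : e⁻¹ * g₀ y - e⁻¹ * g₀ 0 ≤ φ y - φ 0 := by
    rw [← mul_sub, inv_mul_le_iff₀ he0]
    have : c = -e := by rw [he]; ring
    rw [this] at h1
    nlinarith
  simp only [ContinuousLinearMap.smul_apply, smul_eq_mul]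
  linarith

variable (D : NormData m) {k : ℝ}

lemma exists_min (hφ : ConvexOn ℝ Set.univ φ) (hk : 0 < k) (x : Fin m → ℝ) :
    ∃ y₀, ∀ y, φ y₀ + k * D.N (x - y₀) ^ 2 ≤ φ y + k * D.N (x - y) ^ 2 := by
  obtain ⟨a, ha, hal⟩ := D.N_lb
  obtain ⟨g, b, hgb⟩ := exists_affine_minorant hφ
  have hφc := phi_continuous hφ
  set G := ‖g‖ with hG
  have hG0 : 0 ≤ G := norm_nonneg _
  have hgy : ∀ y : Fin m → ℝ, -(G * ‖y‖) ≤ g y := by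
    intro y
    have := g.le_opNorm y
    rw [Real.norm_eq_abs] at this
    have h2 := abs_le.1 this
    linarith [h2.1]
  set C := G + |b| + |φ x| + 1 with hC
  set R := ‖x‖ + (C + G * ‖x‖) / (k * a ^ 2) + 1 with hR
  have hRx : ‖x‖ ≤ R := by
    rw [hR]
    have : 0 ≤ (C + G * ‖x‖) / (k * a ^ 2) := by positivity
    linarith
  have hψc : Continuous (fun y => φ y + k * D.N (x - y) ^ 2) :=
    hφc.add (continuous_const.mul (((D.N_cont.comp (continuous_const.sub continuous_id))).pow 2))
  obtain ⟨y₀, hy₀mem, hy₀min⟩ := (isCompact_closedBall (0 : Fin m → ℝ) R).exists_isMinOn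
    ⟨x, by simpa [mem_closedBall, dist_zero_right] using hRx⟩ hψc.continuousOn
  refine ⟨y₀, fun y => ?_⟩
  rcases le_or_gt ‖y‖ R with hy | hy
  · exact isMinOn_iff.mp hy₀min y (by simpa [mem_closedBall, dist_zero_right] using hy)
  · -- y outside ball: value exceeds value at x
    have hxin : φ x + k * D.N (x - x) ^ 2 = φ x := by
      rw [sub_self, D.N_zero']
      ring
    have hstep : φ x + k * D.N (x - x) ^ 2 < φ y + k * D.N (x - y) ^ 2 := by
      rw [hxin]
      set u := ‖y‖ - ‖x‖ with hu
      rw [hR] at hy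
      have hdiv : 0 ≤ (C + G * ‖x‖) / (k * a ^ 2) := by positivity
      have hu1 : 1 ≤ u := by rw [hu]; linarith
      have hu2 : C + G * ‖x‖ < k * a ^ 2 * u := by
        have h3 : (C + G * ‖x‖) / (k * a ^ 2) < u := by rw [hu]; linarith
        rw [div_lt_iff₀ (by positivity)] at h3
        linarith [h3]
      have hnxy : u ≤ ‖x - y‖ := by
        have := norm_sub_norm_le y x
        have h4 : ‖y - x‖ = ‖x - y‖ := norm_sub_rev _ _
        rw [hu]
        linarith
      have hNxy : a * ‖x - y‖ ≤ D.N (x - y) := hal _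
      have hsq : (a * u) ^ 2 ≤ D.N (x - y) ^ 2 := by
        have h5 : a * u ≤ a * ‖x - y‖ := mul_le_mul_of_nonneg_left hnxy ha.le
        have h6 : 0 ≤ a * u := by positivity
        nlinarith [D.nonneg (x - y)]
      have hglb := hgb y
      have hgyl := hgy y
      have hbnd : -(G * ‖y‖) + b + k * (a * u)^2 ≤ φ y + k * D.N (x - y) ^ 2 := by
        have : k * (a*u)^2 ≤ k * D.N (x-y)^2 := mul_le_mul_of_nonneg_left hsq hk.le
        linarith
      have hyn : ‖y‖ = u + ‖x‖ := by rw [hu]; ring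
      have habs1 : b ≥ -|b| := neg_abs_le b
      have habs2 : φ x ≤ |φ x| := le_abs_self _
      have hCpos : 0 < C := by rw [hC]; positivity
      -- goal : φ x < φ y + k * N(x-y)^2
      have hfinal : φ x < -(G * ‖y‖) + b + k * (a * u)^2 := by
        rw [hyn]
        have hkau : k * (a*u)^2 = (k * a^2 * u) * u := by ring
        rw [hkau]
        have hu0 : (0:ℝ) < u := by linarith
        have hu2' : G + |b| + |φ x| + 1 + G * ‖x‖ < k * a ^ 2 * u := by
          rw [hC] at hu2; linarith
        have p1 : (G + |b| + |φ x| + 1 + G * ‖x‖) * u < (k * a ^ 2 * u) * u :=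
          mul_lt_mul_of_pos_right hu2' hu0
        have p2 : (|b| + |φ x| + 1) * 1 ≤ (|b| + |φ x| + 1) * u :=
          mul_le_mul_of_nonneg_left hu1 (by positivity)
        have p3 : (G * ‖x‖) * 1 ≤ (G * ‖x‖) * u :=
          mul_le_mul_of_nonneg_left hu1 (by positivity)
        nlinarith [p1, p2, p3]
      linarith
    exact le_of_lt (lt_of_le_of_lt
      (isMinOn_iff.mp hy₀min x (by simpa [mem_closedBall, dist_zero_right] using hRx)) hstep)
end Envelope

section Env2
variable {φ : (Fin m → ℝ) → ℝ} {k : ℝ}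

noncomputable def Qenv (D : NormData m) (φ : (Fin m → ℝ) → ℝ) (k : ℝ) (x : Fin m → ℝ) : ℝ :=
  ⨅ y, φ y + k * D.N (x - y) ^ 2

variable (D : NormData m)

lemma Qenv_spec (hφ : ConvexOn ℝ Set.univ φ) (hk : 0 < k) (x : Fin m → ℝ) :
    ∃ y₀, Qenv D φ k x = φ y₀ + k * D.N (x - y₀) ^ 2 ∧
      ∀ y, φ y₀ + k * D.N (x - y₀) ^ 2 ≤ φ y + k * D.N (x - y) ^ 2 := by
  obtain ⟨y₀, hy₀⟩ := exists_min D hφ hk x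
  have hbdd : BddBelow (Set.range fun y => φ y + k * D.N (x - y) ^ 2) := by
    refine ⟨φ y₀ + k * D.N (x - y₀) ^ 2, ?_⟩
    rintro r ⟨y, rfl⟩
    exact hy₀ y
  exact ⟨y₀, le_antisymm (ciInf_le hbdd y₀) (le_ciInf hy₀), hy₀⟩

lemma Qenv_le (hφ : ConvexOn ℝ Set.univ φ) (hk : 0 < k) (x y : Fin m → ℝ) :
    Qenv D φ k x ≤ φ y + k * D.N (x - y) ^ 2 := by
  obtain ⟨y₀, he, hm⟩ := Qenv_spec D hφ hk x
  rw [he]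
  exact hm y

lemma Qenv_convex (hφ : ConvexOn ℝ Set.univ φ) (hk : 0 < k) :
    ConvexOn ℝ Set.univ (Qenv D φ k) := by
  refine ⟨convex_univ, fun x₁ _ x₂ _ a b ha hb hab => ?_⟩
  obtain ⟨y₁, he₁, hm₁⟩ := Qenv_spec D hφ hk x₁
  obtain ⟨y₂, he₂, hm₂⟩ := Qenv_spec D hφ hk x₂
  calc Qenv D φ k (a • x₁ + b • x₂)
      ≤ φ (a • y₁ + b • y₂) + k * D.N ((a • x₁ + b • x₂) - (a • y₁ + b • y₂)) ^ 2 :=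
        Qenv_le D hφ hk _ _
    _ ≤ (a * φ y₁ + b * φ y₂) + k * (a * D.N (x₁ - y₁) ^ 2 + b * D.N (x₂ - y₂) ^ 2) := by
        have hid : (a • x₁ + b • x₂) - (a • y₁ + b • y₂) = a • (x₁ - y₁) + b • (x₂ - y₂) := by
          rw [smul_sub, smul_sub]; abel
        rw [hid]
        have h1 := Nsq_convexCombo D.N D.nonneg D.smul' D.add' ha hb hab (x₁ - y₁) (x₂ - y₂)
        have h2 := hφ.2 (Set.mem_univ y₁) (Set.mem_univ y₂) ha hb hab
        have h3 := mul_le_mul_of_nonneg_left h1 hk.le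
        exact add_le_add h2 h3
    _ = a * (φ y₁ + k * D.N (x₁ - y₁) ^ 2) + b * (φ y₂ + k * D.N (x₂ - y₂) ^ 2) := by ring
    _ = a * Qenv D φ k x₁ + b * Qenv D φ k x₂ := by rw [he₁, he₂]

lemma Qenv_hasFDerivAt
    (hstrict : ∀ x y : Fin m → ℝ, D.Nd x = 1 → D.Nd y = 1 → x ≠ y →
      ∀ s ∈ Set.Ioo (0 : ℝ) 1, D.Nd ((1 - s) • x + s • y) < 1)
    (hφ : ConvexOn ℝ Set.univ φ) (hk : 0 < k) (x : Fin m → ℝ) :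
    ∃ L : (Fin m → ℝ) →L[ℝ] ℝ, HasFDerivAt (Qenv D φ k) L x := by
  obtain ⟨y₀, he, hm⟩ := Qenv_spec D hφ hk x
  obtain ⟨L, hL⟩ := D.hasFDerivAt_Nsq hstrict k (x - y₀)
  refine ⟨L, ?_⟩
  rw [hasFDerivAt_iff_isLittleO_nhds_zero] at hL ⊢
  rw [Asymptotics.isLittleO_iff] at hL ⊢
  intro c hc
  have h1 := hL (half_pos hc)
  have hneg : Tendsto (fun u : Fin m → ℝ => -u) (𝓝 0) (𝓝 0) := by
    simpa using (continuous_neg.tendsto (0 : Fin m → ℝ))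
  have h2 := hneg.eventually h1
  filter_upwards [h1, h2] with u e1 e2
  simp only [norm_neg] at e2
  have hup : ∀ v : Fin m → ℝ, Qenv D φ k (x + v) - Qenv D φ k x - L v ≤
      k * D.N ((x - y₀) + v) ^ 2 - k * D.N (x - y₀) ^ 2 - L v := by
    intro v
    have q1 : Qenv D φ k (x + v) ≤ φ y₀ + k * D.N ((x + v) - y₀) ^ 2 := Qenv_le D hφ hk _ _
    have q2 : (x + v) - y₀ = (x - y₀) + v := by abel
    rw [q2] at q1
    rw [he]
    linarith
  have hconv : 0 ≤ (Qenv D φ k (x + u) - Qenv D φ k x - L u) +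
      (Qenv D φ k (x + -u) - Qenv D φ k x - L (-u)) := by
    have hcvx := (Qenv_convex D hφ hk).2 (Set.mem_univ (x + u)) (Set.mem_univ (x + -u))
      (by norm_num : (0:ℝ) ≤ 1/2) (by norm_num : (0:ℝ) ≤ 1/2) (by norm_num)
    have hmid : (1/2 : ℝ) • (x + u) + (1/2 : ℝ) • (x + -u) = x := by
      rw [smul_add, smul_add]
      rw [show ((1:ℝ)/2) • x + ((1:ℝ)/2) • u + (((1:ℝ)/2) • x + ((1:ℝ)/2) • (-u))
        = (((1:ℝ)/2) • x + ((1:ℝ)/2) • x) + (((1:ℝ)/2) • u + ((1:ℝ)/2) • (-u)) from by abel]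
      rw [smul_neg, add_neg_cancel, add_zero, ← add_smul]
      norm_num
    rw [hmid] at hcvx
    simp only [smul_eq_mul] at hcvx
    rw [map_neg]
    linarith
  have k1 := hup u
  have k2 := hup (-u)
  rw [Real.norm_eq_abs, abs_le]
  rw [Real.norm_eq_abs] at e1 e2
  have e1' : k * D.N ((x - y₀) + u) ^ 2 - k * D.N (x - y₀) ^ 2 - L u ≤ c/2 * ‖u‖ :=
    le_trans (le_abs_self _) e1
  have e2' : k * D.N ((x - y₀) + -u) ^ 2 - k * D.N (x - y₀) ^ 2 - L (-u) ≤ c/2 * ‖u‖ :=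
    le_trans (le_abs_self _) e2
  constructor
  · have hg1 : Qenv D φ k (x + -u) - Qenv D φ k x - L (-u) ≤ c/2 * ‖u‖ := le_trans k2 e2'
    have := hconv
    nlinarith [mul_nonneg hc.le (norm_nonneg u)]
  · have : Qenv D φ k (x + u) - Qenv D φ k x - L u ≤ c/2 * ‖u‖ := le_trans k1 e1'
    nlinarith [mul_nonneg hc.le (norm_nonneg u)]

end Env2

section Env3
variable {φ : (Fin m → ℝ) → ℝ} {k : ℝ} (D : NormData m)

lemma Qenv_contDiff
    (hstrict : ∀ x y : Fin m → ℝ, D.Nd x = 1 → D.Nd y = 1 → x ≠ y →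
      ∀ s ∈ Set.Ioo (0 : ℝ) 1, D.Nd ((1 - s) • x + s • y) < 1)
    (hφ : ConvexOn ℝ Set.univ φ) (hk : 0 < k) :
    ContDiff ℝ 1 (Qenv D φ k) := by
  have hQconv := Qenv_convex D hφ hk
  have hQcont : Continuous (Qenv D φ k) := by
    rw [← continuousOn_univ]
    exact hQconv.continuousOn isOpen_univ
  choose L hL using Qenv_hasFDerivAt D hstrict hφ hk
  have hdiff : Differentiable ℝ (Qenv D φ k) := fun x => (hL x).differentiableAt
  have hfd : ∀ x, fderiv ℝ (Qenv D φ k) x = L x := fun x => (hL x).fderiv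
  -- directional slope limit
  have hlineTend : ∀ (x v : Fin m → ℝ),
      Tendsto (fun s : ℝ => (Qenv D φ k (x + s • v) - Qenv D φ k x) / s)
        (𝓝[>] (0:ℝ)) (𝓝 (L x v)) := by
    intro x v
    have hc : HasDerivAt (fun s : ℝ => x + s • v) v 0 := by
      simpa using ((hasDerivAt_id (0:ℝ)).smul_const v).const_add x
    have hLx : HasFDerivAt (Qenv D φ k) (L x) (x + (0:ℝ) • v) := by
      simpa using hL x
    have hcomp : HasDerivAt (fun s : ℝ => Qenv D φ k (x + s • v)) (L x v) 0 :=
      hLx.comp_hasDerivAt (f := fun s : ℝ => x + s • v) 0 hc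
    rw [hasDerivAt_iff_tendsto_slope] at hcomp
    have h1 : Tendsto (slope (fun s : ℝ => Qenv D φ k (x + s • v)) 0)
        (𝓝[>] (0:ℝ)) (𝓝 (L x v)) :=
      hcomp.mono_left (nhdsWithin_mono _ fun s hs => ne_of_gt hs)
    refine h1.congr fun s => ?_
    rw [slope_def_field]
    simp [zero_smul]
  -- subgradient inequality
  have hsub : ∀ x z : Fin m → ℝ, L x (z - x) ≤ Qenv D φ k z - Qenv D φ k x := by
    intro x z
    refine le_of_tendsto (hlineTend x (z - x)) ?_
    filter_upwards [Ioo_mem_nhdsGT (zero_lt_one : (0:ℝ) < 1)] with s hs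
    have hcvx := hQconv.2 (Set.mem_univ x) (Set.mem_univ z)
      (le_of_lt (by linarith [hs.2] : (0:ℝ) < 1 - s)) hs.1.le (by ring)
    have hid : (1 - s) • x + s • z = x + s • (z - x) := by
      rw [sub_smul, one_smul, smul_sub]; abel
    rw [hid] at hcvx
    simp only [smul_eq_mul] at hcvx
    rw [div_le_iff₀ hs.1]
    nlinarith [hcvx]
  -- local bound on gradients
  have hLbound : ∀ x₀ : Fin m → ℝ, ∃ M : ℝ, 0 ≤ M ∧ ∀ x ∈ closedBall x₀ 1, ‖L x‖ ≤ M := by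
    intro x₀
    obtain ⟨M₁, hM₁⟩ := (isCompact_closedBall x₀ 2).exists_bound_of_continuousOn
      hQcont.continuousOn
    have hM₁0 : 0 ≤ M₁ := le_trans (norm_nonneg _) (hM₁ x₀ (mem_closedBall_self (by norm_num)))
    refine ⟨2 * M₁, by linarith, fun x hx => ?_⟩
    refine ContinuousLinearMap.opNorm_le_bound _ (by linarith) fun v => ?_
    rcases eq_or_ne v 0 with rfl | hv
    · simp
    · have hvn : 0 < ‖v‖ := norm_pos_iff.2 hv
      set u := ‖v‖⁻¹ • v with hu
      have hun : ‖u‖ = 1 := by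
        rw [hu, norm_smul, Real.norm_eq_abs, abs_of_pos (inv_pos.2 hvn), inv_mul_cancel₀ hvn.ne']
      have hmem1 : x + u ∈ closedBall x₀ 2 := by
        rw [mem_closedBall] at hx ⊢
        calc dist (x + u) x₀ ≤ dist (x + u) x + dist x x₀ := dist_triangle _ _ _
          _ ≤ 1 + 1 := by
              rw [dist_eq_norm]
              simp only [add_sub_cancel_left]
              rw [hun]
              exact add_le_add le_rfl hx
          _ = 2 := by norm_num
      have hmem2 : x - u ∈ closedBall x₀ 2 := by
        rw [mem_closedBall] at hx ⊢
        calc dist (x - u) x₀ ≤ dist (x - u) x + dist x x₀ := dist_triangle _ _ _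
          _ ≤ 1 + 1 := by
              rw [dist_eq_norm]
              simp only [sub_sub_cancel_left, norm_neg]
              rw [hun]
              exact add_le_add le_rfl hx
          _ = 2 := by norm_num
      have hxmem : x ∈ closedBall x₀ 2 := by
        rw [mem_closedBall] at hx ⊢
        linarith
      have hQx := hM₁ x hxmem
      have hQ1 := hM₁ _ hmem1
      have hQ2 := hM₁ _ hmem2
      rw [Real.norm_eq_abs] at hQx hQ1 hQ2
      have b1 : L x u ≤ 2 * M₁ := by
        have h := hsub x (x + u)
        simp only [add_sub_cancel_left] at h
        have := abs_le.1 hQx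
        have := abs_le.1 hQ1
        linarith [(abs_le.1 hQx).1, (abs_le.1 hQ1).2]
      have b2 : L x (-u) ≤ 2 * M₁ := by
        have h := hsub x (x - u)
        have hz : x - u - x = -u := by abel
        rw [hz] at h
        linarith [(abs_le.1 hQx).1, (abs_le.1 hQ2).2]
      have habs : |L x u| ≤ 2 * M₁ := by
        rw [abs_le]
        constructor
        · rw [map_neg] at b2; linarith
        · exact b1
      have hval : L x v = ‖v‖ * L x u := by
        rw [hu, map_smul, smul_eq_mul]
        field_simp
      rw [hval, Real.norm_eq_abs, abs_mul, abs_of_pos hvn, mul_comm]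
      exact mul_le_mul_of_nonneg_right habs hvn.le
  -- continuity of x ↦ L x
  have hLcont : Continuous L := by
    rw [continuous_iff_seqContinuous]
    intro xs x₀ hxs
    show Tendsto (fun n => L (xs n)) atTop (𝓝 (L x₀))
    apply tendsto_of_subseq_tendsto
    intro ns hns
    have hys : Tendsto (fun n => xs (ns n)) atTop (𝓝 x₀) := hxs.comp hns
    obtain ⟨M, hM0, hM⟩ := hLbound x₀
    obtain ⟨n₀, hn₀⟩ := eventually_atTop.1 (hys.eventually_mem (closedBall_mem_nhds x₀ one_pos))
    have hGmem : ∀ j : ℕ, L (xs (ns (n₀ + j))) ∈ closedBall (0 : (Fin m → ℝ) →L[ℝ] ℝ) M := by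
      intro j
      rw [mem_closedBall_zero_iff]
      exact hM _ (hn₀ (n₀ + j) (Nat.le_add_right _ _))
    obtain ⟨Ginf, hGmem', ms, hms, hGconv⟩ :=
      (isCompact_closedBall (0 : (Fin m → ℝ) →L[ℝ] ℝ) M).tendsto_subseq hGmem
    have hidx : Tendsto (fun j => n₀ + ms j) atTop atTop :=
      tendsto_atTop_mono (fun j => Nat.le_add_left (ms j) n₀) hms.tendsto_atTop
    have hysm : Tendsto (fun j => xs (ns (n₀ + ms j))) atTop (𝓝 x₀) := hys.comp hidx
    have happ : ∀ z : Fin m → ℝ,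
        Tendsto (fun j => (L (xs (ns (n₀ + ms j)))) (z - xs (ns (n₀ + ms j))))
        atTop (𝓝 (Ginf (z - x₀))) := by
      intro z
      have hpair : Tendsto (fun j => ((L (xs (ns (n₀ + ms j)))), z - xs (ns (n₀ + ms j))))
          atTop (𝓝 (Ginf, z - x₀)) := hGconv.prodMk_nhds (tendsto_const_nhds.sub hysm)
      exact (isBoundedBilinearMap_apply.continuous.tendsto (Ginf, z - x₀)).comp hpair
    have hkey : ∀ z, Ginf (z - x₀) ≤ Qenv D φ k z - Qenv D φ k x₀ := by
      intro z
      have hQt : Tendsto (fun j => Qenv D φ k z - Qenv D φ k (xs (ns (n₀ + ms j)))) atTop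
          (𝓝 (Qenv D φ k z - Qenv D φ k x₀)) :=
        tendsto_const_nhds.sub ((hQcont.tendsto x₀).comp hysm)
      exact le_of_tendsto_of_tendsto' (happ z) hQt fun j => hsub _ z
    have hGeq : Ginf = L x₀ := by
      have hle : ∀ v, Ginf v ≤ L x₀ v := by
        intro v
        refine ge_of_tendsto (hlineTend x₀ v) ?_
        filter_upwards [self_mem_nhdsWithin] with s hs
        have hs0 : (0:ℝ) < s := hs
        have h1 := hkey (x₀ + s • v)
        rw [add_sub_cancel_left, map_smul, smul_eq_mul] at h1
        rw [le_div_iff₀ hs0]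
        calc Ginf v * s = s * Ginf v := mul_comm _ _
          _ ≤ _ := h1
      refine ContinuousLinearMap.ext fun v => le_antisymm (hle v) ?_
      have h2 := hle (-v)
      rw [map_neg, map_neg] at h2
      linarith
    exact ⟨fun j => n₀ + ms j, hGeq ▸ hGconv⟩
  have hfderiv_cont : Continuous fun x => fderiv ℝ (Qenv D φ k) x := by
    have heq : (fun x => fderiv ℝ (Qenv D φ k) x) = L := funext hfd
    rw [heq]
    exact hLcont
  rw [contDiff_one_iff_fderiv]
  exact ⟨hdiff, hfderiv_cont⟩

end Env3

end Stmt12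

/-- Let `N` be a norm on `ℝᵐ` whose dual norm `Nd` (defined via
the dot product pairing) is strictly convex. Then for every convex
`φ : ℝᵐ → ℝ` and every `t > 0`, the inf-convolution
`Q_tφ(x) = inf_y (φ(y) + (1/(2t)) N(x−y)²)` is convex and C¹-smooth. -/
theorem stmt_12 {m : ℕ} (N : (Fin m → ℝ) → ℝ)
    (hN_nonneg : ∀ x, 0 ≤ N x)
    (hN_eq_zero : ∀ x, N x = 0 ↔ x = 0)
    (hN_smul : ∀ (c : ℝ) (x), N (c • x) = |c| * N x)
    (hN_add : ∀ x y, N (x + y) ≤ N x + N y)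
    (Nd : (Fin m → ℝ) → ℝ)
    (hNd : ∀ x, IsGreatest {r : ℝ | ∃ y, N y = 1 ∧ r = ∑ i, x i * y i} (Nd x))
    (hstrict : ∀ x y : Fin m → ℝ, Nd x = 1 → Nd y = 1 → x ≠ y →
      ∀ s ∈ Set.Ioo (0 : ℝ) 1, Nd ((1 - s) • x + s • y) < 1)
    (φ : (Fin m → ℝ) → ℝ) (hφ : ConvexOn ℝ Set.univ φ) (t : ℝ) (ht : 0 < t) :
    ConvexOn ℝ Set.univ
        (fun x => ⨅ y : Fin m → ℝ, (φ y + (1 / (2 * t)) * (N (x - y)) ^ 2)) ∧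
      ContDiff ℝ 1
        (fun x => ⨅ y : Fin m → ℝ, (φ y + (1 / (2 * t)) * (N (x - y)) ^ 2)) := by
  have hk : (0:ℝ) < 1 / (2 * t) := by positivity
  let D : Stmt12.NormData m := ⟨N, Nd, hN_nonneg, hN_eq_zero, hN_smul, hN_add, hNd⟩
  exact ⟨Stmt12.Qenv_convex D hφ hk, Stmt12.Qenv_contDiff D hstrict hφ hk⟩
end

section
/- Let f : ℝᵐ → ℝ be a concave C¹-smooth function that is (λ'/2)‖·‖²-convex, meaning f = P_{1/λ'} Q_{1/λ'} f where Q_s f(x) = inf_y (f(y) + (1/(2s))‖x−y‖²) and P_s g(x) = sup_y (g(y) − (1/(2s))‖x−y‖²). Then for every λ > λ' and every x ∈ ℝᵐ, f(x) − Q_{1/λ} f(x) ≤ (1/(2(λ − λ'))) ‖∇f(x)‖*². -/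
/-!
Pick `y` attaining the supremum `f x = sup_y (Q_{1/λ'} f (y) - (λ'/2) N(x - y)²)` up to `δ²`. Then
`x` minimises `z ↦ f z + (λ'/2) N(y - z)²` up to `δ²`. Testing this at the point `x + δ (y - x)`
against the concavity bound `f z ≤ f x + ∇f(x)(z - x)` shows that `(λ' N(y - x))²` exceeds
`‖∇f(x)‖*²` by at most `O(δ)`. For any `z`, the triangle inequality
`N(y - z) ≤ N(y - x) + N(x - z)` then gives
`f z + (λ/2) N(x - z)² ≥ f x - δ² - (λ' N(y - x))² / (2(λ - λ'))`, and `δ → 0` concludes.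
-/

open Set Filter Topology

/-- The paper's `Q_{1/lam} f`; it is `0` when the infimum is not bounded below. -/
noncomputable def moreauEnvelope {E : Type*} [Sub E] (N : E → ℝ) (lam : ℝ) (f : E → ℝ) (x : E) :
    ℝ :=
  ⨅ y, f y + lam / 2 * N (x - y) ^ 2

theorem moreauEnvelope_le {E : Type*} [Sub E] {N f : E → ℝ} {lam : ℝ} {x : E}
    (h : BddBelow (range fun y => f y + lam / 2 * N (x - y) ^ 2)) (y : E) :
    moreauEnvelope N lam f x ≤ f y + lam / 2 * N (x - y) ^ 2 :=
  ciInf_le h y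

theorem bddBelow_range_add_mul_sq {E : Type*} [SeminormedAddCommGroup E] {N f : E → ℝ}
    {K : NNReal} (hf : LipschitzWith K f) {c : ℝ} (hc : 0 < c) (hcN : ∀ v, c * ‖v‖ ≤ N v) {μ : ℝ} (hμ : 0 < μ)
    (y : E) :
    BddBelow (range fun z => f z + μ / 2 * N (y - z) ^ 2) := by
  refine ⟨f y - (K / c) ^ 2 / (2 * μ), ?_⟩
  rintro _ ⟨z, rfl⟩
  have hlip : f y - f z ≤ K * ‖y - z‖ :=
    (le_abs_self _).trans (by simpa [Real.dist_eq, dist_eq_norm] using hf.dist_le_mul y z)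
  have hnorm : K * ‖y - z‖ ≤ K / c * N (y - z) := by
    rw [div_mul_eq_mul_div, le_div_iff₀ hc, mul_assoc]
    exact mul_le_mul_of_nonneg_left (by linarith [hcN (y - z)]) K.coe_nonneg
  have hquad : K / c * N (y - z) - μ / 2 * N (y - z) ^ 2 ≤ (K / c) ^ 2 / (2 * μ) := by
    rw [le_div_iff₀ (by positivity)]
    nlinarith [sq_nonneg (μ * N (y - z) - K / c)]
  simp only
  linarith

theorem sq_le_of_mul_sq_le {μ g a δ : ℝ} (hμ : 0 ≤ μ) (hδ0 : 0 < δ) (hδ1 : δ ≤ 1)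
    (h : μ / 2 * a ^ 2 * (δ * (2 - δ)) ≤ δ * (g * a) + δ ^ 2) :
    (μ * a) ^ 2 ≤ (g ^ 2 + 2 * μ * δ) * (1 + δ) ^ 2 := by
  have hθ : 1 ≤ (1 - δ / 2) * (1 + δ) := by nlinarith
  have h₁ : (1 - δ / 2) * (μ * a) ^ 2 ≤ g * (μ * a) + μ * δ := by
    have h' : μ * a ^ 2 * (1 - δ / 2) ≤ g * a + δ := le_of_mul_le_mul_left (by linarith) hδ0
    linarith [mul_le_mul_of_nonneg_left h' hμ]
  have h₂ : ((1 - δ / 2) * (μ * a)) ^ 2 ≤ g ^ 2 + 2 * μ * δ := by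
    nlinarith [sq_nonneg (g - (1 - δ / 2) * (μ * a))]
  calc (μ * a) ^ 2 ≤ ((1 - δ / 2) * (1 + δ)) ^ 2 * (μ * a) ^ 2 :=
        le_mul_of_one_le_left (sq_nonneg _) (one_le_pow₀ hθ)
    _ = ((1 - δ / 2) * (μ * a)) ^ 2 * (1 + δ) ^ 2 := by ring
    _ ≤ (g ^ 2 + 2 * μ * δ) * (1 + δ) ^ 2 := by gcongr

section

variable {E : Type*} [NormedAddCommGroup E] [NormedSpace ℝ E]

theorem apply_sub_rev {N : E → ℝ} (hN_smul : ∀ (c : ℝ) v, N (c • v) = |c| * N v) (x y : E) :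
    N (x - y) = N (y - x) := by
  rw [← neg_sub, ← neg_one_smul ℝ (y - x), hN_smul]
  simp

theorem exists_pos_mul_norm_le [FiniteDimensional ℝ E] {N : E → ℝ} (hN_nonneg : ∀ v, 0 ≤ N v)
    (hN_eq_zero : ∀ v, N v = 0 → v = 0) (hN_smul : ∀ (c : ℝ) v, N (c • v) = |c| * N v)
    (hN_add : ∀ v w, N (v + w) ≤ N v + N w) : ∃ c > 0, ∀ v, c * ‖v‖ ≤ N v := by
  have hconv : ConvexOn ℝ univ N := ⟨convex_univ, fun v _ w _ a b ha hb _ => by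
    simpa only [hN_smul, abs_of_nonneg ha, abs_of_nonneg hb, smul_eq_mul] using
      hN_add (a • v) (b • w)⟩
  have hpos : ∀ v ∈ Metric.sphere (0 : E) 1, 0 < N v := fun v hv =>
    (hN_nonneg v).lt_of_ne' fun h => by simp [hN_eq_zero v h] at hv
  obtain ⟨c, hc, hcN⟩ := (isCompact_sphere (0 : E) 1).exists_forall_le'
    ((hconv.continuousOn isOpen_univ).mono (subset_univ _)) hpos
  refine ⟨c, hc, fun v => ?_⟩
  rcases eq_or_ne v 0 with rfl | hv
  · simpa using hN_nonneg 0
  · have hv' := norm_pos_iff.2 hv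
    have := hcN (‖v‖⁻¹ • v) (by simp [norm_smul, hv])
    rwa [hN_smul, abs_of_pos (inv_pos.2 hv'), le_inv_mul_iff₀ hv', mul_comm] at this

theorem apply_le_mul_of_mem_upperBounds {N : E → ℝ} (hN_nonneg : ∀ v, 0 ≤ N v)
    (hN_eq_zero : ∀ v, N v = 0 → v = 0) (hN_smul : ∀ (c : ℝ) v, N (c • v) = |c| * N v)
    {L : E →L[ℝ] ℝ} {g : ℝ} (hg : g ∈ upperBounds {r | ∃ u, N u = 1 ∧ r = L u}) (v : E) :
    L v ≤ g * N v := by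
  rcases (hN_nonneg v).eq_or_lt with h | h
  · obtain rfl := hN_eq_zero v h.symm
    simp [← h]
  · have hu : N ((N v)⁻¹ • v) = 1 := by
      rw [hN_smul, abs_of_pos (inv_pos.2 h), inv_mul_cancel₀ h.ne']
    have := hg ⟨_, hu, rfl⟩
    rwa [map_smul, smul_eq_mul, inv_mul_le_iff₀ h, mul_comm] at this

theorem ConcaveOn.le_add_fderiv {f : E → ℝ} (hf : ConcaveOn ℝ univ f) {x : E}
    (hd : DifferentiableAt ℝ f x) (z : E) : f z ≤ f x + fderiv ℝ f x (z - x) := by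
  set φ : ℝ → ℝ := fun t => f (x + t • (z - x))
  have hφ : ConcaveOn ℝ univ φ := by
    simpa [φ, Function.comp_def, AffineMap.lineMap_apply_module', add_comm] using
      hf.comp_affineMap (AffineMap.lineMap x z : ℝ →ᵃ[ℝ] E)
  have hφ' : HasDerivAt φ (fderiv ℝ f x (z - x)) 0 := by
    have hline : HasDerivAt (fun t : ℝ => x + t • (z - x)) (z - x) 0 := by
      simpa using ((hasDerivAt_id (0 : ℝ)).smul_const (z - x)).const_add x
    exact hd.hasFDerivAt.comp_hasDerivAt_of_eq 0 hline (by simp)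
  have := hφ.slope_le_of_hasDerivAt (mem_univ 0) (mem_univ 1) zero_lt_one hφ'
  simp only [slope, φ, sub_zero, zero_smul, add_zero, one_smul, add_sub_cancel, inv_one,
    vsub_eq_sub] at this
  linarith

variable {N f : E → ℝ} {x y : E} {μ ε : ℝ}

theorem mul_sq_le_of_almost_min (hN_smul : ∀ (c : ℝ) v, N (c • v) = |c| * N v)
    (hf : ConcaveOn ℝ univ f) (hd : DifferentiableAt ℝ f x) {g : ℝ}
    (hD : ∀ v, fderiv ℝ f x v ≤ g * N v)
    (hmin : ∀ z, f x + μ / 2 * N (x - y) ^ 2 - ε ≤ f z + μ / 2 * N (y - z) ^ 2) {t : ℝ}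
    (ht0 : 0 ≤ t) (ht1 : t ≤ 1) :
    μ / 2 * N (x - y) ^ 2 * (t * (2 - t)) ≤ t * (g * N (x - y)) + ε := by
  set z := x + t • (y - x)
  have hz : f z ≤ f x + t * (g * N (x - y)) := by
    have := hf.le_add_fderiv hd z
    rw [show z - x = t • (y - x) by simp [z], map_smul, smul_eq_mul] at this
    have := mul_le_mul_of_nonneg_left (hD (y - x)) ht0
    rw [← apply_sub_rev hN_smul] at this
    linarith
  have hyz : N (y - z) = (1 - t) * N (x - y) := by
    rw [show y - z = (1 - t) • (y - x) by simp only [z]; module, hN_smul,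
      abs_of_nonneg (by linarith), apply_sub_rev hN_smul]
  have := hmin z
  rw [hyz] at this
  linarith

theorem sub_le_add_mul_sq_of_almost_min (hN_nonneg : ∀ v, 0 ≤ N v)
    (hN_smul : ∀ (c : ℝ) v, N (c • v) = |c| * N v) (hN_add : ∀ v w, N (v + w) ≤ N v + N w)
    (hμ : 0 ≤ μ) {lam : ℝ} (hlam : μ < lam)
    (hmin : ∀ z, f x + μ / 2 * N (x - y) ^ 2 - ε ≤ f z + μ / 2 * N (y - z) ^ 2) (z : E) :
    f x - ε - (μ * N (x - y)) ^ 2 / (2 * (lam - μ)) ≤ f z + lam / 2 * N (x - z) ^ 2 := by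
  have htri : N (y - z) ≤ N (x - y) + N (x - z) := by
    simpa [apply_sub_rev hN_smul x y] using hN_add (y - x) (x - z)
  have hsq := mul_le_mul_of_nonneg_left (pow_le_pow_left₀ (hN_nonneg _) htri 2)
    (by positivity : 0 ≤ μ / 2)
  have hquad : μ * N (x - y) * N (x - z) - (lam - μ) / 2 * N (x - z) ^ 2 ≤
      (μ * N (x - y)) ^ 2 / (2 * (lam - μ)) := by
    rw [le_div_iff₀ (by linarith)]
    nlinarith [sq_nonneg ((lam - μ) * N (x - z) - μ * N (x - y))]
  nlinarith [hmin z]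

theorem sub_moreauEnvelope_le_of_almost_min (hN_nonneg : ∀ v, 0 ≤ N v)
    (hN_smul : ∀ (c : ℝ) v, N (c • v) = |c| * N v) (hN_add : ∀ v w, N (v + w) ≤ N v + N w)
    (hf : ConcaveOn ℝ univ f) (hd : DifferentiableAt ℝ f x) {g : ℝ}
    (hD : ∀ v, fderiv ℝ f x v ≤ g * N v) (hμ : 0 ≤ μ) {lam δ : ℝ} (hlam : μ < lam)
    (hδ0 : 0 < δ) (hδ1 : δ ≤ 1)
    (hmin : ∀ z, f x + μ / 2 * N (x - y) ^ 2 - δ ^ 2 ≤ f z + μ / 2 * N (y - z) ^ 2) :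
    f x - moreauEnvelope N lam f x ≤
      δ ^ 2 + (g ^ 2 + 2 * μ * δ) * (1 + δ) ^ 2 / (2 * (lam - μ)) := by
  have hs := sq_le_of_mul_sq_le hμ hδ0 hδ1
    (mul_sq_le_of_almost_min hN_smul hf hd hD hmin hδ0.le hδ1)
  have hdiv := div_le_div_of_nonneg_right hs (by linarith : 0 ≤ 2 * (lam - μ))
  have := le_ciInf fun z =>
    sub_le_add_mul_sq_of_almost_min hN_nonneg hN_smul hN_add hμ hlam hmin z
  simp only [moreauEnvelope]
  linarith

end

theorem stmt_14_general {m : ℕ} (N : (Fin m → ℝ) → ℝ)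
    (hN_nonneg : ∀ x, 0 ≤ N x)
    (hN_eq_zero : ∀ x, N x = 0 ↔ x = 0)
    (hN_smul : ∀ (c : ℝ) (x), N (c • x) = |c| * N x)
    (hN_add : ∀ x y, N (x + y) ≤ N x + N y)
    (f : (Fin m → ℝ) → ℝ) (hconc : ConcaveOn ℝ Set.univ f)
    (hlip : ∃ K : NNReal, LipschitzWith K f)
    (hC1 : ContDiff ℝ 1 f)
    (lam' : ℝ) (hlam' : 0 < lam')
    (hconvc : ∀ x : Fin m → ℝ,
      f x = ⨆ y : Fin m → ℝ,
        ((⨅ z : Fin m → ℝ, (f z + (lam' / 2) * (N (y - z)) ^ 2)) -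
          (lam' / 2) * (N (x - y)) ^ 2)) :
    ∀ lam : ℝ, lam' < lam → ∀ x : Fin m → ℝ, ∀ g : ℝ,
      IsLUB {r : ℝ | ∃ u, N u = 1 ∧ r = fderiv ℝ f x u} g →
      f x - (⨅ y : Fin m → ℝ, (f y + (lam / 2) * (N (x - y)) ^ 2)) ≤
        (1 / (2 * (lam - lam'))) * g ^ 2 := by
  intro lam hlam x g hg
  obtain ⟨K, hK⟩ := hlip
  obtain ⟨c, hc, hcN⟩ :=
    exists_pos_mul_norm_le hN_nonneg (fun v => (hN_eq_zero v).1) hN_smul hN_add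
  have hD : ∀ v, fderiv ℝ f x v ≤ g * N v :=
    apply_le_mul_of_mem_upperBounds hN_nonneg (fun v => (hN_eq_zero v).1) hN_smul hg.1
  have hbound : ∀ δ ∈ Ioo (0 : ℝ) 1, f x - moreauEnvelope N lam f x ≤
      δ ^ 2 + (g ^ 2 + 2 * lam' * δ) * (1 + δ) ^ 2 / (2 * (lam - lam')) := by
    rintro δ ⟨hδ0, hδ1⟩
    obtain ⟨y, hy⟩ : ∃ y, f x - δ ^ 2 < moreauEnvelope N lam' f y - lam' / 2 * N (x - y) ^ 2 :=
      exists_lt_of_lt_ciSup ((sub_lt_self _ (pow_pos hδ0 2)).trans_eq (hconvc x))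
    refine sub_moreauEnvelope_le_of_almost_min (y := y) hN_nonneg hN_smul hN_add hconc
      ((hC1.differentiable one_ne_zero) x) hD hlam'.le hlam hδ0 hδ1.le fun z => ?_
    linarith [moreauEnvelope_le (bddBelow_range_add_mul_sq hK hc hcN hlam' y) z]
  have hlim : Tendsto (fun δ : ℝ => δ ^ 2 + (g ^ 2 + 2 * lam' * δ) * (1 + δ) ^ 2 /
      (2 * (lam - lam'))) (𝓝[>] 0) (𝓝 (1 / (2 * (lam - lam')) * g ^ 2)) :=
    ((by fun_prop : Continuous _).tendsto' 0 _ (by ring)).mono_left nhdsWithin_le_nhds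
  exact ge_of_tendsto hlim (mem_of_superset (Ioo_mem_nhdsGT zero_lt_one) hbound)

/-- Let `f : ℝᵐ → ℝ` be concave, Lipschitz, bounded above,
C¹-smooth and `(λ'/2)N²`-convex in the sense `f = P_{1/λ'} Q_{1/λ'} f` where
`Q_s f(x) = inf_y (f(y) + (1/(2s)) N(x−y)²)` and
`P_s g(x) = sup_y (g(y) − (1/(2s)) N(x−y)²)`, for a norm `N` on `ℝᵐ`.
Then for every `λ > λ'` and every `x`,
`f(x) − Q_{1/λ} f(x) ≤ (1/(2(λ−λ'))) ‖∇f(x)‖*²`, where `‖∇f(x)‖*` is the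
least upper bound of `∇f(x)·u` over `N(u) = 1`. -/
theorem stmt_14 {m : ℕ} (N : (Fin m → ℝ) → ℝ)
    (hN_nonneg : ∀ x, 0 ≤ N x)
    (hN_eq_zero : ∀ x, N x = 0 ↔ x = 0)
    (hN_smul : ∀ (c : ℝ) (x), N (c • x) = |c| * N x)
    (hN_add : ∀ x y, N (x + y) ≤ N x + N y)
    (f : (Fin m → ℝ) → ℝ) (hconc : ConcaveOn ℝ Set.univ f)
    (hlip : ∃ K : NNReal, LipschitzWith K f)
    (hbdd : BddAbove (Set.range f)) (hC1 : ContDiff ℝ 1 f)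
    (lam' : ℝ) (hlam' : 0 < lam')
    (hconvc : ∀ x : Fin m → ℝ,
      f x = ⨆ y : Fin m → ℝ,
        ((⨅ z : Fin m → ℝ, (f z + (lam' / 2) * (N (y - z)) ^ 2)) -
          (lam' / 2) * (N (x - y)) ^ 2)) :
    ∀ lam : ℝ, lam' < lam → ∀ x : Fin m → ℝ, ∀ g : ℝ,
      IsLUB {r : ℝ | ∃ u, N u = 1 ∧ r = fderiv ℝ f x u} g →
      f x - (⨅ y : Fin m → ℝ, (f y + (lam / 2) * (N (x - y)) ^ 2)) ≤
        (1 / (2 * (lam - lam'))) * g ^ 2 :=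
  stmt_14_general N hN_nonneg hN_eq_zero hN_smul hN_add f hconc hlip hC1 lam' hlam' hconvc
end

section
/- Let θ : ℝᵐ → ℝ₊ be convex with θ(x) ≥ a‖x‖ + b for some a > 0, b ∈ ℝ. For φ : ℝᵐ → ℝ continuous, bounded below, with |φ(x)| ≤ A + B‖x‖, define Q̄_θφ(x) = inf over probability measures p on ℝᵐ with finite first moment of ( ∫ φ dp + θ(x − ∫ y dp(y)) ). Then Q̄_θφ(x) = inf_{z ∈ ℝᵐ} ( φ̄(z) + θ(x − z) ), where φ̄ is the greatest convex function on ℝᵐ below φ. -/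
/-!
For a measure `p` with barycenter `z`, Jensen's inequality for the convex minorant `φ̄`
(continuous, being convex in finite dimension) gives `φ̄ z ≤ ∫ φ̄ dp ≤ ∫ φ dp`, whence
`Q̄_θφ x ≥ inf_z (φ̄ z + θ (x - z))`. Conversely, the infimum `g z` of `∫ φ dp` over measures
with barycenter `z` is convex in `z` (mixing two measures mixes their barycenters) and
`g ≤ φ` (Dirac masses), so `g ≤ φ̄`; shifting by `θ (x - z)` gives the reverse inequality.
-/

open MeasureTheory Set

lemma le_integral_of_forall_le {α : Type*} [MeasurableSpace α] {p : Measure α}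
    [IsProbabilityMeasure p] {φ : α → ℝ} {c : ℝ} (hc : ∀ y, c ≤ φ y) (hφ : Integrable φ p) :
    c ≤ ∫ y, φ y ∂p := by
  simpa using integral_mono (integrable_const c) hφ hc

lemma integral_ofReal_smul_add_ofReal_smul_measure {α F : Type*} [MeasurableSpace α]
    [NormedAddCommGroup F] [NormedSpace ℝ F] {μ₁ μ₂ : Measure α} {f : α → F} {t₁ t₂ : ℝ}
    (hf₁ : Integrable f μ₁) (hf₂ : Integrable f μ₂) (ht₁ : 0 ≤ t₁) (ht₂ : 0 ≤ t₂) :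
    ∫ y, f y ∂(ENNReal.ofReal t₁ • μ₁ + ENNReal.ofReal t₂ • μ₂) =
      t₁ • ∫ y, f y ∂μ₁ + t₂ • ∫ y, f y ∂μ₂ := by
  rw [integral_add_measure (hf₁.smul_measure ENNReal.ofReal_ne_top)
    (hf₂.smul_measure ENNReal.ofReal_ne_top), integral_smul_measure, integral_smul_measure,
    ENNReal.toReal_ofReal ht₁, ENNReal.toReal_ofReal ht₂]

section

variable {E : Type*} [NormedAddCommGroup E] [NormedSpace ℝ E] [MeasurableSpace E]

def barycenterIntegrals (φ : E → ℝ) (z : E) : Set ℝ :=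
  {r | ∃ p : Measure E, IsProbabilityMeasure p ∧ Integrable (fun y => y) p ∧
    Integrable φ p ∧ ∫ y, y ∂p = z ∧ r = ∫ y, φ y ∂p}

lemma apply_mem_barycenterIntegrals [CompleteSpace E] [OpensMeasurableSpace E] (φ : E → ℝ) (z : E) :
    φ z ∈ barycenterIntegrals φ z :=
  ⟨Measure.dirac z, inferInstance, integrable_dirac enorm_lt_top,
    integrable_dirac enorm_lt_top, integral_dirac _ z, (integral_dirac φ z).symm⟩

lemma lowerBounds_barycenterIntegrals {φ : E → ℝ} {c : ℝ} (hc : ∀ y, c ≤ φ y) (z : E) :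
    c ∈ lowerBounds (barycenterIntegrals φ z) := by
  rintro r ⟨p, hp, -, hφ, -, rfl⟩
  exact le_integral_of_forall_le hc hφ

lemma add_mem_barycenterIntegrals {φ : E → ℝ} {z₁ z₂ : E} {r₁ r₂ t₁ t₂ : ℝ}
    (h₁ : r₁ ∈ barycenterIntegrals φ z₁) (h₂ : r₂ ∈ barycenterIntegrals φ z₂)
    (ht₁ : 0 ≤ t₁) (ht₂ : 0 ≤ t₂) (ht : t₁ + t₂ = 1) :
    t₁ * r₁ + t₂ * r₂ ∈ barycenterIntegrals φ (t₁ • z₁ + t₂ • z₂) := by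
  obtain ⟨p₁, hp₁, hid₁, hφ₁, rfl, rfl⟩ := h₁
  obtain ⟨p₂, hp₂, hid₂, hφ₂, rfl, rfl⟩ := h₂
  refine ⟨ENNReal.ofReal t₁ • p₁ + ENNReal.ofReal t₂ • p₂, ⟨?_⟩,
    (hid₁.smul_measure ENNReal.ofReal_ne_top).add_measure
      (hid₂.smul_measure ENNReal.ofReal_ne_top),
    (hφ₁.smul_measure ENNReal.ofReal_ne_top).add_measure
      (hφ₂.smul_measure ENNReal.ofReal_ne_top),
    integral_ofReal_smul_add_ofReal_smul_measure hid₁ hid₂ ht₁ ht₂,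
    (integral_ofReal_smul_add_ofReal_smul_measure hφ₁ hφ₂ ht₁ ht₂).symm⟩
  simp [← ENNReal.ofReal_add ht₁ ht₂, ht]

open scoped Pointwise in
lemma convexOn_sInf_barycenterIntegrals [CompleteSpace E] [OpensMeasurableSpace E]
    {φ : E → ℝ} {c : ℝ} (hc : ∀ y, c ≤ φ y) :
    ConvexOn ℝ univ fun z => sInf (barycenterIntegrals φ z) := by
  refine ⟨convex_univ, fun z₁ _ z₂ _ t₁ t₂ ht₁ ht₂ ht => ?_⟩
  have hne (z) : (barycenterIntegrals φ z).Nonempty := ⟨φ z, apply_mem_barycenterIntegrals φ z⟩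
  have hbdd (z) : BddBelow (barycenterIntegrals φ z) := ⟨c, lowerBounds_barycenterIntegrals hc z⟩
  have hmix : t₁ • barycenterIntegrals φ z₁ + t₂ • barycenterIntegrals φ z₂ ⊆
      barycenterIntegrals φ (t₁ • z₁ + t₂ • z₂) := by
    rintro _ ⟨_, ⟨r₁, h₁, rfl⟩, _, ⟨r₂, h₂, rfl⟩, rfl⟩
    exact add_mem_barycenterIntegrals h₁ h₂ ht₁ ht₂ ht
  calc sInf (barycenterIntegrals φ (t₁ • z₁ + t₂ • z₂))
      ≤ sInf (t₁ • barycenterIntegrals φ z₁ + t₂ • barycenterIntegrals φ z₂) :=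
        csInf_le_csInf (hbdd _) (((hne z₁).smul_set).add (hne z₂).smul_set) hmix
    _ = t₁ • sInf (barycenterIntegrals φ z₁) + t₂ • sInf (barycenterIntegrals φ z₂) := by
      rw [csInf_add (hne z₁).smul_set ((hbdd z₁).smul_of_nonneg ht₁) (hne z₂).smul_set
        ((hbdd z₂).smul_of_nonneg ht₂), Real.sInf_smul_of_nonneg ht₁,
        Real.sInf_smul_of_nonneg ht₂]

lemma ConvexOn.map_integral_id_le_integral [CompleteSpace E] [OpensMeasurableSpace E]
    {h φ : E → ℝ} {p : Measure E} [IsProbabilityMeasure p] (hconv : ConvexOn ℝ univ h)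
    (hcont : Continuous h) {c : ℝ} (hc : ∀ y, c ≤ h y) (hle : ∀ y, h y ≤ φ y)
    (hid : Integrable (fun y => y) p) (hφ : Integrable φ p) :
    h (∫ y, y ∂p) ≤ ∫ y, φ y ∂p := by
  have hh : Integrable h p := integrable_of_le_of_le hcont.aestronglyMeasurable
    (.of_forall hc) (.of_forall hle) (integrable_const c) hφ
  calc h (∫ y, y ∂p) ≤ ∫ y, h y ∂p :=
        hconv.map_integral_le hcont.continuousOn isClosed_univ (.of_forall fun _ => trivial) hid hh
    _ ≤ ∫ y, φ y ∂p := integral_mono hh hφ hle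

lemma sInf_barycenterIntegrals_le [CompleteSpace E] [OpensMeasurableSpace E]
    {φ φbar : E → ℝ} (hφ : BddBelow (range φ))
    (hbargreatest : ∀ h : E → ℝ, ConvexOn ℝ univ h → (∀ x, h x ≤ φ x) → ∀ x, h x ≤ φbar x)
    (z : E) : sInf (barycenterIntegrals φ z) ≤ φbar z := by
  obtain ⟨c, hc⟩ := hφ
  have hcφ : ∀ y, c ≤ φ y := fun y => hc ⟨y, rfl⟩
  refine hbargreatest _ (convexOn_sInf_barycenterIntegrals hcφ) (fun y => ?_) z
  exact csInf_le ⟨c, lowerBounds_barycenterIntegrals hcφ y⟩ (apply_mem_barycenterIntegrals φ y)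

end

theorem stmt_15_general {E : Type*} [NormedAddCommGroup E] [NormedSpace ℝ E]
    [FiniteDimensional ℝ E] [MeasurableSpace E] [BorelSpace E]
    (θ : E → ℝ) (hθnonneg : ∀ x, 0 ≤ θ x)
    (φ : E → ℝ) (hφbdd : BddBelow (Set.range φ))
    (φbar : E → ℝ) (hbarconv : ConvexOn ℝ Set.univ φbar)
    (hbarle : ∀ x, φbar x ≤ φ x)
    (hbargreatest : ∀ h : E → ℝ, ConvexOn ℝ Set.univ h →
      (∀ x, h x ≤ φ x) → ∀ x, h x ≤ φbar x)
    (x : E) :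
    sInf {r : ℝ | ∃ p : Measure E, IsProbabilityMeasure p ∧
        Integrable (fun y => y) p ∧ Integrable φ p ∧
        r = ∫ y, φ y ∂p + θ (x - ∫ y, y ∂p)} =
      ⨅ z : E, (φbar z + θ (x - z)) := by
  obtain ⟨c, hc⟩ := hφbdd
  have hcφ : ∀ y, c ≤ φ y := fun y => hc ⟨y, rfl⟩
  have hcbar : ∀ y, c ≤ φbar y := hbargreatest _ (convexOn_const c convex_univ) hcφ
  have hbarcont : Continuous φbar := continuousOn_univ.mp (hbarconv.continuousOn isOpen_univ)
  set T := {r : ℝ | ∃ p : Measure E, IsProbabilityMeasure p ∧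
      Integrable (fun y => y) p ∧ Integrable φ p ∧ r = ∫ y, φ y ∂p + θ (x - ∫ y, y ∂p)}
  have hT : BddBelow T := ⟨c, by
    rintro _ ⟨p, hp, -, hφ, rfl⟩
    linarith [le_integral_of_forall_le hcφ hφ, hθnonneg (x - ∫ y, y ∂p)]⟩
  refine le_antisymm (le_ciInf fun z => ?_) (le_csInf ?_ ?_)
  · have : sInf T - θ (x - z) ≤ sInf (barycenterIntegrals φ z) := by
      refine le_csInf ⟨φ z, apply_mem_barycenterIntegrals φ z⟩ ?_
      rintro _ ⟨p, hp, hid, hφ, rfl, rfl⟩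
      linarith [csInf_le hT ⟨p, hp, hid, hφ, rfl⟩]
    linarith [sInf_barycenterIntegrals_le ⟨c, hc⟩ hbargreatest z]
  · obtain ⟨p, hp, hid, hφ, -, -⟩ := apply_mem_barycenterIntegrals φ x
    exact ⟨_, p, hp, hid, hφ, rfl⟩
  · rintro _ ⟨p, hp, hid, hφ, rfl⟩
    refine (ciInf_le ⟨c, ?_⟩ (∫ y, y ∂p)).trans ?_
    · rintro _ ⟨z, rfl⟩
      linarith [hcbar z, hθnonneg (x - z)]
    · linarith [hbarconv.map_integral_id_le_integral hbarcont hcbar hbarle hid hφ]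

/-- With `θ : ℝᵐ → ℝ₊` convex and `θ(x) ≥ a‖x‖ + b` (`a > 0`),
and `φ : ℝᵐ → ℝ` continuous, bounded below, of linear growth, one has
`Q̄_θφ(x) = inf_p (∫ φ dp + θ(x − ∫ y dp)) = inf_z (φ̄(z) + θ(x − z))`, where
the first infimum is over probability measures with finite first moment, and
`φ̄` is the greatest convex function below `φ`. -/
theorem stmt_15 {E : Type*} [NormedAddCommGroup E] [NormedSpace ℝ E]
    [FiniteDimensional ℝ E] [MeasurableSpace E] [BorelSpace E]
    (θ : E → ℝ) (hθnonneg : ∀ x, 0 ≤ θ x) (hθconv : ConvexOn ℝ Set.univ θ)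
    (a : ℝ) (ha : 0 < a) (b : ℝ) (hθgrowth : ∀ x, a * ‖x‖ + b ≤ θ x)
    (φ : E → ℝ) (hφcont : Continuous φ) (hφbdd : BddBelow (Set.range φ))
    (A B : ℝ) (hφgrowth : ∀ x, |φ x| ≤ A + B * ‖x‖)
    (φbar : E → ℝ) (hbarconv : ConvexOn ℝ Set.univ φbar)
    (hbarle : ∀ x, φbar x ≤ φ x)
    (hbargreatest : ∀ h : E → ℝ, ConvexOn ℝ Set.univ h →
      (∀ x, h x ≤ φ x) → ∀ x, h x ≤ φbar x)
    (x : E) :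
    sInf {r : ℝ | ∃ p : Measure E, IsProbabilityMeasure p ∧
        Integrable (fun y => y) p ∧ Integrable φ p ∧
        r = ∫ y, φ y ∂p + θ (x - ∫ y, y ∂p)} =
      ⨅ z : E, (φbar z + θ (x - z)) :=
  stmt_15_general θ hθnonneg φ hφbdd φbar hbarconv hbarle hbargreatest x
end

section
/- For t ∈ (0,1) define α_t(u) = ( t(1−u)log(1−u) − (1−tu)log(1−tu) ) / (t(1−t)) for 0 ≤ u ≤ 1 (and +∞ otherwise). Then for t = 1/2 and all u ∈ [0,1], α_{1/2}(u) ≥ u²/2. -/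
/-!
Write `α_t(u) = (negMulLog (1 - t u) - t · negMulLog (1 - u)) / (t (1 - t))` and let
`F(u) = negMulLog (1 - t u) - t · negMulLog (1 - u) - t (1 - t) u² / 2`, so that `F(0) = 0`.
Its derivative is `F'(u) = t (log ((1 - t u) / (1 - u)) - (1 - t) u)`, which is nonnegative on
`[0, 1)` because `log y ≥ 1 - 1/y` gives `log ((1 - t u) / (1 - u)) ≥ (1 - t) u / (1 - t u)`.
Since `negMulLog` is continuous also at `0`, `F` is monotone on all of `[0, 1]`, so
`α_t(u) ≥ u² / 2` for every `t ∈ (0, 1)`.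
-/

open Real Set

lemma one_sub_mul_le_log_div {t u : ℝ} (ht0 : 0 ≤ t) (ht1 : t ≤ 1) (hu0 : 0 ≤ u) (hu1 : u < 1) :
    (1 - t) * u ≤ log ((1 - t * u) / (1 - u)) := by
  have hu : 0 < 1 - u := by linarith
  have htu : 0 < 1 - t * u := by nlinarith
  have htu1 : 1 - t * u ≤ 1 := by nlinarith
  calc (1 - t) * u ≤ (1 - t) * u / (1 - t * u) :=
        le_div_self (by nlinarith) htu htu1
    _ = 1 - ((1 - t * u) / (1 - u))⁻¹ := by field_simp; ring
    _ ≤ log ((1 - t * u) / (1 - u)) := one_sub_inv_le_log_of_pos (div_pos htu hu)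

lemma hasDerivAt_negMulLog_one_sub_mul {t u : ℝ} (h : 1 - t * u ≠ 0) :
    HasDerivAt (fun v => negMulLog (1 - t * v)) (t * (log (1 - t * u) + 1)) u := by
  have hcomp := (hasDerivAt_negMulLog h).comp u (((hasDerivAt_id u).const_mul t).const_sub 1)
  exact hcomp.congr_deriv (by ring)

theorem mul_one_sub_mul_sq_div_two_le_negMulLog {t u : ℝ} (ht0 : 0 ≤ t) (ht1 : t ≤ 1)
    (hu0 : 0 ≤ u) (hu1 : u ≤ 1) :
    t * (1 - t) * u ^ 2 / 2 ≤ negMulLog (1 - t * u) - t * negMulLog (1 - u) := by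
  set F : ℝ → ℝ := fun v => negMulLog (1 - t * v) - t * negMulLog (1 - v) - t * (1 - t) * v ^ 2 / 2
  have hF : ∀ v ∈ Ico (0 : ℝ) 1,
      HasDerivAt F (t * (log ((1 - t * v) / (1 - v)) - (1 - t) * v)) v := by
    rintro v ⟨hv0, hv1⟩
    have hv : 1 - v ≠ 0 := by linarith
    have htv : 1 - t * v ≠ 0 := by nlinarith
    have hderiv := ((hasDerivAt_negMulLog_one_sub_mul htv).sub
      ((hasDerivAt_negMulLog_one_sub_mul (t := 1) (by simpa using hv)).const_mul t)).sub
      (((hasDerivAt_pow 2 v).const_mul (t * (1 - t))).div_const 2)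
    simp only [one_mul] at hderiv
    refine hderiv.congr_deriv ?_
    rw [log_div htv hv]
    norm_num
    ring
  have hmono : MonotoneOn F (Icc 0 1) := by
    refine monotoneOn_of_deriv_nonneg (convex_Icc 0 1) (by fun_prop) ?_ ?_
    · rw [interior_Icc]
      exact fun v hv => (hF v (Ioo_subset_Ico_self hv)).differentiableAt.differentiableWithinAt
    · rw [interior_Icc]
      intro v hv
      rw [(hF v (Ioo_subset_Ico_self hv)).deriv]
      exact mul_nonneg ht0 (sub_nonneg.2 (one_sub_mul_le_log_div ht0 ht1 hv.1.le hv.2))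
  have hF0 := hmono (left_mem_Icc.2 zero_le_one) ⟨hu0, hu1⟩ hu0
  simp only [F, mul_zero, sub_zero, negMulLog_one] at hF0
  linarith

/-- With
`α_t(u) = (t(1−u)log(1−u) − (1−tu)log(1−tu))/(t(1−t))` for `u ∈ [0,1]`,
one has `α_{1/2}(u) ≥ u²/2` for all `u ∈ [0,1]` (with the convention
`0 · log 0 = 0` at `u = 1`, matching `Real.log 0 = 0`). -/
theorem stmt_19 :
    ∀ u ∈ Set.Icc (0 : ℝ) 1,
      u ^ 2 / 2 ≤
        ((1 / 2) * (1 - u) * Real.log (1 - u) -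
            (1 - (1 / 2) * u) * Real.log (1 - (1 / 2) * u)) /
          ((1 / 2) * (1 - 1 / 2)) := by
  rintro u ⟨hu0, hu1⟩
  have h := mul_one_sub_mul_sq_div_two_le_negMulLog (t := 1 / 2) (by norm_num) (by norm_num) hu0 hu1
  rw [le_div_iff₀ (by norm_num)]
  simp only [negMulLog] at h
  linarith
end
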